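/- arXiv:2402.12839 — 15 statements merged into one kernel-verified Lean document; each statement's English description precedes it below -/
import Mathlib

section
/- Let ν ≥ 0 and c₋ > 0, and set λ := (−ν + √(ν² + 4c₋))/2 (so λ > 0). Let u₀ : ℝ → ℝ be differentiable with continuous derivative and with u₀(x) → 0 as x → +∞ and as x → −∞. Let ρ₀, c₀ : ℝ → ℝ be continuous with c₀(x) ≥ c₋ for all x, suppose ρ₀ − c₀ is Lebesgue integrable on ℝ with ∫_ℝ (ρ₀(x) − c₀(x)) dx = 0, and suppose λ·u₀'(x) ≥ ρ₀(x) − c₋ for all x ∈ ℝ. Then c₀(x) = c₋ for all x ∈ ℝ and λ·u₀'(x) = ρ₀(x) − c₋ for all x ∈ ℝ. -/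
open Real MeasureTheory Filter Topology

/-- Reduction to the borderline (core of Theorem 1.5): for the attractive
Euler–Poisson system, the sub-critical inequality
`λ·u₀' ≥ ρ₀ − c₋` with `λ = (−ν+√(ν²+4c₋))/2`, decay of `u₀` at ±∞ and the
neutrality condition `∫(ρ₀ − c₀) = 0` force `c₀ ≡ c₋` and equality everywhere. -/
theorem stmt_1 (ν cm : ℝ) (hν : 0 ≤ ν) (hcm : 0 < cm)
    (u₀ u₀' ρ₀ c₀ : ℝ → ℝ)
    (hu : ∀ x : ℝ, HasDerivAt u₀ (u₀' x) x) (hu'cont : Continuous u₀')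
    (htop : Tendsto u₀ atTop (nhds 0)) (hbot : Tendsto u₀ atBot (nhds 0))
    (hρcont : Continuous ρ₀) (hc₀cont : Continuous c₀)
    (hc₀ge : ∀ x : ℝ, cm ≤ c₀ x)
    (hint : Integrable (fun x => ρ₀ x - c₀ x) (volume : Measure ℝ))
    (hneu : ∫ x : ℝ, (ρ₀ x - c₀ x) = 0)
    (hsub : ∀ x : ℝ,
      ρ₀ x - cm ≤ ((-ν + Real.sqrt (ν ^ 2 + 4 * cm)) / 2) * u₀' x) :
    (∀ x : ℝ, c₀ x = cm) ∧
      (∀ x : ℝ, ((-ν + Real.sqrt (ν ^ 2 + 4 * cm)) / 2) * u₀' x = ρ₀ x - cm) := by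
  set L := (-ν + Real.sqrt (ν ^ 2 + 4 * cm)) / 2 with hLdef
  set g : ℝ → ℝ := fun x => L * u₀' x - (ρ₀ x - c₀ x) with hgdef
  have hgcont : Continuous g := ((continuous_const.mul hu'cont).sub (hρcont.sub hc₀cont))
  have hgnn : ∀ x, 0 ≤ g x := by
    intro x
    have h1 := hsub x
    have h2 := hc₀ge x
    simp only [hgdef]
    linarith
  have hgint : ∀ a b : ℝ, IntervalIntegrable g volume a b :=
    fun a b => hgcont.intervalIntegrable a b
  have hT : Tendsto (fun n : ℝ => ∫ x in (-n)..n, g x) atTop (𝓝 0) := by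
    have h1 : Tendsto (fun n : ℝ => ∫ x in (-n)..n, u₀' x) atTop (𝓝 0) := by
      have heq : ∀ n : ℝ, (∫ x in (-n)..n, u₀' x) = u₀ n - u₀ (-n) := fun n =>
        intervalIntegral.integral_eq_sub_of_hasDerivAt (fun x _ => hu x)
          (hu'cont.intervalIntegrable _ _)
      simp_rw [heq]
      have := htop.sub (hbot.comp tendsto_neg_atTop_atBot)
      simpa using this
    have h2 : Tendsto (fun n : ℝ => ∫ x in (-n)..n, (ρ₀ x - c₀ x)) atTop (𝓝 0) := by
      have := MeasureTheory.intervalIntegral_tendsto_integral hint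
        tendsto_neg_atTop_atBot tendsto_id
      rwa [hneu] at this
    have heq : ∀ n : ℝ, (∫ x in (-n)..n, g x)
        = L * (∫ x in (-n)..n, u₀' x) - ∫ x in (-n)..n, (ρ₀ x - c₀ x) := by
      intro n
      rw [← intervalIntegral.integral_const_mul,
        ← intervalIntegral.integral_sub (show IntervalIntegrable (fun x => L * u₀' x) volume (-n) n
            from (continuous_const.mul hu'cont).intervalIntegrable _ _)
          (show IntervalIntegrable (fun x => ρ₀ x - c₀ x) volume (-n) n
            from (hρcont.sub hc₀cont).intervalIntegrable _ _)]
    simp_rw [heq]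
    have := (h1.const_mul L).sub h2
    simpa using this
  have hzero : ∀ a b : ℝ, a ≤ b → (∫ x in a..b, g x) = 0 := by
    intro a b hab
    have hnn : 0 ≤ ∫ x in a..b, g x :=
      intervalIntegral.integral_nonneg hab (fun x _ => hgnn x)
    have hle : ∀ᶠ n : ℝ in atTop, (∫ x in a..b, g x) ≤ ∫ x in (-n)..n, g x := by
      filter_upwards [eventually_ge_atTop (max (-a) b)] with n hn
      have h1 : -n ≤ a := by
        have := le_trans (le_max_left (-a) b) hn; linarith
      have h2 : b ≤ n := le_trans (le_max_right _ _) hn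
      have e1 : (∫ x in (-n)..a, g x) + (∫ x in a..n, g x) = ∫ x in (-n)..n, g x :=
        intervalIntegral.integral_add_adjacent_intervals (hgint _ _) (hgint _ _)
      have e2 : (∫ x in a..b, g x) + (∫ x in b..n, g x) = ∫ x in a..n, g x :=
        intervalIntegral.integral_add_adjacent_intervals (hgint _ _) (hgint _ _)
      have n1 : 0 ≤ ∫ x in (-n)..a, g x :=
        intervalIntegral.integral_nonneg h1 (fun x _ => hgnn x)
      have n2 : 0 ≤ ∫ x in b..n, g x :=
        intervalIntegral.integral_nonneg h2 (fun x _ => hgnn x)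
      linarith
    have hle0 : (∫ x in a..b, g x) ≤ 0 := ge_of_tendsto hT hle
    linarith
  have hg0 : ∀ x, g x = 0 := by
    intro x
    by_contra h
    have hpos : 0 < g x := lt_of_le_of_ne (hgnn x) (Ne.symm h)
    obtain ⟨δ, hδ, hball⟩ := Metric.eventually_nhds_iff.mp
      ((hgcont.tendsto x).eventually (eventually_gt_nhds (half_lt_self hpos)))
    have hposint : 0 < ∫ t in (x - δ / 2)..(x + δ / 2), g t := by
      apply intervalIntegral.intervalIntegral_pos_of_pos_on (hgint _ _)
      · intro t ht
        have hd : dist t x < δ := by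
          rw [Real.dist_eq, abs_lt]
          obtain ⟨h1, h2⟩ := ht
          constructor <;> linarith
        exact lt_trans (half_pos hpos) (hball hd)
      · linarith
    rw [hzero _ _ (by linarith)] at hposint
    exact lt_irrefl 0 hposint
  refine ⟨fun x => ?_, fun x => ?_⟩
  · have h0 := hg0 x
    have h1 := hsub x
    have h2 := hc₀ge x
    simp only [hgdef] at h0
    linarith
  · have h0 := hg0 x
    have h1 := hsub x
    have h2 := hc₀ge x
    simp only [hgdef] at h0
    linarith
end

section
/- Let ν ≥ 0 and c̄ > 0, and set λₛ := (−ν − √(ν² + 4c̄))/2. Let w, s : [0,∞) → ℝ be differentiable with w'(t) = −ν·w(t) − (1 − c̄·s(t)) and s'(t) = w(t) for all t ≥ 0, and suppose s(0) > 0. Then: (i) if w(0) ≥ λₛ·(s(0) − 1/c̄), then s(t) > 0 for all t ≥ 0; (ii) if w(0) < λₛ·(s(0) − 1/c̄), then there exists t* > 0 with s(t*) = 0. -/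
open Real Filter Set

set_option maxHeartbeats 1000000 in
/-- Sharp critical threshold for the attractive phase-plane system with constant
background `c̄ > 0`: with `λₛ = (−ν − √(ν²+4c̄))/2`, if `w(0) ≥ λₛ·(s(0) − 1/c̄)` then
`s(t) > 0` for all `t ≥ 0`, while if `w(0) < λₛ·(s(0) − 1/c̄)` then `s` vanishes at
some finite positive time. -/
theorem stmt_4 (ν c : ℝ) (hν : 0 ≤ ν) (hc : 0 < c)
    (w s : ℝ → ℝ)
    (hw : ∀ t : ℝ, 0 ≤ t → HasDerivAt w (-ν * w t - (1 - c * s t)) t)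
    (hs : ∀ t : ℝ, 0 ≤ t → HasDerivAt s (w t) t)
    (hs0 : 0 < s 0) :
    ((((-ν - Real.sqrt (ν ^ 2 + 4 * c)) / 2) * (s 0 - 1 / c) ≤ w 0 →
        ∀ t : ℝ, 0 ≤ t → 0 < s t) ∧
      (w 0 < ((-ν - Real.sqrt (ν ^ 2 + 4 * c)) / 2) * (s 0 - 1 / c) →
        ∃ tstar : ℝ, 0 < tstar ∧ s tstar = 0)) := by
  have hc' : c ≠ 0 := ne_of_gt hc
  set r := Real.sqrt (ν ^ 2 + 4 * c) with hrdef
  have hr0 : 0 ≤ r := Real.sqrt_nonneg _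
  have hr2 : r ^ 2 = ν ^ 2 + 4 * c := Real.sq_sqrt (by positivity)
  have hrν : ν < r := by nlinarith
  set lam := (-ν - r) / 2 with hlamdef
  set k := (r - ν) / 2 with hkdef
  have hk0 : 0 < k := by rw [hkdef]; linarith
  have hlamneg : lam < 0 := by rw [hlamdef]; linarith
  have hquad : lam * (lam + ν) = c := by rw [hlamdef]; nlinarith [hr2]
  have hklam : k = -(ν + lam) := by rw [hkdef, hlamdef]; ring
  clear_value lam k
  clear hkdef hlamdef
  clear_value r
  -- the Lyapunov function
  set L := fun t => w t - lam * (s t - 1 / c) with hLdef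
  have hLderiv : ∀ t, 0 ≤ t → HasDerivAt L (k * L t) t := by
    intro t ht
    have h1 := (hw t ht).sub (((hs t ht).sub_const (1 / c)).const_mul lam)
    refine h1.congr_deriv (Eq.symm ?_)
    show k * (w t - lam * (s t - 1 / c)) = -ν * w t - (1 - c * s t) - lam * w t
    rw [hklam]
    field_simp
    linear_combination (c * s t - 1) * hquad
  -- continuity
  have hscont : ContinuousOn s (Ici 0) := fun t ht =>
    (hs t ht).continuousAt.continuousWithinAt
  -- explicit solution for L
  have hLsol : ∀ t, 0 ≤ t → L t = L 0 * Real.exp (k * t) := by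
    intro t ht
    set g := fun u => L u * Real.exp (-(k * u)) with hgdef
    have hexpd : ∀ x : ℝ, HasDerivAt (fun u => Real.exp (-(k * u)))
        (Real.exp (-(k * x)) * (-k)) x := by
      intro x
      have h2 : HasDerivAt (fun u : ℝ => -(k * u)) (-k) x := by
        exact (((hasDerivAt_id x).const_mul k).neg).congr_deriv (by ring)
      exact (Real.hasDerivAt_exp (-(k * x))).comp x h2
    have hg : ∀ x ∈ Icc (0 : ℝ) t, g x = g 0 := by
      apply constant_of_has_deriv_right_zero
      · intro x hx
        exact (((hLderiv x hx.1).continuousAt).mul (hexpd x).continuousAt).continuousWithinAt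
      · intro x hx
        have := (hLderiv x hx.1).mul (hexpd x)
        have h0 : k * L x * Real.exp (-(k * x)) + L x * (Real.exp (-(k * x)) * (-k)) = 0 := by
          ring
        rw [h0] at this
        exact this.hasDerivWithinAt
    have h := hg t ⟨ht, le_refl t⟩
    simp only [hgdef] at h
    calc L t = L t * Real.exp (-(k * t)) * Real.exp (k * t) := by
          rw [mul_assoc, ← Real.exp_add]; simp
      _ = (L 0 * Real.exp (-(k * 0))) * Real.exp (k * t) := by rw [h]
      _ = L 0 * Real.exp (k * t) := by norm_num
  constructor
  · -- Part (i)
    intro hge t ht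
    have hL0 : 0 ≤ L 0 := by rw [hLdef]; simp only; linarith
    have hLpos : ∀ u, 0 ≤ u → 0 ≤ L u := by
      intro u hu
      rw [hLsol u hu]
      positivity
    by_contra hcon
    push_neg at hcon
    -- first zero
    set S := Icc 0 t ∩ s ⁻¹' Iic 0 with hSdef
    have hSne : S.Nonempty := ⟨t, ⟨ht, le_refl t⟩, hcon⟩
    have hSclosed : IsClosed S :=
      (hscont.mono Icc_subset_Ici_self).preimage_isClosed_of_isClosed isClosed_Icc isClosed_Iic
    have hSbdd : BddBelow S := ⟨0, fun x hx => hx.1.1⟩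
    set T := sInf S with hTdef
    have hTS : T ∈ S := hSclosed.csInf_mem hSne hSbdd
    have hT0 : 0 ≤ T := hTS.1.1
    have hsT : s T ≤ 0 := hTS.2
    have hTpos : 0 < T := by
      rcases hT0.lt_or_eq with h | h
      · exact h
      · exfalso; rw [← h] at hsT; linarith
    have hbefore : ∀ u, 0 ≤ u → u < T → 0 < s u := by
      intro u hu huT
      by_contra hucon
      push_neg at hucon
      have : u ∈ S := ⟨⟨hu, huT.le.trans hTS.1.2⟩, hucon⟩
      exact absurd (csInf_le hSbdd this) (not_le.mpr huT)
    -- s T = 0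
    have hsTeq : s T = 0 := by
      refine le_antisymm hsT ?_
      have htends : Tendsto s (nhdsWithin T (Iio T)) (nhds (s T)) :=
        ((hs T hT0).continuousAt.tendsto).mono_left nhdsWithin_le_nhds
      refine ge_of_tendsto htends ?_
      filter_upwards [Ioo_mem_nhdsLT_of_mem (⟨hTpos, le_refl T⟩ : T ∈ Ioc 0 T)] with x hx
      exact (hbefore x hx.1.le hx.2).le
    -- w T > 0
    have hwT : 0 < w T := by
      have hh := hLpos T hT0
      rw [hLdef] at hh
      simp only at hh
      rw [hsTeq] at hh
      have h1c : 0 < 1 / c := by positivity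
      nlinarith
    -- derivative contradiction
    have hslope : Tendsto (slope s T) (nhdsWithin T {T}ᶜ) (nhds (w T)) :=
      hasDerivAt_iff_tendsto_slope.mp (hs T hT0)
    have hslope' : Tendsto (slope s T) (nhdsWithin T (Iio T)) (nhds (w T)) :=
      hslope.mono_left (nhdsWithin_mono T (fun x hx => ne_of_lt hx))
    have hev : ∀ᶠ x in nhdsWithin T (Iio T), 0 < slope s T x :=
      hslope'.eventually (eventually_gt_nhds hwT)
    have hev2 : ∀ᶠ x in nhdsWithin T (Iio T), x ∈ Ioo 0 T :=
      Ioo_mem_nhdsLT_of_mem (⟨hTpos, le_refl T⟩ : T ∈ Ioc 0 T)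
    obtain ⟨x, hx1, hx2⟩ := (hev.and hev2).exists
    have hsx : 0 < s x := hbefore x hx2.1.le hx2.2
    have hsl : slope s T x = s x / (x - T) := by
      rw [slope_def_field, hsTeq]; rw [sub_zero]
    rw [hsl] at hx1
    have hxT : x - T < 0 := by linarith [hx2.2]
    have : s x / (x - T) < 0 := div_neg_of_pos_of_neg hsx hxT
    linarith
  · -- Part (ii)
    intro hlt
    by_contra hcon
    push_neg at hcon
    have hpos : ∀ t, 0 ≤ t → 0 < s t := by
      intro t ht
      rcases ht.lt_or_eq with h | h
      · by_contra hscon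
        push_neg at hscon
        have hsub : Icc (s t) (s 0) ⊆ s '' Icc 0 t :=
          intermediate_value_Icc' h.le (hscont.mono Icc_subset_Ici_self)
        have h0mem : (0:ℝ) ∈ Icc (s t) (s 0) := ⟨hscon, hs0.le⟩
        obtain ⟨u, hu, hsu⟩ := hsub h0mem
        have hu0 : 0 < u := by
          rcases hu.1.lt_or_eq with h' | h'
          · exact h'
          · exfalso; rw [← h'] at hsu; linarith
        exact hcon u hu0 hsu
      · rw [← h]; exact hs0
    have hL0 : L 0 < 0 := by rw [hLdef]; simp only; linarith
    set a := -(lam / c) with hadef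
    have ha : 0 < a := by
      rw [hadef]
      exact neg_pos.mpr (div_neg_of_neg_of_pos hlamneg hc)
    -- bound on w
    have hwbound : ∀ t, 0 ≤ t → w t ≤ a + L 0 * Real.exp (k * t) := by
      intro t ht
      have h1 := hLsol t ht
      rw [hLdef] at h1
      simp only at h1
      have h2 : lam * s t ≤ 0 := mul_nonpos_of_nonpos_of_nonneg hlamneg.le (hpos t ht).le
      have h3 : w t = L 0 * Real.exp (k * t) + lam * s t - lam / c := by
        rw [← h1]; ring
      rw [h3, hadef]
      linarith
    set B := L 0 / k with hBdef
    have hB : B < 0 := div_neg_of_neg_of_pos hL0 hk0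
    have hBk : B * k = L 0 := by rw [hBdef]; field_simp
    -- define G and show antitone
    set G := fun t => s t - a * t - B * Real.exp (k * t) with hGdef
    have hGderiv : ∀ x, 0 ≤ x →
        HasDerivAt G (w x - a - L 0 * Real.exp (k * x)) x := by
      intro x hx
      have hexp : HasDerivAt (fun u => Real.exp (k * u)) (Real.exp (k * x) * k) x := by
        have h2 : HasDerivAt (fun u : ℝ => k * u) k x := by
          simpa using (hasDerivAt_id x).const_mul k
        exact (Real.hasDerivAt_exp (k * x)).comp x h2
      have h4 := ((hs x hx).sub ((hasDerivAt_id x).const_mul a)).sub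
        (hexp.const_mul B)
      have h5 : w x - a * 1 - B * (Real.exp (k * x) * k) =
          w x - a - L 0 * Real.exp (k * x) := by
        rw [mul_one, ← mul_assoc, mul_comm B (Real.exp (k * x)), mul_assoc, hBk]
        ring
      rw [h5] at h4
      exact h4
    have hGanti : AntitoneOn G (Ici 0) := by
      apply antitoneOn_of_deriv_nonpos (convex_Ici 0)
      · intro x hx
        exact (hGderiv x hx).continuousAt.continuousWithinAt
      · intro x hx
        rw [interior_Ici] at hx
        exact ((hGderiv x (le_of_lt hx)).differentiableAt).differentiableWithinAt
      · intro x hx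
        rw [interior_Ici] at hx
        rw [(hGderiv x (le_of_lt hx)).deriv]
        have := hwbound x (le_of_lt hx)
        linarith
    -- quantitative contradiction
    set C := s 0 - B with hCdef
    have hC : 0 < C := by rw [hCdef]; linarith
    have hG0 : G 0 = C := by
      rw [hGdef, hCdef]; simp
    clear_value a B C
    obtain ⟨beta, hbetadef, hbeta⟩ : ∃ beta, beta = -B * k ^ 2 / 4 ∧ 0 < beta :=
      ⟨-B * k ^ 2 / 4, rfl, by nlinarith⟩
    obtain ⟨T, hT1, hTb⟩ : ∃ T : ℝ, 1 ≤ T ∧ (C + a + 1) / beta ≤ T :=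
      ⟨max 1 ((C + a + 1) / beta), le_max_left _ _, le_max_right _ _⟩
    have hT0 : (0:ℝ) ≤ T := by linarith
    have hbT : C + a + 1 ≤ beta * T := by
      rw [div_le_iff₀ hbeta] at hTb
      linarith
    -- exp lower bound: exp(kT) ≥ k²T²/4
    have hexplb : k ^ 2 * T ^ 2 / 4 ≤ Real.exp (k * T) := by
      have h1 := Real.add_one_le_exp (k * T / 2)
      have h2 : Real.exp (k * T) = Real.exp (k * T / 2) * Real.exp (k * T / 2) := by
        rw [← Real.exp_add]; ring_nf
      nlinarith [mul_nonneg hk0.le hT0, Real.exp_pos (k * T / 2)]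
    have hGT : G T ≤ G 0 := hGanti self_mem_Ici hT0 hT0
    have hsTb : s T ≤ C + a * T + B * Real.exp (k * T) := by
      have hGTval : G T = s T - a * T - B * Real.exp (k * T) := by rw [hGdef]
      rw [hG0, hGTval] at hGT
      linarith
    have hBexp : B * Real.exp (k * T) ≤ B * (k ^ 2 * T ^ 2 / 4) :=
      mul_le_mul_of_nonpos_left hexplb hB.le
    have hquadneg : C + a * T + B * (k ^ 2 * T ^ 2 / 4) < 0 := by
      have hBval : B * (k ^ 2 * T ^ 2 / 4) = -(beta * T ^ 2) := by
        rw [hbetadef]; ring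
      rw [hBval]
      nlinarith [mul_le_mul_of_nonneg_right hbT hT0, mul_le_mul_of_nonneg_left hT1 hC.le,
        mul_le_mul_of_nonneg_left hT1 ha.le, sq_nonneg T]
    have : s T < 0 := by linarith
    linarith [hpos T hT0]
end

section
/- Let ν ≥ 0 and c₋ > 0, and set λₛ⁻ := (−ν − √(ν² + 4c₋))/2. Let c : [0,∞) → ℝ satisfy c(t) ≥ c₋ for all t ≥ 0, and let w, s : [0,∞) → ℝ be differentiable with w'(t) = −ν·w(t) − (1 − c(t)·s(t)) and s'(t) = w(t) for all t ≥ 0. If s(0) > 0 and w(0) ≥ λₛ⁻·(s(0) − 1/c₋), then for all t ≥ 0 one has s(t) > 0 and w(t) ≥ λₛ⁻·(s(t) − 1/c₋). -/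
open Real Set Filter Topology

/-- Sub-critical invariance for the attractive phase-plane system with variable
background `c(t) ≥ c₋ > 0`: if `s(0) > 0` and `w(0) ≥ λₛ⁻·(s(0) − 1/c₋)` with
`λₛ⁻ = (−ν − √(ν²+4c₋))/2`, then `s(t) > 0` and `w(t) ≥ λₛ⁻·(s(t) − 1/c₋)` for all
`t ≥ 0`. -/
theorem stmt_5 (ν cm : ℝ) (hν : 0 ≤ ν) (hcm : 0 < cm)
    (c : ℝ → ℝ) (hc : ∀ t : ℝ, 0 ≤ t → cm ≤ c t)
    (w s : ℝ → ℝ)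
    (hw : ∀ t : ℝ, 0 ≤ t → HasDerivAt w (-ν * w t - (1 - c t * s t)) t)
    (hs : ∀ t : ℝ, 0 ≤ t → HasDerivAt s (w t) t)
    (hs0 : 0 < s 0)
    (hw0 : ((-ν - Real.sqrt (ν ^ 2 + 4 * cm)) / 2) * (s 0 - 1 / cm) ≤ w 0) :
    ∀ t : ℝ, 0 ≤ t →
      0 < s t ∧ ((-ν - Real.sqrt (ν ^ 2 + 4 * cm)) / 2) * (s t - 1 / cm) ≤ w t := by
  have hr0 : (0:ℝ) < Real.sqrt (ν ^ 2 + 4 * cm) := Real.sqrt_pos.mpr (by positivity)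
  have hr2 : (Real.sqrt (ν ^ 2 + 4 * cm)) ^ 2 = ν ^ 2 + 4 * cm :=
    Real.sq_sqrt (by positivity)
  set r := Real.sqrt (ν ^ 2 + 4 * cm) with hrdef
  set lam := (-ν - r) / 2 with hlamdef
  set mu := (-ν + r) / 2 with hmudef
  have hlamneg : lam < 0 := by rw [hlamdef]; linarith
  have hsum : lam + mu = -ν := by rw [hlamdef, hmudef]; ring
  have hprod : mu * lam = -cm := by
    rw [hlamdef, hmudef]; linear_combination (-(1/4 : ℝ)) * hr2
  have hcm' : cm ≠ 0 := ne_of_gt hcm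
  have hwc : ∀ x, 0 ≤ x → ContinuousAt w x := fun x hx => (hw x hx).continuousAt
  have hsc : ∀ x, 0 ≤ x → ContinuousAt s x := fun x hx => (hs x hx).continuousAt
  set F : ℝ → ℝ := fun t => (w t - lam * (s t - 1 / cm)) * Real.exp (-mu * t) with hFdef
  have hF : ∀ x, 0 ≤ x → HasDerivAt F
      (Real.exp (-mu * x) * ((c x - cm) * s x)) x := by
    intro x hx
    have hE : HasDerivAt (fun t => w t - lam * (s t - 1 / cm))
        ((-ν * w x - (1 - c x * s x)) - lam * w x) x :=
      (hw x hx).sub (((hs x hx).sub_const _).const_mul lam)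
    have hexp : HasDerivAt (fun t => Real.exp (-mu * t))
        (Real.exp (-mu * x) * (-mu * 1)) x :=
      ((hasDerivAt_id x).const_mul (-mu)).exp
    have h := hE.mul hexp
    have hid : (-ν * w x - (1 - c x * s x) - lam * w x)
        - mu * (w x - lam * (s x - 1 / cm)) = (c x - cm) * s x := by
      have h1 : mu * lam / cm = -1 := by rw [hprod]; field_simp
      linear_combination (-(w x)) * hsum + (s x) * hprod + (-1 : ℝ) * h1
    refine h.congr_deriv (Eq.symm ?_)
    linear_combination (-(Real.exp (-mu * x))) * hid
  have key : ∀ T, 0 ≤ T → (∀ u ∈ Icc (0:ℝ) T, 0 ≤ s u) →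
      lam * (s T - 1 / cm) ≤ w T := by
    intro T hT hsnn
    have hmono : MonotoneOn F (Icc 0 T) := by
      apply monotoneOn_of_deriv_nonneg (convex_Icc 0 T)
      · intro x hx
        exact ((hF x hx.1).continuousAt).continuousWithinAt
      · intro x hx
        rw [interior_Icc] at hx
        exact ((hF x hx.1.le).differentiableAt).differentiableWithinAt
      · intro x hx
        rw [interior_Icc] at hx
        rw [(hF x hx.1.le).deriv]
        have h1 : cm ≤ c x := hc x hx.1.le
        have h2 : 0 ≤ s x := hsnn x ⟨hx.1.le, hx.2.le⟩
        have h3 : 0 ≤ c x - cm := by linarith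
        exact mul_nonneg (Real.exp_pos _).le (mul_nonneg h3 h2)
    have h01 : F 0 ≤ F T := hmono ⟨le_refl 0, hT⟩ ⟨hT, le_refl T⟩ hT
    have hF0 : 0 ≤ F 0 := by
      simp only [hFdef, mul_zero, neg_zero, Real.exp_zero, mul_one]
      linarith [hw0]
    have hFT : 0 ≤ F T := le_trans hF0 h01
    have he : 0 < Real.exp (-mu * T) := Real.exp_pos _
    simp only [hFdef] at hFT
    nlinarith [hFT, he]
  have spos : ∀ t, 0 ≤ t → 0 < s t := by
    by_contra h
    push_neg at h
    obtain ⟨t1, ht1, hst1⟩ := h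
    set A : Set ℝ := {t | 0 ≤ t ∧ s t ≤ 0} with hA
    have hAne : A.Nonempty := ⟨t1, ht1, hst1⟩
    have hAbdd : BddBelow A := ⟨0, fun x hx => hx.1⟩
    have hAclosed : IsClosed A := by
      have hre : A = Ici (0:ℝ) ∩ s ⁻¹' Iic 0 := by
        ext x; simp [hA, Set.mem_setOf_eq, Set.mem_Ici, Set.mem_Iic]
      rw [hre]
      exact ContinuousOn.preimage_isClosed_of_isClosed
        (fun x hx => (hsc x hx).continuousWithinAt) isClosed_Ici isClosed_Iic
    set t0 := sInf A with ht0def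
    have ht0A : t0 ∈ A := hAclosed.csInf_mem hAne hAbdd
    have ht0nn : 0 ≤ t0 := ht0A.1
    have hlt : ∀ u, 0 ≤ u → u < t0 → 0 < s u := by
      intro u hu hut
      by_contra hsu
      push_neg at hsu
      exact absurd (csInf_le hAbdd ⟨hu, hsu⟩) (not_le.mpr hut)
    have ht0pos : 0 < t0 := by
      rcases ht0nn.lt_or_eq with h' | h'
      · exact h'
      · exfalso; rw [← h'] at ht0A; linarith [ht0A.2, hs0]
    have hst0 : s t0 = 0 := by
      refine le_antisymm ht0A.2 ?_
      have htend : Tendsto s (𝓝[<] t0) (𝓝 (s t0)) :=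
        ((hsc t0 ht0nn).continuousWithinAt).tendsto
      refine ge_of_tendsto htend ?_
      filter_upwards [Ioo_mem_nhdsLT_of_mem
        (⟨ht0pos, le_refl t0⟩ : t0 ∈ Ioc 0 t0)] with u hu
      exact (hlt u hu.1.le hu.2).le
    have hsnn : ∀ u ∈ Icc (0:ℝ) t0, 0 ≤ s u := by
      rintro u ⟨hu0, hu1⟩
      rcases hu1.lt_or_eq with h' | h'
      · exact (hlt u hu0 h').le
      · rw [h', hst0]
    have hwt0 : 0 < w t0 := by
      have hk := key t0 ht0nn hsnn
      rw [hst0] at hk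
      have hpos : 0 < lam * (0 - 1 / cm) := by
        have he : lam * (0 - 1 / cm) = -lam / cm := by ring
        rw [he]
        exact div_pos (by linarith) hcm
      linarith
    have hslope : Tendsto (slope s t0) (𝓝[≠] t0) (𝓝 (w t0)) :=
      hasDerivAt_iff_tendsto_slope.mp (hs t0 ht0nn)
    have hslope' : Tendsto (slope s t0) (𝓝[<] t0) (𝓝 (w t0)) :=
      hslope.mono_left (nhdsWithin_mono _ fun x hx => ne_of_lt hx)
    have hev : ∀ᶠ u in 𝓝[<] t0, 0 < slope s t0 u :=
      hslope'.eventually (eventually_gt_nhds hwt0)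
    have hev2 : ∀ᶠ u in 𝓝[<] t0, u ∈ Ioo 0 t0 :=
      Ioo_mem_nhdsLT_of_mem ⟨ht0pos, le_refl t0⟩
    have hfalse : ∀ᶠ u in 𝓝[<] t0, False := by
      filter_upwards [hev, hev2] with u h1 h2
      have hspos := hlt u h2.1.le h2.2
      have hsl : slope s t0 u = (s u - s t0) / (u - t0) := slope_def_field s t0 u
      rw [hst0, sub_zero] at hsl
      have hneg : slope s t0 u < 0 := by
        rw [hsl]
        exact div_neg_of_pos_of_neg hspos (by linarith [h2.2])
      linarith
    obtain ⟨u, hu⟩ := hfalse.exists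
    exact hu
  intro t ht
  exact ⟨spos t ht, key t ht fun u hu => (spos u hu.1).le⟩
end

section
/- Let ν ≥ 0 and 0 < c₋ ≤ c₊, and set λₛ⁺ := (−ν − √(ν² + 4c₊))/2. Let c : [0,∞) → ℝ satisfy c₋ ≤ c(t) ≤ c₊ for all t ≥ 0, and let w, s : [0,∞) → ℝ be differentiable with w'(t) = −ν·w(t) − (1 − c(t)·s(t)) and s'(t) = w(t) for all t ≥ 0. If s(0) > 0 and w(0) < λₛ⁺·(s(0) − 1/c₊), then there exists t* > 0 with s(t*) = 0. -/
open Real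

/-- Super-critical finite-time breakdown for the attractive phase-plane system with
variable background `c₋ ≤ c(t) ≤ c₊`: if `s(0) > 0` and
`w(0) < λₛ⁺·(s(0) − 1/c₊)` with `λₛ⁺ = (−ν − √(ν²+4c₊))/2`, then `s` vanishes at
some finite positive time. -/
theorem stmt_6 (ν cm cp : ℝ) (hν : 0 ≤ ν) (hcm : 0 < cm) (hcmp : cm ≤ cp)
    (c : ℝ → ℝ) (hc : ∀ t : ℝ, 0 ≤ t → cm ≤ c t ∧ c t ≤ cp)
    (w s : ℝ → ℝ)
    (hw : ∀ t : ℝ, 0 ≤ t → HasDerivAt w (-ν * w t - (1 - c t * s t)) t)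
    (hs : ∀ t : ℝ, 0 ≤ t → HasDerivAt s (w t) t)
    (hs0 : 0 < s 0)
    (hw0 : w 0 < ((-ν - Real.sqrt (ν ^ 2 + 4 * cp)) / 2) * (s 0 - 1 / cp)) :
    ∃ tstar : ℝ, 0 < tstar ∧ s tstar = 0 := by
  have hcp : 0 < cp := lt_of_lt_of_le hcm hcmp
  obtain ⟨r, hr_def⟩ : ∃ x : ℝ, x = Real.sqrt (ν ^ 2 + 4 * cp) := ⟨_, rfl⟩
  rw [← hr_def] at hw0
  have hr2 : r ^ 2 = ν ^ 2 + 4 * cp := by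
    rw [hr_def]; exact Real.sq_sqrt (by positivity)
  have hr0 : 0 ≤ r := hr_def ▸ Real.sqrt_nonneg _
  have hrν : ν < r := by nlinarith
  obtain ⟨lam, hlam_def⟩ : ∃ x : ℝ, x = (-ν - r) / 2 := ⟨_, rfl⟩
  rw [← hlam_def] at hw0
  have hlam_neg : lam < 0 := by rw [hlam_def]; nlinarith
  obtain ⟨mu, hmu_def⟩ : ∃ x : ℝ, x = -ν - lam := ⟨_, rfl⟩
  have hmu : 0 < mu := by rw [hmu_def, hlam_def]; nlinarith
  have hkey : lam * ν + lam ^ 2 = cp := by rw [hlam_def]; nlinarith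
  -- the Lyapunov function
  obtain ⟨L, hL_def⟩ : ∃ f : ℝ → ℝ, f = fun t => w t - lam * (s t - 1 / cp) :=
    ⟨_, rfl⟩
  have hL0 : L 0 < 0 := by
    simp only [hL_def]
    linarith
  have hL : ∀ t : ℝ, 0 ≤ t →
      HasDerivAt L (mu * L t + (c t - cp) * s t) t := by
    intro t ht
    have h1 := (hw t ht).sub (((hs t ht).sub_const (1 / cp)).const_mul lam)
    rw [hL_def]
    convert h1 using 1
    · rfl
    · rfl
    · rfl
    have hcp' : (cp : ℝ) ≠ 0 := ne_of_gt hcp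
    rw [hmu_def]
    field_simp
    linear_combination (cp * s t - 1) * hkey
  by_contra hno
  push_neg at hno
  -- s stays positive for all nonnegative time
  have hpos : ∀ t : ℝ, 0 ≤ t → 0 < s t := by
    intro t ht
    by_contra hle
    push_neg at hle
    have ht0 : t ≠ 0 := by intro h; rw [h] at hle; linarith
    have ht' : 0 < t := lt_of_le_of_ne ht (Ne.symm ht0)
    have hcont : ContinuousOn s (Set.Icc 0 t) := fun x hx =>
      ((hs x hx.1).continuousAt).continuousWithinAt
    have : (0 : ℝ) ∈ Set.Icc (s t) (s 0) := ⟨hle, le_of_lt hs0⟩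
    obtain ⟨x, hx, hx0⟩ := intermediate_value_Icc' (le_of_lt ht') hcont this
    have hxpos : 0 < x := by
      rcases lt_or_eq_of_le hx.1 with h | h
      · exact h
      · exfalso; rw [← h] at hx0; linarith
    exact hno x hxpos hx0
  -- Gronwall for L : L t ≤ L 0 * exp (mu * t)
  have hexp : ∀ t : ℝ, HasDerivAt (fun u => Real.exp (-mu * u))
      (Real.exp (-mu * t) * (-mu)) t :=
    fun t => by simpa using ((hasDerivAt_id t).const_mul (-mu)).exp
  obtain ⟨g, hg_def⟩ : ∃ f : ℝ → ℝ, f = fun t => L t * Real.exp (-mu * t) :=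
    ⟨_, rfl⟩
  have hg : ∀ t : ℝ, 0 ≤ t →
      HasDerivAt g ((c t - cp) * s t * Real.exp (-mu * t)) t := by
    intro t ht
    have := (hL t ht).mul (hexp t)
    rw [hg_def]
    convert this using 1
    · rfl
    · rfl
    · rfl
    rw [hmu_def]
    ring
  have hant : AntitoneOn g (Set.Ici 0) := by
    apply antitoneOn_of_deriv_nonpos (convex_Ici 0)
    · exact fun x hx => ((hg x hx).continuousAt).continuousWithinAt
    · intro x hx
      rw [interior_Ici] at hx
      exact ((hg x (le_of_lt hx)).differentiableAt).differentiableWithinAt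
    · intro x hx
      rw [interior_Ici] at hx
      rw [(hg x (le_of_lt hx)).deriv]
      have h1 : c x ≤ cp := (hc x (le_of_lt hx)).2
      have h2 : 0 < s x := hpos x (le_of_lt hx)
      have h3 : 0 < Real.exp (-mu * x) := Real.exp_pos _
      nlinarith [mul_nonneg (mul_nonneg (sub_nonneg.2 h1) h2.le) h3.le]
  have hLle : ∀ t : ℝ, 0 ≤ t → L t ≤ L 0 * Real.exp (mu * t) := by
    intro t ht
    have h1 : g t ≤ g 0 := hant (Set.self_mem_Ici) ht ht
    simp only [hg_def] at h1
    have h2 : Real.exp (-mu * 0) = 1 := by norm_num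
    rw [h2, mul_one] at h1
    have h3 : Real.exp (-mu * t) * Real.exp (mu * t) = 1 := by
      rw [← Real.exp_add]; ring_nf; exact Real.exp_zero
    have h4 : 0 < Real.exp (mu * t) := Real.exp_pos _
    have h5 : L t * Real.exp (-mu * t) * Real.exp (mu * t) = L t := by
      rw [mul_assoc, h3, mul_one]
    linarith [mul_le_mul_of_nonneg_right h1 (le_of_lt h4)]
  -- integrate: s t ≤ s 0 - (lam/cp) * t + (L 0 / mu) * (exp (mu t) - 1)
  obtain ⟨h, hh_def⟩ : ∃ f : ℝ → ℝ, f = fun t =>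
      s t + (lam / cp) * t - (L 0 / mu) * (Real.exp (mu * t) - 1) := ⟨_, rfl⟩
  have hexp' : ∀ t : ℝ, HasDerivAt (fun u => Real.exp (mu * u))
      (Real.exp (mu * t) * mu) t :=
    fun t => by simpa using ((hasDerivAt_id t).const_mul mu).exp
  have hh : ∀ t : ℝ, 0 ≤ t → HasDerivAt h
      (w t + lam / cp - L 0 * Real.exp (mu * t)) t := by
    intro t ht
    have h1 := ((hs t ht).add
        (((hasDerivAt_id t).const_mul (lam / cp)))).sub
        (((hexp' t).sub_const 1).const_mul (L 0 / mu))
    rw [hh_def]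
    convert h1 using 1
    · rfl
    · rfl
    · rfl
    have hmu' : mu ≠ 0 := ne_of_gt hmu
    field_simp
    try ring
  have hant2 : AntitoneOn h (Set.Ici 0) := by
    apply antitoneOn_of_deriv_nonpos (convex_Ici 0)
    · exact fun x hx => ((hh x hx).continuousAt).continuousWithinAt
    · intro x hx
      rw [interior_Ici] at hx
      exact ((hh x (le_of_lt hx)).differentiableAt).differentiableWithinAt
    · intro x hx
      rw [interior_Ici] at hx
      rw [(hh x (le_of_lt hx)).deriv]
      have h1 : L x ≤ L 0 * Real.exp (mu * x) := hLle x (le_of_lt hx)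
      have h2 : 0 < s x := hpos x (le_of_lt hx)
      have h3 : w x = L x + lam * s x - lam / cp := by simp only [hL_def]; ring
      linarith [mul_neg_of_neg_of_pos hlam_neg h2]
  have hsle : ∀ t : ℝ, 0 ≤ t →
      s t ≤ s 0 - (lam / cp) * t + (L 0 / mu) * (Real.exp (mu * t) - 1) := by
    intro t ht
    have h1 : h t ≤ h 0 := hant2 (Set.self_mem_Ici) ht ht
    have h0 : h 0 = s 0 := by
      simp only [hh_def]
      norm_num
    rw [h0] at h1
    simp only [hh_def] at h1
    linarith
  -- pick a large time where the bound is negative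
  obtain ⟨K, hK_def⟩ : ∃ x : ℝ, x = L 0 / mu := ⟨_, rfl⟩
  have hK : K < 0 := hK_def ▸ div_neg_of_neg_of_pos hL0 hmu
  obtain ⟨b, hb_def⟩ : ∃ x : ℝ, x = -lam / cp + K * mu := ⟨_, rfl⟩
  obtain ⟨q, hq_def⟩ : ∃ x : ℝ, x = -K * mu ^ 2 / 2 := ⟨_, rfl⟩
  have hq : 0 < q := by
    rw [hq_def]
    have := mul_pos (neg_pos.2 hK) (pow_pos hmu 2)
    linarith
  obtain ⟨T, hT_def⟩ : ∃ x : ℝ, x = max 1 ((|b| + s 0 + 1) / q) := ⟨_, rfl⟩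
  have hT1 : (1 : ℝ) ≤ T := hT_def ▸ le_max_left _ _
  have hT0 : (0 : ℝ) ≤ T := by linarith
  have hqT : |b| + s 0 + 1 ≤ q * T := by
    calc |b| + s 0 + 1 = q * ((|b| + s 0 + 1) / q) := by field_simp
    _ ≤ q * T := by
        apply mul_le_mul_of_nonneg_left _ (le_of_lt hq)
        rw [hT_def]; exact le_max_right _ _
  have hquad : 1 + mu * T + (mu * T) ^ 2 / 2 ≤ Real.exp (mu * T) := by
    apply Real.quadratic_le_exp_of_nonneg
    positivity
  have hfinal : s T < 0 := by
    have h1 := hsle T hT0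
    rw [← hK_def] at h1
    have h2 : K * (Real.exp (mu * T) - 1) ≤ K * (mu * T + (mu * T) ^ 2 / 2) := by
      apply mul_le_mul_of_nonpos_left _ (le_of_lt hK)
      linarith
    have h3 : s T ≤ s 0 + b * T - q * T ^ 2 := by
      have e : s 0 + b * T - q * T ^ 2 =
          s 0 - lam / cp * T + K * (mu * T + (mu * T) ^ 2 / 2) := by
        rw [hb_def, hq_def]; ring
      rw [e]; linarith
    linarith [h3, mul_le_mul_of_nonneg_right hqT hT0,
      mul_le_mul_of_nonneg_right (le_abs_self b) hT0,
      mul_le_mul_of_nonneg_left hT1 (by positivity : (0:ℝ) ≤ s 0 + 1)]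
  exact absurd (hpos T hT0) (by linarith)
end

section
/- Let ν ≥ 0, let c : [0,∞) → ℝ, and let w, s : [0,∞) → ℝ be differentiable with w'(t) = −ν·w(t) + 1 − c(t)·s(t) and s'(t) = w(t) for all t ≥ 0. Fix t ≥ 0 and constants c₁, c₂ ∈ ℝ. (a) If P : ℝ → ℝ satisfies P(s(t)) > 0 and P is differentiable at s(t) with P'(s(t)) = ν·√(2P(s(t))) + 1 − c₁·s(t), then the function τ ↦ w(τ) + √(2P(s(τ))) is differentiable at t with derivative ((1 − c₁·s(t))/√(2P(s(t))))·(w(t) + √(2P(s(t)))) + (c₁ − c(t))·s(t). (b) If N : ℝ → ℝ satisfies N(s(t)) > 0 and N is differentiable at s(t) with N'(s(t)) = −ν·√(2N(s(t))) + 1 − c₂·s(t), then the function τ ↦ w(τ) − √(2N(s(τ))) is differentiable at t with derivative ((c₂·s(t) − 1)/√(2N(s(t))))·(w(t) − √(2N(s(t)))) + (c₂ − c(t))·s(t). -/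
open Real

/-- Derivative identities (CT-fun) and (CT-fun2) for the Lyapunov functions
`L_P(w,s) = w + √(2P(s))` and `L_N(w,s) = w − √(2N(s))` along solutions of the
repulsive phase-plane system `w' = −ν w + 1 − c(t) s`, `s' = w`. -/
theorem stmt_7 (ν : ℝ) (hν : 0 ≤ ν) (c w s : ℝ → ℝ)
    (hw : ∀ τ : ℝ, 0 ≤ τ → HasDerivAt w (-ν * w τ + 1 - c τ * s τ) τ)
    (hs : ∀ τ : ℝ, 0 ≤ τ → HasDerivAt s (w τ) τ)
    (t : ℝ) (ht : 0 ≤ t) (c₁ c₂ : ℝ) :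
    (∀ P : ℝ → ℝ, 0 < P (s t) →
      HasDerivAt P (ν * Real.sqrt (2 * P (s t)) + 1 - c₁ * s t) (s t) →
      HasDerivAt (fun τ => w τ + Real.sqrt (2 * P (s τ)))
        ((1 - c₁ * s t) / Real.sqrt (2 * P (s t))
            * (w t + Real.sqrt (2 * P (s t)))
          + (c₁ - c t) * s t) t) ∧
    (∀ N : ℝ → ℝ, 0 < N (s t) →
      HasDerivAt N (-ν * Real.sqrt (2 * N (s t)) + 1 - c₂ * s t) (s t) →
      HasDerivAt (fun τ => w τ - Real.sqrt (2 * N (s τ)))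
        ((c₂ * s t - 1) / Real.sqrt (2 * N (s t))
            * (w t - Real.sqrt (2 * N (s t)))
          + (c₂ - c t) * s t) t) := by
  constructor
  · intro P hP hP'
    have hpos : 0 < 2 * P (s t) := by linarith
    have hsq : 0 < Real.sqrt (2 * P (s t)) := Real.sqrt_pos.2 hpos
    have hne : Real.sqrt (2 * P (s t)) ≠ 0 := ne_of_gt hsq
    have hsqsq : Real.sqrt (2 * P (s t)) * Real.sqrt (2 * P (s t)) = 2 * P (s t) :=
      Real.mul_self_sqrt hpos.le
    have hPs : HasDerivAt (fun τ => 2 * P (s τ))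
        (2 * ((ν * Real.sqrt (2 * P (s t)) + 1 - c₁ * s t) * w t)) t :=
      (hP'.comp t (hs t ht)).const_mul 2
    have hroot := (Real.hasDerivAt_sqrt (ne_of_gt hpos)).comp t hPs
    have htot := (hw t ht).add hroot
    convert htot using 1
    · rfl
    · rfl
    · rfl
    field_simp
    nlinarith [hsqsq]
  · intro N hN hN'
    have hpos : 0 < 2 * N (s t) := by linarith
    have hsq : 0 < Real.sqrt (2 * N (s t)) := Real.sqrt_pos.2 hpos
    have hne : Real.sqrt (2 * N (s t)) ≠ 0 := ne_of_gt hsq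
    have hsqsq : Real.sqrt (2 * N (s t)) * Real.sqrt (2 * N (s t)) = 2 * N (s t) :=
      Real.mul_self_sqrt hpos.le
    have hNs : HasDerivAt (fun τ => 2 * N (s τ))
        (2 * ((-ν * Real.sqrt (2 * N (s t)) + 1 - c₂ * s t) * w t)) t :=
      (hN'.comp t (hs t ht)).const_mul 2
    have hroot := (Real.hasDerivAt_sqrt (ne_of_gt hpos)).comp t hNs
    have htot := (hw t ht).sub hroot
    convert htot using 1
    · rfl
    · rfl
    · rfl
    field_simp
    nlinarith [hsqsq]
end

section
/- Let ν ≥ 0, 0 < c₋ ≤ c₊, and let c : [0,∞) → ℝ satisfy c₋ ≤ c(τ) ≤ c₊ for all τ. Let w, s : [0,∞) → ℝ be differentiable with w'(τ) = −ν·w(τ) + 1 − c(τ)·s(τ) and s'(τ) = w(τ) for all τ ≥ 0, and fix t > 0. (a) Let P₋ : ℝ → ℝ be such that for every τ ∈ [0,t]: s(τ) ≥ 0, P₋(s(τ)) > 0, and P₋ is differentiable at s(τ) with P₋'(s(τ)) = ν·√(2P₋(s(τ))) + 1 − c₋·s(τ). If w(0) + √(2P₋(s(0))) ≤ 0, then w(t)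 + √(2P₋(s(t))) ≤ 0. (b) Let N₊ : ℝ → ℝ be such that for every τ ∈ [0,t]: s(τ) ≥ 0, N₊(s(τ)) > 0, and N₊ is differentiable at s(τ) with N₊'(s(τ)) = −ν·√(2N₊(s(τ))) + 1 − c₊·s(τ). If w(0) − √(2N₊(s(0))) ≥ 0, then w(t) − √(2N₊(s(t))) ≥ 0. -/
open Real

lemma gronwall_neg {F F' : ℝ → ℝ} {t K : ℝ} (ht : 0 < t) (hK : 0 ≤ K)
    (hFc : ContinuousOn F (Set.Icc 0 t))
    (hF' : ∀ τ ∈ Set.Ico 0 t, HasDerivWithinAt F (F' τ) (Set.Ici τ) τ)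
    (hbound : ∀ τ ∈ Set.Ico 0 t, 0 < F τ → F' τ ≤ K * F τ)
    (h0 : F 0 ≤ 0) : F t ≤ 0 := by
  have key : ∀ ε > 0, F t ≤ ε * Real.exp ((2*K+2) * t) := by
    intro ε hε
    have := image_le_of_deriv_right_lt_deriv_boundary (a := 0) (b := t)
      (f := F) (f' := F') hFc hF'
      (B := fun τ => ε * Real.exp ((2*K+2) * τ))
      (B' := fun τ => ε * (Real.exp ((2*K+2) * τ) * ((2*K+2) * 1)))
      (by simpa using h0.trans (by positivity))
      (fun x => (((hasDerivAt_id x).const_mul (2*K+2)).exp).const_mul ε)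
      (fun x hx hfx => by
        have hBpos : 0 < ε * Real.exp ((2*K+2) * x) := by positivity
        have hFpos : 0 < F x := hfx ▸ hBpos
        calc F' x ≤ K * F x := hbound x hx hFpos
          _ < (2*K+2) * F x := by nlinarith
          _ = ε * (Real.exp ((2*K+2)*x) * ((2*K+2) * 1)) := by rw [hfx]; ring)
    exact this (Set.right_mem_Icc.2 ht.le)
  by_contra h
  push_neg at h
  have := key (F t / (2 * Real.exp ((2*K+2)*t))) (by positivity)
  have hexp : (0:ℝ) < Real.exp ((2*K+2)*t) := Real.exp_pos _
  rw [div_mul_eq_mul_div, le_div_iff₀ (by positivity)] at this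
  nlinarith

lemma key_comp {F g h : ℝ → ℝ} {t : ℝ} (ht : 0 < t)
    (hFc : ContinuousOn F (Set.Icc 0 t))
    (hgc : ContinuousOn g (Set.Icc 0 t))
    (hF' : ∀ τ ∈ Set.Ico 0 t, HasDerivWithinAt F (h τ + g τ * F τ) (Set.Ici τ) τ)
    (hh : ∀ τ ∈ Set.Ico 0 t, h τ ≤ 0)
    (h0 : F 0 ≤ 0) : F t ≤ 0 := by
  obtain ⟨C, hC⟩ := isCompact_Icc.exists_bound_of_continuousOn hgc
  refine gronwall_neg ht (le_max_right C 0) hFc hF' (fun τ hτ hFpos => ?_) h0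
  have hgC : |g τ| ≤ C := by simpa using hC τ (Set.Ico_subset_Icc_self hτ)
  have h1 : g τ ≤ max C 0 := le_trans (le_abs_self _) (hgC.trans (le_max_left _ _))
  nlinarith [hh τ hτ]

/-- Weak comparison principle (CP:sup) for the repulsive phase-plane system with
variable background `0 < c₋ ≤ c(τ) ≤ c₊`: the sign conditions
`w + √(2P₋(s)) ≤ 0` and `w − √(2N₊(s)) ≥ 0` propagate from time `0` to time `t`,
where `P₋` and `N₊` solve `P' = ν√(2P) + 1 − c₋ σ` and `N' = −ν√(2N) + 1 − c₊ σ`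
along the trajectory. -/
theorem stmt_8 (ν cm cp : ℝ) (hν : 0 ≤ ν) (hcm : 0 < cm) (hcmp : cm ≤ cp)
    (c : ℝ → ℝ) (hc : ∀ τ : ℝ, 0 ≤ τ → cm ≤ c τ ∧ c τ ≤ cp)
    (w s : ℝ → ℝ)
    (hw : ∀ τ : ℝ, 0 ≤ τ → HasDerivAt w (-ν * w τ + 1 - c τ * s τ) τ)
    (hs : ∀ τ : ℝ, 0 ≤ τ → HasDerivAt s (w τ) τ)
    (t : ℝ) (ht : 0 < t) :
    (∀ Pm : ℝ → ℝ,
      (∀ τ ∈ Set.Icc (0 : ℝ) t, 0 ≤ s τ ∧ 0 < Pm (s τ) ∧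
        HasDerivAt Pm (ν * Real.sqrt (2 * Pm (s τ)) + 1 - cm * s τ) (s τ)) →
      w 0 + Real.sqrt (2 * Pm (s 0)) ≤ 0 →
      w t + Real.sqrt (2 * Pm (s t)) ≤ 0) ∧
    (∀ Np : ℝ → ℝ,
      (∀ τ ∈ Set.Icc (0 : ℝ) t, 0 ≤ s τ ∧ 0 < Np (s τ) ∧
        HasDerivAt Np (-ν * Real.sqrt (2 * Np (s τ)) + 1 - cp * s τ) (s τ)) →
      0 ≤ w 0 - Real.sqrt (2 * Np (s 0)) →
      0 ≤ w t - Real.sqrt (2 * Np (s t))) := by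
  constructor
  · intro Pm hPm h0
    set Q : ℝ → ℝ := fun τ => Real.sqrt (2 * Pm (s τ)) with hQdef
    have hQpos : ∀ τ ∈ Set.Icc (0:ℝ) t, 0 < Q τ := fun τ hτ =>
      Real.sqrt_pos.2 (by linarith [(hPm τ hτ).2.1])
    have hQcont : ∀ τ ∈ Set.Icc (0:ℝ) t, ContinuousAt Q τ := fun τ hτ =>
      Real.continuous_sqrt.continuousAt.comp
        (continuousAt_const.mul (((hPm τ hτ).2.2.differentiableAt.continuousAt).comp
          (hs τ hτ.1).continuousAt))
    have hQder : ∀ τ ∈ Set.Ico (0:ℝ) t, HasDerivAt Q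
        ((2 * ((ν * Q τ + 1 - cm * s τ) * w τ)) / (2 * Q τ)) τ := by
      intro τ hτ
      have hτ' : τ ∈ Set.Icc (0:ℝ) t := Set.Ico_subset_Icc_self hτ
      have hPs : HasDerivAt (fun τ => Pm (s τ)) ((ν * Q τ + 1 - cm * s τ) * w τ) τ :=
        (hPm τ hτ').2.2.comp τ (hs τ hτ.1)
      exact (hPs.const_mul 2).sqrt (by linarith [(hPm τ hτ').2.1])
    have := key_comp (F := fun τ => w τ + Q τ)
      (g := fun τ => (1 - cm * s τ) / Q τ)
      (h := fun τ => (cm - c τ) * s τ) ht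
      (fun τ hτ => ((hw τ hτ.1).continuousAt.add (hQcont τ hτ)).continuousWithinAt)
      (fun τ hτ => ((continuousAt_const.sub
          (continuousAt_const.mul (hs τ hτ.1).continuousAt)).div
          (hQcont τ hτ) (hQpos τ hτ).ne').continuousWithinAt)
      (fun τ hτ => by
        have hτ' : τ ∈ Set.Icc (0:ℝ) t := Set.Ico_subset_Icc_self hτ
        have hQne : Q τ ≠ 0 := (hQpos τ hτ').ne'
        refine HasDerivAt.hasDerivWithinAt ?_
        convert (hw τ hτ.1).add (hQder τ hτ) using 1
        rfl
        field_simp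
        ring)
      (fun τ hτ => by
        have hτ' : τ ∈ Set.Icc (0:ℝ) t := Set.Ico_subset_Icc_self hτ
        have h1 := (hc τ hτ.1).1
        have h2 := (hPm τ hτ').1
        show (cm - c τ) * s τ ≤ 0
        nlinarith)
      h0
    exact this
  · intro Np hNp h0
    set Q : ℝ → ℝ := fun τ => Real.sqrt (2 * Np (s τ)) with hQdef
    have hQpos : ∀ τ ∈ Set.Icc (0:ℝ) t, 0 < Q τ := fun τ hτ =>
      Real.sqrt_pos.2 (by linarith [(hNp τ hτ).2.1])
    have hQcont : ∀ τ ∈ Set.Icc (0:ℝ) t, ContinuousAt Q τ := fun τ hτ =>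
      Real.continuous_sqrt.continuousAt.comp
        (continuousAt_const.mul (((hNp τ hτ).2.2.differentiableAt.continuousAt).comp
          (hs τ hτ.1).continuousAt))
    have hQder : ∀ τ ∈ Set.Ico (0:ℝ) t, HasDerivAt Q
        ((2 * ((-ν * Q τ + 1 - cp * s τ) * w τ)) / (2 * Q τ)) τ := by
      intro τ hτ
      have hτ' : τ ∈ Set.Icc (0:ℝ) t := Set.Ico_subset_Icc_self hτ
      have hPs : HasDerivAt (fun τ => Np (s τ)) ((-ν * Q τ + 1 - cp * s τ) * w τ) τ :=
        (hNp τ hτ').2.2.comp τ (hs τ hτ.1)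
      exact (hPs.const_mul 2).sqrt (by linarith [(hNp τ hτ').2.1])
    have key := key_comp (F := fun τ => Q τ - w τ)
      (g := fun τ => -((1 - cp * s τ) / Q τ))
      (h := fun τ => (c τ - cp) * s τ) ht
      (fun τ hτ => ((hQcont τ hτ).sub (hw τ hτ.1).continuousAt).continuousWithinAt)
      (fun τ hτ => (((continuousAt_const.sub
          (continuousAt_const.mul (hs τ hτ.1).continuousAt)).div
          (hQcont τ hτ) (hQpos τ hτ).ne').neg).continuousWithinAt)
      (fun τ hτ => by
        have hτ' : τ ∈ Set.Icc (0:ℝ) t := Set.Ico_subset_Icc_self hτ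
        have hQne : Q τ ≠ 0 := (hQpos τ hτ').ne'
        refine HasDerivAt.hasDerivWithinAt ?_
        convert (hQder τ hτ).sub (hw τ hτ.1) using 1
        rfl
        field_simp
        ring)
      (fun τ hτ => by
        have hτ' : τ ∈ Set.Icc (0:ℝ) t := Set.Ico_subset_Icc_self hτ
        have h1 := (hc τ hτ.1).2
        have h2 := (hNp τ hτ').1
        show (c τ - cp) * s τ ≤ 0
        nlinarith)
      (show Q 0 - w 0 ≤ 0 by
        have hq : Q 0 = Real.sqrt (2 * Np (s 0)) := rfl
        linarith)
    have hk : Q t - w t ≤ 0 := key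
    have hq : Q t = Real.sqrt (2 * Np (s t)) := rfl
    linarith
end

section
/- Let ν ≥ 0, 0 < c₋ ≤ c₊, and let c : [0,∞) → ℝ satisfy c₋ ≤ c(τ) ≤ c₊ for all τ. Let w, s : [0,∞) → ℝ be differentiable with w'(τ) = −ν·w(τ) + 1 − c(τ)·s(τ) and s'(τ) = w(τ) for all τ ≥ 0, and fix t > 0. (a) Let P₊ : ℝ → ℝ be such that for every τ ∈ [0,t]: s(τ) ≥ 0, P₊(s(τ)) > 0, and P₊ is differentiable at s(τ) with P₊'(s(τ)) = ν·√(2P₊(s(τ))) + 1 − c₊·s(τ). If w(0) + √(2P₊(s(0))) > 0, then w(t) + √(2P₊(s(t))) > 0. (b) Let N₋ : ℝ → ℝ be such that for every τ ∈ [0,t]: s(τ) ≥ 0, N₋(s(τ)) > 0, and N₋ is differentiable at s(τ) with N₋'(s(τ)) = −ν·√(2N₋(s(τ))) + 1 − c₋·s(τ). If w(0) − √(2N₋(s(0))) < 0, then w(t) − √(2N₋(s(t))) < 0. -/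
open Real

lemma gron_pos (t : ℝ) (ht : 0 < t) (F F' a : ℝ → ℝ)
    (hF : ∀ τ ∈ Set.Icc (0:ℝ) t, HasDerivAt F (F' τ) τ)
    (ha : ContinuousOn a (Set.Icc 0 t))
    (hineq : ∀ τ ∈ Set.Icc (0:ℝ) t, 0 ≤ F τ → a τ * F τ ≤ F' τ)
    (h0 : 0 < F 0) : 0 < F t := by
  obtain ⟨K, hK⟩ := (isCompact_Icc).exists_bound_of_continuousOn ha
  have hK0 : 0 ≤ K := le_trans (norm_nonneg _) (hK 0 ⟨le_refl 0, ht.le⟩)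
  by_contra hFt
  push_neg at hFt
  have hFc : ContinuousOn F (Set.Icc 0 t) := fun τ hτ =>
    (hF τ hτ).continuousAt.continuousWithinAt
  set S := Set.Icc (0:ℝ) t ∩ F ⁻¹' Set.Iic 0 with hSdef
  have hSne : S.Nonempty := ⟨t, ⟨le_of_lt ht, le_refl t⟩, hFt⟩
  have hSclosed : IsClosed S :=
    hFc.preimage_isClosed_of_isClosed isClosed_Icc isClosed_Iic
  have hSbdd : BddBelow S := ⟨0, fun x hx => hx.1.1⟩
  set τ0 := sInf S with hτ0def
  have hτ0S : τ0 ∈ S := hSclosed.csInf_mem hSne hSbdd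
  have hτ00 : 0 ≤ τ0 := hτ0S.1.1
  have hτ0t : τ0 ≤ t := hτ0S.1.2
  have hsub : Set.Icc (0:ℝ) τ0 ⊆ Set.Icc 0 t := Set.Icc_subset_Icc le_rfl hτ0t
  have hpos : ∀ τ ∈ Set.Ico (0:ℝ) τ0, 0 < F τ := by
    intro τ hτ
    by_contra h
    push_neg at h
    have : τ ∈ S := ⟨⟨hτ.1, le_trans hτ.2.le hτ0t⟩, h⟩
    exact absurd (csInf_le hSbdd this) (not_le.mpr hτ.2)
  set G := fun τ : ℝ => F τ * Real.exp (K * τ) with hGdef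
  have hGderiv : ∀ x ∈ Set.Icc (0:ℝ) τ0,
      HasDerivAt G (F' x * Real.exp (K * x) + F x * (Real.exp (K * x) * K)) x := by
    intro x hx
    have he : HasDerivAt (fun τ : ℝ => Real.exp (K * τ)) (Real.exp (K * x) * K) x := by
      simpa using (((hasDerivAt_id x).const_mul K).exp)
    exact (hF x (hsub hx)).mul he
  have hmono : MonotoneOn G (Set.Icc (0:ℝ) τ0) := by
    apply monotoneOn_of_deriv_nonneg (convex_Icc 0 τ0)
    · exact fun x hx => (hGderiv x hx).continuousAt.continuousWithinAt
    · intro x hx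
      rw [interior_Icc] at hx
      exact (hGderiv x ⟨hx.1.le, hx.2.le⟩).differentiableAt.differentiableWithinAt
    · intro x hx
      rw [interior_Icc] at hx
      rw [(hGderiv x ⟨hx.1.le, hx.2.le⟩).deriv]
      have hFx : 0 < F x := hpos x ⟨hx.1.le, hx.2⟩
      have haK : -K ≤ a x := by
        have := hK x (hsub ⟨hx.1.le, hx.2.le⟩)
        rw [Real.norm_eq_abs, abs_le] at this
        exact this.1
      have hFd := hineq x (hsub ⟨hx.1.le, hx.2.le⟩) hFx.le
      have he : 0 < Real.exp (K * x) := Real.exp_pos _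
      nlinarith [mul_le_mul_of_nonneg_right hFd he.le,
        mul_nonneg (mul_nonneg (by linarith : (0:ℝ) ≤ a x + K) hFx.le) he.le]
  have h1 : G 0 ≤ G τ0 := hmono ⟨le_rfl, hτ00⟩ ⟨hτ00, le_rfl⟩ hτ00
  have h2 : G 0 = F 0 := by simp [hGdef]
  have h3 : G τ0 ≤ 0 := by
    have hFτ0 : F τ0 ≤ 0 := hτ0S.2
    have := Real.exp_pos (K * τ0)
    exact mul_nonpos_of_nonpos_of_nonneg hFτ0 this.le
  linarith

/-- Strong comparison principle (CP:sub) for the repulsive phase-plane system with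
variable background `0 < c₋ ≤ c(τ) ≤ c₊`: the strict sign conditions
`w + √(2P₊(s)) > 0` and `w − √(2N₋(s)) < 0` propagate from time `0` to time `t`,
where `P₊` and `N₋` solve `P' = ν√(2P) + 1 − c₊ σ` and `N' = −ν√(2N) + 1 − c₋ σ`
along the trajectory. -/
theorem stmt_9 (ν cm cp : ℝ) (hν : 0 ≤ ν) (hcm : 0 < cm) (hcmp : cm ≤ cp)
    (c : ℝ → ℝ) (hc : ∀ τ : ℝ, 0 ≤ τ → cm ≤ c τ ∧ c τ ≤ cp)
    (w s : ℝ → ℝ)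
    (hw : ∀ τ : ℝ, 0 ≤ τ → HasDerivAt w (-ν * w τ + 1 - c τ * s τ) τ)
    (hs : ∀ τ : ℝ, 0 ≤ τ → HasDerivAt s (w τ) τ)
    (t : ℝ) (ht : 0 < t) :
    (∀ Pp : ℝ → ℝ,
      (∀ τ ∈ Set.Icc (0 : ℝ) t, 0 ≤ s τ ∧ 0 < Pp (s τ) ∧
        HasDerivAt Pp (ν * Real.sqrt (2 * Pp (s τ)) + 1 - cp * s τ) (s τ)) →
      0 < w 0 + Real.sqrt (2 * Pp (s 0)) →
      0 < w t + Real.sqrt (2 * Pp (s t))) ∧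
    (∀ Nm : ℝ → ℝ,
      (∀ τ ∈ Set.Icc (0 : ℝ) t, 0 ≤ s τ ∧ 0 < Nm (s τ) ∧
        HasDerivAt Nm (-ν * Real.sqrt (2 * Nm (s τ)) + 1 - cm * s τ) (s τ)) →
      w 0 - Real.sqrt (2 * Nm (s 0)) < 0 →
      w t - Real.sqrt (2 * Nm (s t)) < 0) := by
  constructor
  · intro Pp hPp h0
    refine gron_pos t ht (fun τ => w τ + Real.sqrt (2 * Pp (s τ)))
      (fun τ => (-ν * w τ + 1 - c τ * s τ) +
        (ν * Real.sqrt (2 * Pp (s τ)) + 1 - cp * s τ) * w τ / Real.sqrt (2 * Pp (s τ)))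
      (fun τ => (1 - cp * s τ) / Real.sqrt (2 * Pp (s τ))) ?_ ?_ ?_ h0
    · intro τ hτ
      obtain ⟨hs0, hP, hPd⟩ := hPp τ hτ
      have hq : 0 < Real.sqrt (2 * Pp (s τ)) := Real.sqrt_pos.mpr (by linarith)
      have h3 : HasDerivAt (fun τ => Pp (s τ))
          ((ν * Real.sqrt (2 * Pp (s τ)) + 1 - cp * s τ) * w τ) τ :=
        hPd.comp τ (hs τ hτ.1)
      have h4 := h3.const_mul 2
      have h5 := (Real.hasDerivAt_sqrt (by positivity : (2:ℝ) * Pp (s τ) ≠ 0)).comp τ h4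
      have h5' : HasDerivAt (fun τ => Real.sqrt (2 * Pp (s τ)))
          (1 / (2 * Real.sqrt (2 * Pp (s τ))) *
            (2 * ((ν * Real.sqrt (2 * Pp (s τ)) + 1 - cp * s τ) * w τ))) τ := by
        simpa only [Function.comp_def] using h5
      have h6 : HasDerivAt (fun τ => w τ + Real.sqrt (2 * Pp (s τ))) _ τ := (hw τ hτ.1).add h5'
      convert h6 using 1
      field_simp
    · intro τ hτ
      obtain ⟨hs0, hP, hPd⟩ := hPp τ hτ
      have hq : 0 < Real.sqrt (2 * Pp (s τ)) := Real.sqrt_pos.mpr (by linarith)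
      apply ContinuousAt.continuousWithinAt
      have hsc : ContinuousAt s τ := (hs τ hτ.1).continuousAt
      have hPc : ContinuousAt (fun τ => Pp (s τ)) τ := hPd.continuousAt.comp hsc
      exact (continuousAt_const.sub (continuousAt_const.mul hsc)).div
        ((continuousAt_const.mul hPc).sqrt) hq.ne'
    · intro τ hτ hF
      obtain ⟨hs0, hP, hPd⟩ := hPp τ hτ
      have hq : 0 < Real.sqrt (2 * Pp (s τ)) := Real.sqrt_pos.mpr (by linarith)
      obtain ⟨hc1, hc2⟩ := hc τ hτ.1
      have key : (-ν * w τ + 1 - c τ * s τ) +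
          (ν * Real.sqrt (2 * Pp (s τ)) + 1 - cp * s τ) * w τ / Real.sqrt (2 * Pp (s τ))
          = (cp - c τ) * s τ +
            (1 - cp * s τ) / Real.sqrt (2 * Pp (s τ)) * (w τ + Real.sqrt (2 * Pp (s τ))) := by
        field_simp
        ring
      show (1 - cp * s τ) / Real.sqrt (2 * Pp (s τ)) * (w τ + Real.sqrt (2 * Pp (s τ))) ≤
        (-ν * w τ + 1 - c τ * s τ) +
          (ν * Real.sqrt (2 * Pp (s τ)) + 1 - cp * s τ) * w τ / Real.sqrt (2 * Pp (s τ))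
      rw [key]
      have : 0 ≤ (cp - c τ) * s τ := mul_nonneg (by linarith) hs0
      linarith
  · intro Nm hNm h0
    have key0 : 0 < Real.sqrt (2 * Nm (s 0)) - w 0 := by linarith
    have main : 0 < Real.sqrt (2 * Nm (s t)) - w t := by
      refine gron_pos t ht (fun τ => Real.sqrt (2 * Nm (s τ)) - w τ)
        (fun τ => (-ν * Real.sqrt (2 * Nm (s τ)) + 1 - cm * s τ) * w τ / Real.sqrt (2 * Nm (s τ))
          - (-ν * w τ + 1 - c τ * s τ))
        (fun τ => -(1 - cm * s τ) / Real.sqrt (2 * Nm (s τ))) ?_ ?_ ?_ key0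
      · intro τ hτ
        obtain ⟨hs0, hN, hNd⟩ := hNm τ hτ
        have hq : 0 < Real.sqrt (2 * Nm (s τ)) := Real.sqrt_pos.mpr (by linarith)
        have h3 : HasDerivAt (fun τ => Nm (s τ))
            ((-ν * Real.sqrt (2 * Nm (s τ)) + 1 - cm * s τ) * w τ) τ :=
          hNd.comp τ (hs τ hτ.1)
        have h4 := h3.const_mul 2
        have h5 := (Real.hasDerivAt_sqrt (by positivity : (2:ℝ) * Nm (s τ) ≠ 0)).comp τ h4
        have h5' : HasDerivAt (fun τ => Real.sqrt (2 * Nm (s τ)))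
            (1 / (2 * Real.sqrt (2 * Nm (s τ))) *
              (2 * ((-ν * Real.sqrt (2 * Nm (s τ)) + 1 - cm * s τ) * w τ))) τ := by
          simpa only [Function.comp_def] using h5
        have h6 : HasDerivAt (fun τ => Real.sqrt (2 * Nm (s τ)) - w τ) _ τ := h5'.sub (hw τ hτ.1)
        convert h6 using 1
        field_simp
      · intro τ hτ
        obtain ⟨hs0, hN, hNd⟩ := hNm τ hτ
        have hq : 0 < Real.sqrt (2 * Nm (s τ)) := Real.sqrt_pos.mpr (by linarith)
        apply ContinuousAt.continuousWithinAt
        have hsc : ContinuousAt s τ := (hs τ hτ.1).continuousAt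
        have hNc : ContinuousAt (fun τ => Nm (s τ)) τ := hNd.continuousAt.comp hsc
        exact ((continuousAt_const.sub (continuousAt_const.mul hsc)).neg).div
          ((continuousAt_const.mul hNc).sqrt) hq.ne'
      · intro τ hτ hF
        obtain ⟨hs0, hN, hNd⟩ := hNm τ hτ
        have hq : 0 < Real.sqrt (2 * Nm (s τ)) := Real.sqrt_pos.mpr (by linarith)
        obtain ⟨hc1, hc2⟩ := hc τ hτ.1
        have key : (-ν * Real.sqrt (2 * Nm (s τ)) + 1 - cm * s τ) * w τ / Real.sqrt (2 * Nm (s τ))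
            - (-ν * w τ + 1 - c τ * s τ)
            = (c τ - cm) * s τ + (-(1 - cm * s τ) / Real.sqrt (2 * Nm (s τ))) *
              (Real.sqrt (2 * Nm (s τ)) - w τ) := by
          field_simp
          ring
        show -(1 - cm * s τ) / Real.sqrt (2 * Nm (s τ)) * (Real.sqrt (2 * Nm (s τ)) - w τ) ≤
          (-ν * Real.sqrt (2 * Nm (s τ)) + 1 - cm * s τ) * w τ / Real.sqrt (2 * Nm (s τ))
            - (-ν * w τ + 1 - c τ * s τ)
        rw [key]
        have : 0 ≤ (c τ - cm) * s τ := mul_nonneg (by linarith) hs0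
        linarith
    linarith
end

section
/- Let t₁ < t₂ be real numbers, let s : [t₁,t₂] → ℝ be differentiable, and let P : ℝ → ℝ be continuous with P(σ) > 0 for every σ in the interval [s(t₂), s(t₁)] ∪ [s(t₁), s(t₂)]. Suppose s'(τ) ≤ −√(2P(s(τ))) for all τ ∈ [t₁,t₂]. Then s(t₂) < s(t₁) and t₂ − t₁ ≤ ∫_{s(t₂)}^{s(t₁)} dσ/√(2P(σ)). -/
open Real MeasureTheory

/-- Lemma 4.1 (time estimate along decreasing trajectories): if
`s'(τ) ≤ −√(2P(s(τ)))` on `[t₁,t₂]` with `P` continuous and positive on the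
traversed interval, then `s(t₂) < s(t₁)` and
`t₂ − t₁ ≤ ∫_{s(t₂)}^{s(t₁)} dσ/√(2P(σ))`. -/
theorem stmt_10 (t₁ t₂ : ℝ) (h12 : t₁ < t₂) (s s' P : ℝ → ℝ)
    (hs : ∀ τ ∈ Set.Icc t₁ t₂, HasDerivAt s (s' τ) τ)
    (hPcont : Continuous P)
    (hPpos : ∀ σ ∈ Set.Icc (s t₂) (s t₁) ∪ Set.Icc (s t₁) (s t₂), 0 < P σ)
    (hineq : ∀ τ ∈ Set.Icc t₁ t₂, s' τ ≤ -Real.sqrt (2 * P (s τ))) :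
    s t₂ < s t₁ ∧
      t₂ - t₁ ≤ ∫ σ in Set.Ioo (s t₂) (s t₁), 1 / Real.sqrt (2 * P σ) := by
  set f : ℝ → ℝ := fun σ => 1 / Real.sqrt (2 * P σ) with hf
  have hmemIcc₁ : t₁ ∈ Set.Icc t₁ t₂ := Set.left_mem_Icc.2 h12.le
  have hmemIcc₂ : t₂ ∈ Set.Icc t₁ t₂ := Set.right_mem_Icc.2 h12.le
  have scont : ContinuousOn s (Set.Icc t₁ t₂) := fun τ hτ =>
    (hs τ hτ).continuousAt.continuousWithinAt
  have sdiff : DifferentiableOn ℝ s (interior (Set.Icc t₁ t₂)) := fun τ hτ =>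
    (hs τ (interior_subset hτ)).differentiableAt.differentiableWithinAt
  have hderiv : ∀ τ ∈ interior (Set.Icc t₁ t₂), deriv s τ = s' τ := fun τ hτ =>
    (hs τ (interior_subset hτ)).deriv
  have anti : AntitoneOn s (Set.Icc t₁ t₂) := by
    apply antitoneOn_of_deriv_nonpos (convex_Icc _ _) scont sdiff
    intro τ hτ
    rw [hderiv τ hτ]
    exact (hineq τ (interior_subset hτ)).trans (neg_nonpos.2 (Real.sqrt_nonneg _))
  have hmem : ∀ τ ∈ Set.Icc t₁ t₂, s τ ∈ Set.Icc (s t₂) (s t₁) := fun τ hτ =>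
    ⟨anti hτ hmemIcc₂ hτ.2, anti hmemIcc₁ hτ hτ.1⟩
  have hP : ∀ τ ∈ Set.Icc t₁ t₂, 0 < P (s τ) := fun τ hτ =>
    hPpos _ (Or.inl (hmem τ hτ))
  have strict : StrictAntiOn s (Set.Icc t₁ t₂) := by
    apply strictAntiOn_of_deriv_neg (convex_Icc _ _) scont
    intro τ hτ
    rw [hderiv τ hτ]
    calc s' τ ≤ -Real.sqrt (2 * P (s τ)) := hineq τ (interior_subset hτ)
      _ < 0 := neg_neg_of_pos (Real.sqrt_pos.2 (by linarith [hP τ (interior_subset hτ)]))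
  have hlt : s t₂ < s t₁ := strict hmemIcc₁ hmemIcc₂ h12
  refine ⟨hlt, ?_⟩
  -- continuity of f at points where P > 0
  have fcontAt : ∀ x, 0 < P x → ContinuousAt f x := by
    intro x hx
    have h1 : ContinuousAt (fun σ => Real.sqrt (2 * P σ)) x :=
      (Real.continuous_sqrt.comp (continuous_const.mul hPcont)).continuousAt
    exact continuousAt_const.div h1 (ne_of_gt (Real.sqrt_pos.2 (by linarith)))
  have fContOn : ContinuousOn f (Set.Icc (s t₂) (s t₁)) := fun x hx =>
    (fcontAt x (hPpos x (Or.inl hx))).continuousWithinAt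
  have hfmeas : Measurable f :=
    measurable_const.div (Real.continuous_sqrt.comp (continuous_const.mul hPcont)).measurable
  have hfint : ∀ τ ∈ Set.Icc t₁ t₂, IntervalIntegrable f volume (s τ) (s t₁) := by
    intro τ hτ
    apply ContinuousOn.intervalIntegrable
    rw [Set.uIcc_of_le (hmem τ hτ).2]
    exact fContOn.mono (Set.Icc_subset_Icc (hmem τ hτ).1 le_rfl)
  set g : ℝ → ℝ := fun τ => ∫ u in (s τ)..(s t₁), f u with hg
  have hgd : ∀ τ ∈ Set.Icc t₁ t₂, HasDerivAt g (-(f (s τ)) * s' τ) τ := by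
    intro τ hτ
    have hG : HasDerivAt (fun x => ∫ u in x..(s t₁), f u) (-(f (s τ))) (s τ) :=
      intervalIntegral.integral_hasDerivAt_left (hfint τ hτ)
        ⟨Set.univ, Filter.univ_mem, hfmeas.aestronglyMeasurable.restrict⟩
        (fcontAt _ (hP τ hτ))
    exact hG.comp τ (hs τ hτ)
  have hgd_ge : ∀ τ ∈ Set.Icc t₁ t₂, (1 : ℝ) ≤ -(f (s τ)) * s' τ := by
    intro τ hτ
    have hpos : 0 < Real.sqrt (2 * P (s τ)) :=
      Real.sqrt_pos.2 (by linarith [hP τ hτ])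
    have hfpos : 0 < f (s τ) := by
      simp only [hf]; positivity
    have h1 : Real.sqrt (2 * P (s τ)) ≤ -(s' τ) := by
      have := hineq τ hτ; linarith
    calc (1 : ℝ) = f (s τ) * Real.sqrt (2 * P (s τ)) := by
          simp only [hf]; rw [one_div, inv_mul_cancel₀ hpos.ne']
      _ ≤ f (s τ) * (-(s' τ)) := by
          exact mul_le_mul_of_nonneg_left h1 hfpos.le
      _ = -(f (s τ)) * s' τ := by ring
  -- h τ = g τ - τ is monotone on [t₁, t₂]
  have hmono : MonotoneOn (fun τ => g τ - τ) (Set.Icc t₁ t₂) := by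
    apply monotoneOn_of_deriv_nonneg (convex_Icc _ _)
    · exact fun τ hτ => ((hgd τ hτ).continuousAt.sub continuousAt_id).continuousWithinAt
    · exact fun τ hτ =>
        (((hgd τ (interior_subset hτ)).sub (hasDerivAt_id' (x := τ))).differentiableAt).differentiableWithinAt
    · intro τ hτ
      rw [((hgd τ (interior_subset hτ)).fun_sub (hasDerivAt_id' (x := τ))).deriv]
      have := hgd_ge τ (interior_subset hτ)
      linarith
  have key := hmono hmemIcc₁ hmemIcc₂ h12.le
  have hg1 : g t₁ = 0 := by simp [hg]
  have hg2 : g t₂ = ∫ σ in Set.Ioo (s t₂) (s t₁), f σ := by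
    show (∫ u in (s t₂)..(s t₁), f u) = _
    rw [intervalIntegral.integral_of_le hlt.le, MeasureTheory.integral_Ioc_eq_integral_Ioo]
  simp only [hg1, zero_sub] at key
  calc t₂ - t₁ ≤ g t₂ := by linarith
    _ = _ := hg2
end

section
/- Let c̄ > 0, 0 ≤ ν < 2√c̄, a ∈ ℝ, and set μ := √(c̄ − ν²/4) and γ := πν/√(4c̄ − ν²). Define w(t) := −((c̄·a − 1)/μ)·sin(μt)·e^(−νt/2) and s(t) := 1/c̄ + (a − 1/c̄)·(cos(μt) + (ν/(2μ))·sin(μt))·e^(−νt/2). Then w and s are differentiable on ℝ with w'(t) = −ν·w(t) + 1 − c̄·s(t) and s'(t) = w(t) for all t, and (w(0), s(0)) = (0, a). Moreover s(π/μ) = 1/c̄ − (a − 1/c̄)·e^(−γ) and s(−π/μ) = 1/c̄ − (a − 1/c̄)·e^(γ); in particular s(π/μ) = 0 if and only if a = (1 + e^γ)/c̄. -/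
open Real

/-- Explicit solution formula (ws:for) for the repulsive phase-plane system with
constant background `c̄` in the underdamped regime `0 ≤ ν < 2√c̄`, together with
the evaluations at `t = ±π/μ` producing the domain endpoints of (str), where
`μ = √(c̄ − ν²/4)` and `γ = πν/√(4c̄ − ν²)`. -/
theorem stmt_12 (c ν a : ℝ) (hc : 0 < c) (hν : 0 ≤ ν) (hν2 : ν < 2 * Real.sqrt c) :
    let μ : ℝ := Real.sqrt (c - ν ^ 2 / 4)
    let γ : ℝ := Real.pi * ν / Real.sqrt (4 * c - ν ^ 2)
    let w : ℝ → ℝ := fun t =>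
      -((c * a - 1) / μ) * Real.sin (μ * t) * Real.exp (-ν * t / 2)
    let s : ℝ → ℝ := fun t =>
      1 / c + (a - 1 / c) * (Real.cos (μ * t) + ν / (2 * μ) * Real.sin (μ * t))
        * Real.exp (-ν * t / 2)
    (∀ t : ℝ, HasDerivAt w (-ν * w t + 1 - c * s t) t) ∧
    (∀ t : ℝ, HasDerivAt s (w t) t) ∧
    w 0 = 0 ∧ s 0 = a ∧
    s (Real.pi / μ) = 1 / c - (a - 1 / c) * Real.exp (-γ) ∧
    s (-(Real.pi / μ)) = 1 / c - (a - 1 / c) * Real.exp γ ∧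
    (s (Real.pi / μ) = 0 ↔ a = (1 + Real.exp γ) / c) := by
  intro μ γ w s
  have hν4 : ν ^ 2 < 4 * c := by
    nlinarith [Real.sq_sqrt hc.le, Real.sqrt_nonneg c]
  have hμ : 0 < μ := Real.sqrt_pos.mpr (by linarith)
  have hμsq : μ ^ 2 = c - ν ^ 2 / 4 := Real.sq_sqrt (by linarith)
  have h2μ : Real.sqrt (4 * c - ν ^ 2) = 2 * μ := by
    rw [show (4 * c - ν ^ 2) = (2:ℝ) ^ 2 * (c - ν ^ 2 / 4) by ring,
      Real.sqrt_mul (by positivity), Real.sqrt_sq (by norm_num)]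
  have hγ : γ = ν * Real.pi / (2 * μ) := by
    simp only [γ, h2μ]; ring
  -- derivative helpers
  have hde : ∀ t : ℝ, HasDerivAt (fun t => Real.exp (-ν * t / 2))
      (Real.exp (-ν * t / 2) * (-ν / 2)) t := by
    intro t
    have h1 : HasDerivAt (fun t : ℝ => -ν * t / 2) (-ν / 2) t := by
      simpa using ((hasDerivAt_id t).const_mul (-ν)).div_const 2
    exact (Real.hasDerivAt_exp (-ν * t / 2)).comp t h1
  have hlin : ∀ t : ℝ, HasDerivAt (fun t : ℝ => μ * t) μ t := by
    intro t; simpa using (hasDerivAt_id t).const_mul μ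
  have hsin : ∀ t : ℝ, HasDerivAt (fun t => Real.sin (μ * t))
      (Real.cos (μ * t) * μ) t := by
    intro t; exact (Real.hasDerivAt_sin (μ * t)).comp t (hlin t)
  have hcos : ∀ t : ℝ, HasDerivAt (fun t => Real.cos (μ * t))
      (-Real.sin (μ * t) * μ) t := by
    intro t; exact (Real.hasDerivAt_cos (μ * t)).comp t (hlin t)
  have hexp1 : -ν * (Real.pi / μ) / 2 = -γ := by
    rw [hγ]; field_simp
  have hexp2 : -ν * -(Real.pi / μ) / 2 = γ := by
    rw [hγ]; field_simp
  have h5 : s (Real.pi / μ) = 1 / c - (a - 1 / c) * Real.exp (-γ) := by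
    show 1 / c + (a - 1 / c) * (Real.cos (μ * (Real.pi / μ))
        + ν / (2 * μ) * Real.sin (μ * (Real.pi / μ)))
        * Real.exp (-ν * (Real.pi / μ) / 2) = _
    rw [mul_div_cancel₀ _ hμ.ne', Real.cos_pi, Real.sin_pi, hexp1]
    ring
  refine ⟨?_, ?_, ?_, ?_, h5, ?_, ?_⟩
  · intro t
    have h : HasDerivAt w
        ((-((c * a - 1) / μ) * (Real.cos (μ * t) * μ)) * Real.exp (-ν * t / 2)
          + (-((c * a - 1) / μ) * Real.sin (μ * t)) * (Real.exp (-ν * t / 2) * (-ν / 2))) t :=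
      (((hsin t).const_mul (-((c * a - 1) / μ))).mul (hde t))
    convert h using 1
    simp only [w, s]
    field_simp
    ring
  · intro t
    have h : HasDerivAt s
        (0 + ((a - 1 / c) * (-Real.sin (μ * t) * μ + ν / (2 * μ) * (Real.cos (μ * t) * μ))
          * Real.exp (-ν * t / 2)
          + (a - 1 / c) * (Real.cos (μ * t) + ν / (2 * μ) * Real.sin (μ * t))
          * (Real.exp (-ν * t / 2) * (-ν / 2)))) t := by
      exact (hasDerivAt_const t (1 / c)).add
        ((((hcos t).add ((hsin t).const_mul (ν / (2 * μ)))).const_mul (a - 1 / c)).mul (hde t))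
    convert h using 1
    simp only [w]
    have hc2 : μ ^ 2 + ν ^ 2 / 4 ≠ 0 := by rw [hμsq]; linarith
    rw [show c = μ ^ 2 + ν ^ 2 / 4 by linarith]
    field_simp
    ring
  · simp [w]
  · simp [s]
  · show 1 / c + (a - 1 / c) * (Real.cos (μ * -(Real.pi / μ))
        + ν / (2 * μ) * Real.sin (μ * -(Real.pi / μ)))
        * Real.exp (-ν * -(Real.pi / μ) / 2) = _
    rw [show μ * -(Real.pi / μ) = -Real.pi by field_simp, Real.cos_neg, Real.sin_neg,
      Real.cos_pi, Real.sin_pi, hexp2]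
    ring
  · rw [h5, Real.exp_neg]
    have hE : (0:ℝ) < Real.exp γ := Real.exp_pos γ
    constructor
    · intro h
      field_simp at h ⊢
      nlinarith
    · intro h
      rw [h]
      field_simp
      ring
end

section
/- Let c₋ > 0 and ν ≥ 2√c₋, and let c : [0,∞) → ℝ satisfy c(t) ≥ c₋ for all t ≥ 0. Let P : [0,∞) → ℝ be continuously differentiable with P(0) = 0, P(σ) > 0 for all σ > 0, and P'(σ) = ν·√(2P(σ)) + 1 − c₋·σ for all σ ≥ 0. Let w, s : [0,∞) → ℝ be differentiable with w'(t) = −ν·w(t) + 1 − c(t)·s(t) and s'(t) = w(t) for all t ≥ 0, and suppose s(0) > 0 and w(0) ≤ −√(2P(s(0))). If the function σ ↦ 1/√(2P(σ)) is Lebesgue integrable on (0, s(0)) with T₀ := ∫₀^{s(0)} dσ/√(2P(σ)), then there exists t* ∈ (0, T₀] with s(t*) = 0. -/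
open Real MeasureTheory

/-- Proposition 4.1 (finite-time breakdown in the overdamped regime `ν ≥ 2√c₋`) for
the repulsive phase-plane system with variable background `c(t) ≥ c₋ > 0`: if
`s(0) > 0` and `w(0) ≤ −√(2P(s(0)))`, with `P` the solution of
`P' = ν√(2P) + 1 − c₋σ`, `P(0) = 0`, `P > 0` on `(0,∞)`, and `σ ↦ 1/√(2P(σ))` is
integrable on `(0, s(0))` with integral `T₀`, then `s` vanishes at some time in
`(0, T₀]`. -/
theorem stmt_13 (ν cm : ℝ) (hcm : 0 < cm) (hν : 2 * Real.sqrt cm ≤ ν)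
    (c : ℝ → ℝ) (hc : ∀ t : ℝ, 0 ≤ t → cm ≤ c t)
    (P : ℝ → ℝ) (hP0 : P 0 = 0) (hPpos : ∀ σ : ℝ, 0 < σ → 0 < P σ)
    (hPd : ∀ σ : ℝ, 0 ≤ σ →
      HasDerivAt P (ν * Real.sqrt (2 * P σ) + 1 - cm * σ) σ)
    (w s : ℝ → ℝ)
    (hw : ∀ t : ℝ, 0 ≤ t → HasDerivAt w (-ν * w t + 1 - c t * s t) t)
    (hs : ∀ t : ℝ, 0 ≤ t → HasDerivAt s (w t) t)
    (hs0 : 0 < s 0) (hw0 : w 0 ≤ -Real.sqrt (2 * P (s 0)))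
    (hint : IntegrableOn (fun σ => 1 / Real.sqrt (2 * P σ)) (Set.Ioo 0 (s 0))
      (volume : Measure ℝ)) :
    ∃ tstar ∈ Set.Ioc (0 : ℝ) (∫ σ in Set.Ioo (0 : ℝ) (s 0), 1 / Real.sqrt (2 * P σ)),
      s tstar = 0 := by
  set g : ℝ → ℝ := fun σ => 1 / Real.sqrt (2 * P σ) with hgdef
  -- basic positivity
  have hQpos' : ∀ σ : ℝ, 0 < σ → 0 < Real.sqrt (2 * P σ) := fun σ hσ =>
    Real.sqrt_pos.2 (mul_pos two_pos (hPpos σ hσ))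
  have hgpos : ∀ σ : ℝ, 0 < σ → 0 < g σ := fun σ hσ =>
    one_div_pos.2 (hQpos' σ hσ)
  have hgcontAt : ∀ σ : ℝ, 0 < σ → ContinuousAt g σ := by
    intro σ hσ
    have hP : ContinuousAt P σ := (hPd σ hσ.le).continuousAt
    have hsq : ContinuousAt (fun x => Real.sqrt (2 * P x)) σ :=
      Real.continuous_sqrt.continuousAt.comp (continuousAt_const.mul hP)
    exact continuousAt_const.div hsq (hQpos' σ hσ).ne'
  have hgcontOn : ContinuousOn g (Set.Ioo 0 (s 0)) := fun σ hσ =>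
    (hgcontAt σ hσ.1).continuousWithinAt
  -- interval integrability of g
  have hgint : ∀ x : ℝ, x ∈ Set.Icc 0 (s 0) → IntervalIntegrable g volume 0 x := by
    intro x hx
    rw [intervalIntegrable_iff_integrableOn_Ioo_of_le hx.1]
    exact hint.mono_set (Set.Ioo_subset_Ioo le_rfl hx.2)
  -- the primitive F
  set F : ℝ → ℝ := fun x => ∫ σ in (0:ℝ)..x, g σ with hFdef
  have hFs0 : F (s 0) = ∫ σ in Set.Ioo (0:ℝ) (s 0), g σ := by
    show (∫ σ in (0:ℝ)..(s 0), g σ) = ∫ σ in Set.Ioo (0:ℝ) (s 0), g σ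
    rw [intervalIntegral.integral_of_le hs0.le, MeasureTheory.integral_Ioc_eq_integral_Ioo]
  set T0 : ℝ := ∫ σ in Set.Ioo (0:ℝ) (s 0), g σ with hT0def
  have hT0pos : 0 < T0 := by
    rw [← hFs0]
    exact intervalIntegral.intervalIntegral_pos_of_pos_on
      (hgint (s 0) ⟨hs0.le, le_rfl⟩) (fun σ hσ => hgpos σ hσ.1) hs0
  by_contra hcon
  push_neg at hcon
  -- positivity of s on [0, T0]
  have hspos : ∀ t ∈ Set.Icc (0:ℝ) T0, 0 < s t := by
    intro t ht
    rcases eq_or_lt_of_le ht.1 with h0 | h0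
    · rw [← h0]; exact hs0
    · by_contra hnot
      push_neg at hnot
      have hcontS : ContinuousOn s (Set.Icc 0 t) := fun u hu =>
        ((hs u hu.1).continuousAt).continuousWithinAt
      obtain ⟨u, hu, hsu⟩ := intermediate_value_Icc' h0.le hcontS ⟨hnot, hs0.le⟩
      have hu0 : 0 < u := lt_of_le_of_ne hu.1 (by rintro rfl; exact hs0.ne' hsu)
      exact hcon u ⟨hu0, hu.2.trans ht.2⟩ hsu
  -- Q and its derivative
  set Q : ℝ → ℝ := fun t => Real.sqrt (2 * P (s t)) with hQdef
  have hQposI : ∀ t ∈ Set.Icc (0:ℝ) T0, 0 < Q t := fun t ht => hQpos' _ (hspos t ht)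
  have hQd : ∀ t ∈ Set.Icc (0:ℝ) T0,
      HasDerivAt Q ((2 * ((ν * Q t + 1 - cm * s t) * w t)) / (2 * Q t)) t := by
    intro t ht
    have hinner : HasDerivAt (fun u => 2 * P (s u))
        (2 * ((ν * Real.sqrt (2 * P (s t)) + 1 - cm * s t) * w t)) t :=
      (((hPd (s t) (hspos t ht).le).comp t (hs t ht.1))).const_mul 2
    have hne : 2 * P (s t) ≠ 0 := (mul_pos two_pos (hPpos _ (hspos t ht))).ne'
    exact hinner.sqrt hne
  -- coefficient a and its primitive A
  set a : ℝ → ℝ := fun t => (1 - cm * s t) / Q t with hadef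
  have hacont : ∀ t ∈ Set.Icc (0:ℝ) T0, ContinuousAt a t := by
    intro t ht
    have hsc : ContinuousAt s t := (hs t ht.1).continuousAt
    have hQc : ContinuousAt Q t :=
      Real.continuous_sqrt.continuousAt.comp
        (continuousAt_const.mul (((hPd (s t) (hspos t ht).le).continuousAt).comp hsc))
    exact (continuousAt_const.sub (continuousAt_const.mul hsc)).div hQc (hQposI t ht).ne'
  have hacontOn : ContinuousOn a (Set.Icc 0 T0) := fun t ht =>
    (hacont t ht).continuousWithinAt
  have haint : ∀ t ∈ Set.Icc (0:ℝ) T0, IntervalIntegrable a volume 0 t := fun t ht =>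
    (hacontOn.mono (Set.Icc_subset_Icc le_rfl ht.2)).intervalIntegrable_of_Icc ht.1
  set A : ℝ → ℝ := fun t => ∫ u in (0:ℝ)..t, a u with hAdef
  have hAd : ∀ t ∈ Set.Ioo (0:ℝ) T0, HasDerivAt A (a t) t := by
    intro t ht
    exact intervalIntegral.integral_hasDerivAt_right
      (haint t (Set.Ioo_subset_Icc_self ht))
      (ContinuousOn.stronglyMeasurableAtFilter isOpen_Ioo
        (hacontOn.mono Set.Ioo_subset_Icc_self) t ht)
      (hacont t (Set.Ioo_subset_Icc_self ht))
  have hAcont : ContinuousOn A (Set.Icc 0 T0) := by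
    have : IntegrableOn a (Set.uIcc 0 T0) volume := by
      rw [Set.uIcc_of_le hT0pos.le]
      exact hacontOn.integrableOn_Icc
    exact intervalIntegral.continuousOn_primitive_interval this |>.mono
      (by rw [Set.uIcc_of_le hT0pos.le])
  -- G and φ
  set G : ℝ → ℝ := fun t => w t + Q t with hGdef
  have hGd : ∀ t ∈ Set.Icc (0:ℝ) T0,
      HasDerivAt G ((cm - c t) * s t + a t * G t) t := by
    intro t ht
    have h := (hw t ht.1).add (hQd t ht)
    refine h.congr_deriv ?_
    have hQne : Q t ≠ 0 := (hQposI t ht).ne'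
    rw [hadef, hGdef]
    field_simp
    ring
  set φ : ℝ → ℝ := fun t => G t * Real.exp (-A t) with hφdef
  have hφd : ∀ t ∈ Set.Ioo (0:ℝ) T0,
      HasDerivAt φ (((cm - c t) * s t) * Real.exp (-A t)) t := by
    intro t ht
    have h1 := hGd t (Set.Ioo_subset_Icc_self ht)
    have h2 : HasDerivAt (fun u => Real.exp (-A u)) (Real.exp (-A t) * -(a t)) t :=
      ((hAd t ht).neg).exp
    have := h1.mul h2
    refine this.congr_deriv ?_
    ring
  have hφcont : ContinuousOn φ (Set.Icc 0 T0) := by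
    have hGcont : ContinuousOn G (Set.Icc 0 T0) := fun t ht =>
      (((hw t ht.1).continuousAt).add ((hQd t ht).continuousAt)).continuousWithinAt
    exact hGcont.mul ((Real.continuous_exp.comp_continuousOn hAcont.neg))
  have hφanti : AntitoneOn φ (Set.Icc 0 T0) := by
    apply antitoneOn_of_deriv_nonpos (convex_Icc 0 T0) hφcont
    · intro t ht
      rw [interior_Icc] at ht
      exact ((hφd t ht).differentiableAt).differentiableWithinAt
    · intro t ht
      rw [interior_Icc] at ht
      rw [(hφd t ht).deriv]
      have h1 : cm - c t ≤ 0 := sub_nonpos.2 (hc t ht.1.le)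
      have h2 : 0 < s t := hspos t (Set.Ioo_subset_Icc_self ht)
      have h3 : 0 < Real.exp (-A t) := Real.exp_pos _
      have := mul_nonpos_of_nonpos_of_nonneg h1 h2.le
      exact mul_nonpos_of_nonpos_of_nonneg this h3.le
  -- w ≤ -Q on [0, T0]
  have hwle : ∀ t ∈ Set.Icc (0:ℝ) T0, w t ≤ -Q t := by
    intro t ht
    have h0mem : (0:ℝ) ∈ Set.Icc (0:ℝ) T0 := Set.left_mem_Icc.2 hT0pos.le
    have := hφanti h0mem ht ht.1
    have hA0 : A 0 = 0 := intervalIntegral.integral_same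
    have hφ0 : φ 0 ≤ 0 := by
      rw [hφdef]
      simp only [hA0, neg_zero, Real.exp_zero, mul_one]
      rw [hGdef]
      simp only
      have : Q 0 = Real.sqrt (2 * P (s 0)) := rfl
      linarith [hw0, this]
    have hφt : φ t ≤ 0 := le_trans this hφ0
    have hexp : 0 < Real.exp (-A t) := Real.exp_pos _
    have hGt : G t ≤ 0 := by
      by_contra hG
      push_neg at hG
      have : 0 < φ t := mul_pos hG hexp
      linarith
    have : w t + Q t ≤ 0 := hGt
    linarith
  -- s is strictly decreasing on [0, T0]
  have hsanti : StrictAntiOn s (Set.Icc 0 T0) := by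
    apply strictAntiOn_of_deriv_neg (convex_Icc 0 T0)
    · exact fun t ht => ((hs t ht.1).continuousAt).continuousWithinAt
    · intro t ht
      rw [interior_Icc] at ht
      rw [(hs t ht.1.le).deriv]
      have := hwle t (Set.Ioo_subset_Icc_self ht)
      have hQ := hQposI t (Set.Ioo_subset_Icc_self ht)
      linarith
  have hslt : ∀ t ∈ Set.Ioc (0:ℝ) T0, s t < s 0 := fun t ht =>
    hsanti (Set.left_mem_Icc.2 hT0pos.le) ⟨ht.1.le, ht.2⟩ ht.1
  -- derivative of F
  have hFd : ∀ x ∈ Set.Ioo (0:ℝ) (s 0), HasDerivAt F (g x) x := by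
    intro x hx
    exact intervalIntegral.integral_hasDerivAt_right
      (hgint x ⟨hx.1.le, hx.2.le⟩)
      (ContinuousOn.stronglyMeasurableAtFilter isOpen_Ioo hgcontOn x hx)
      (hgcontAt x hx.1)
  have hFcont : ContinuousOn F (Set.Icc 0 (s 0)) := by
    have : IntegrableOn g (Set.uIcc 0 (s 0)) volume := by
      rw [Set.uIcc_of_le hs0.le]
      exact (integrableOn_Icc_iff_integrableOn_Ioo).2 hint
    exact intervalIntegral.continuousOn_primitive_interval this |>.mono
      (by rw [Set.uIcc_of_le hs0.le])
  -- Ψ = F ∘ s + id is antitone on [0, T0]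
  have hsmem : ∀ t ∈ Set.Icc (0:ℝ) T0, s t ∈ Set.Icc 0 (s 0) := by
    intro t ht
    refine ⟨(hspos t ht).le, ?_⟩
    rcases eq_or_lt_of_le ht.1 with h0 | h0
    · rw [← h0]
    · exact (hslt t ⟨h0, ht.2⟩).le
  set Ψ : ℝ → ℝ := fun t => F (s t) + t with hΨdef
  have hΨd : ∀ t ∈ Set.Ioo (0:ℝ) T0, HasDerivAt Ψ (g (s t) * w t + 1) t := by
    intro t ht
    have hst : s t ∈ Set.Ioo 0 (s 0) :=
      ⟨hspos t (Set.Ioo_subset_Icc_self ht), hslt t ⟨ht.1, ht.2.le⟩⟩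
    exact ((hFd (s t) hst).comp t (hs t ht.1.le)).add (hasDerivAt_id t)
  have hΨderiv_nonpos : ∀ t ∈ Set.Ioo (0:ℝ) T0, g (s t) * w t + 1 ≤ 0 := by
    intro t ht
    have htI := Set.Ioo_subset_Icc_self ht
    have hQ : 0 < Q t := hQposI t htI
    have hwt : w t ≤ -Q t := hwle t htI
    have hQne : Real.sqrt (2 * P (s t)) ≠ 0 := hQ.ne'
    have e : g (s t) * w t + 1 = (w t + Q t) / Q t := by
      show 1 / Real.sqrt (2 * P (s t)) * w t + 1
          = (w t + Real.sqrt (2 * P (s t))) / Real.sqrt (2 * P (s t))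
      rw [one_div_mul_eq_div, add_div, div_self hQne]
    rw [e]
    exact div_nonpos_of_nonpos_of_nonneg (by linarith) hQ.le
  have hΨcont : ContinuousOn Ψ (Set.Icc 0 T0) := by
    have hscont : ContinuousOn s (Set.Icc 0 T0) := fun t ht =>
      ((hs t ht.1).continuousAt).continuousWithinAt
    exact (hFcont.comp hscont hsmem).add continuous_id.continuousOn
  have hΨanti : AntitoneOn Ψ (Set.Icc 0 T0) := by
    apply antitoneOn_of_deriv_nonpos (convex_Icc 0 T0) hΨcont
    · intro t ht
      rw [interior_Icc] at ht
      exact ((hΨd t ht).differentiableAt).differentiableWithinAt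
    · intro t ht
      rw [interior_Icc] at ht
      rw [(hΨd t ht).deriv]
      exact hΨderiv_nonpos t ht
  have hfin := hΨanti (Set.left_mem_Icc.2 hT0pos.le) (Set.right_mem_Icc.2 hT0pos.le) hT0pos.le
  have hΨ0 : Ψ 0 = T0 := by
    rw [hΨdef]; simp only [add_zero]; rw [hFs0]
  have hΨT : Ψ T0 = F (s T0) + T0 := rfl
  have hFsT0 : F (s T0) ≤ 0 := by
    rw [hΨT] at hfin; rw [hΨ0] at hfin; linarith
  have hsT0 : s T0 ∈ Set.Icc (0:ℝ) (s 0) := hsmem T0 (Set.right_mem_Icc.2 hT0pos.le)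
  have hsT0pos : 0 < s T0 := hspos T0 (Set.right_mem_Icc.2 hT0pos.le)
  have hFpos : 0 < F (s T0) :=
    intervalIntegral.intervalIntegral_pos_of_pos_on (hgint (s T0) hsT0)
      (fun σ hσ => hgpos σ hσ.1) hsT0pos
  linarith
end

section
/- Let 0 < c₋ ≤ c₊ and 0 ≤ ν < 2√c₋, and let c : [0,∞) → ℝ satisfy c₋ ≤ c(t) ≤ c₊ for all t ≥ 0. Let s* > 0 and let P, N : [0,s*] → ℝ be continuously differentiable with: P(0) = 0, P(s*) = 0, P(σ) > 0 for σ ∈ (0,s*), and P'(σ) = ν·√(2P(σ)) + 1 − c₋·σ on [0,s*]; N(s*) = 0, N(σ) > 0 for σ ∈ [0,s*), and N'(σ) = −ν·√(2N(σ)) + 1 − c₊·σ on [0,s*]. Assume moreover that σ ↦ 1/√(2P(σ)) and σ ↦ 1/√(2N(σ)) are Lebesgue integrable on (0,s*). Let w, s : [0,∞) → ℝ be differentiable with w'(t) = −ν·w(t) + 1 − c(t)·s(t) and s'(t) = w(t) for all t ≥ 0, and suppose s(0) > 0 and that it is NOT the case that (s(0) < s* and −√(2P(s(0))) < w(0) <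 √(2N(s(0)))). Then there exists t* > 0 with s(t*) = 0. -/
open Real MeasureTheory Set Filter

/-- If `f` has negative derivative at `m`, then just to the right of `m`, `f < f m`. -/
lemma aux_right_lt {f : ℝ → ℝ} {d m : ℝ} (hf : HasDerivAt f d m) (hd : d < 0) :
    ∀ᶠ τ in nhdsWithin m (Set.Ioi m), f τ < f m := by
  have hslope := hasDerivAt_iff_tendsto_slope.1 hf
  have hlt : ∀ᶠ τ in nhdsWithin m {m}ᶜ, slope f m τ < 0 :=
    hslope (Iio_mem_nhds hd)
  have hsub : nhdsWithin m (Set.Ioi m) ≤ nhdsWithin m {m}ᶜ := by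
    apply nhdsWithin_mono
    intro x hx
    simpa using (ne_of_gt hx)
  filter_upwards [hsub hlt, self_mem_nhdsWithin] with τ hτ (hmem : τ ∈ Set.Ioi m)
  have hpos : 0 < τ - m := sub_pos.2 hmem
  have h2 : (f τ - f m) / (τ - m) < 0 := by
    simpa [slope_def_field] using hτ
  rcases div_neg_iff.mp h2 with ⟨h3, _⟩ | ⟨_, h4⟩ <;> linarith

/-- Continuous induction: a closed condition `g ≤ 0` that always extends
to the right holds forever. -/
lemma aux_inv {g : ℝ → ℝ} {t₀ : ℝ}
    (hcont : ∀ t ≥ t₀, ContinuousAt g t)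
    (h0 : g t₀ ≤ 0)
    (hext : ∀ m ≥ t₀, (∀ τ ∈ Set.Icc t₀ m, g τ ≤ 0) →
      ∀ᶠ τ in nhdsWithin m (Set.Ioi m), g τ ≤ 0) :
    ∀ t ≥ t₀, g t ≤ 0 := by
  intro T hT
  by_contra hneg
  push_neg at hneg
  set S : Set ℝ := {t ∈ Set.Icc t₀ T | ∀ τ ∈ Set.Icc t₀ t, g τ ≤ 0} with hS
  have hne : t₀ ∈ S := by
    refine ⟨⟨le_refl _, hT⟩, ?_⟩
    intro τ hτ
    have : τ = t₀ := le_antisymm hτ.2 hτ.1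
    simpa [this] using h0
  have hbdd : BddAbove S := ⟨T, fun x hx => hx.1.2⟩
  set m := sSup S with hm
  have hm0 : t₀ ≤ m := le_csSup hbdd hne
  have hmT : m ≤ T := csSup_le ⟨t₀, hne⟩ (fun x hx => hx.1.2)
  have hmem' : ∀ τ ∈ Set.Ico t₀ m, g τ ≤ 0 := by
    intro τ hτ
    obtain ⟨b, hb, hτb⟩ := exists_lt_of_lt_csSup ⟨t₀, hne⟩ hτ.2
    exact hb.2 τ ⟨hτ.1, le_of_lt hτb⟩
  have hgm : g m ≤ 0 := by
    rcases eq_or_lt_of_le hm0 with h' | h'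
    · simpa [← h'] using h0
    · have htd : Filter.Tendsto g (nhdsWithin m (Set.Iio m)) (nhds (g m)) :=
        ((hcont m hm0).continuousWithinAt).tendsto
      refine le_of_tendsto htd ?_
      filter_upwards [nhdsWithin_le_nhds (Ioi_mem_nhds h'), self_mem_nhdsWithin]
        with τ h1 h2
      exact hmem' τ ⟨le_of_lt h1, h2⟩
  have hmem : ∀ τ ∈ Set.Icc t₀ m, g τ ≤ 0 := by
    intro τ hτ
    rcases eq_or_lt_of_le hτ.2 with h | h
    · exact h ▸ hgm
    · exact hmem' τ ⟨hτ.1, h⟩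
  have hmlt : m < T := by
    rcases eq_or_lt_of_le hmT with h | h
    · exact absurd (h ▸ hgm) (not_le.2 hneg)
    · exact h
  have hev := hext m hm0 hmem
  rw [eventually_nhdsWithin_iff] at hev
  rcases Metric.eventually_nhds_iff.mp hev with ⟨ε, hε, hball⟩
  set t' := min (m + ε / 2) T with ht'
  have hmt' : m < t' := lt_min (by linarith) hmlt
  have ht'S : t' ∈ S := by
    refine ⟨⟨le_trans hm0 (le_of_lt hmt'), min_le_right _ _⟩, ?_⟩
    intro τ hτ
    rcases le_or_gt τ m with h | h
    · exact hmem τ ⟨hτ.1, h⟩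
    · refine hball (y := τ) ?_ h
      have h1 : τ ≤ m + ε / 2 := le_trans hτ.2 (min_le_left _ _)
      rw [Real.dist_eq, abs_lt]
      constructor <;> linarith
  have : t' ≤ m := le_csSup hbdd ht'S
  linarith

/-- Nonnegativity is preserved if the derivative is nonnegative whenever the
function is nonpositive. -/
lemma aux_nonneg_preserve {E D : ℝ → ℝ} {a b : ℝ}
    (hE : ∀ t ∈ Set.Icc a b, HasDerivAt E (D t) t)
    (h0 : 0 ≤ E a)
    (hD : ∀ t ∈ Set.Ioo a b, E t ≤ 0 → 0 ≤ D t) :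
    ∀ t ∈ Set.Icc a b, 0 ≤ E t := by
  intro t₃ ht₃
  by_contra hneg
  push_neg at hneg
  have hab : a ≤ b := le_trans ht₃.1 ht₃.2
  have hat₃ : a ≤ t₃ := ht₃.1
  set K : Set ℝ := {τ ∈ Set.Icc a t₃ | 0 ≤ E τ} with hK
  have hKsub : K ⊆ Set.Icc a t₃ := fun x hx => hx.1
  have hcont : ∀ x ∈ Set.Icc a b, ContinuousAt E x := fun x hx =>
    (hE x hx).continuousAt
  have hclosed : IsClosed K := by
    rw [← isSeqClosed_iff_isClosed]
    intro xs x hxs hlim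
    have hx1 : x ∈ Set.Icc a t₃ :=
      isClosed_Icc.isSeqClosed (fun n => (hxs n).1) hlim
    refine ⟨hx1, ?_⟩
    have hcx : ContinuousAt E x := hcont x ⟨hx1.1, le_trans hx1.2 ht₃.2⟩
    exact le_of_tendsto_of_tendsto tendsto_const_nhds
      ((hcx.tendsto).comp hlim) (Filter.Eventually.of_forall fun n => (hxs n).2)
  have hKcpt : IsCompact K := isCompact_Icc.of_isClosed_subset hclosed hKsub
  have hKne : K.Nonempty := ⟨a, ⟨le_refl _, hat₃⟩, h0⟩
  set t₁ := sSup K with ht₁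
  have ht₁K : t₁ ∈ K := hKcpt.sSup_mem hKne
  have ht₁3 : t₁ < t₃ := lt_of_le_of_ne ht₁K.1.2
    (fun h => absurd (h ▸ ht₁K.2) (not_le.2 hneg))
  have hlt : ∀ τ ∈ Set.Ioc t₁ t₃, E τ < 0 := by
    intro τ hτ
    by_contra h
    push_neg at h
    have : τ ∈ K := ⟨⟨le_trans ht₁K.1.1 (le_of_lt hτ.1), hτ.2⟩, h⟩
    exact absurd (le_csSup (hKcpt.bddAbove) this) (not_le.2 hτ.1)
  have hmono : MonotoneOn E (Set.Icc t₁ t₃) := by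
    apply monotoneOn_of_deriv_nonneg (convex_Icc _ _)
    · intro x hx
      exact (hcont x ⟨le_trans ht₁K.1.1 hx.1, le_trans hx.2 ht₃.2⟩).continuousWithinAt
    · intro x hx
      rw [interior_Icc] at hx
      exact ((hE x ⟨le_trans ht₁K.1.1 (le_of_lt hx.1),
        le_trans (le_of_lt hx.2) ht₃.2⟩).differentiableAt).differentiableWithinAt
    · intro x hx
      rw [interior_Icc] at hx
      have hxab : x ∈ Set.Icc a b := ⟨le_trans ht₁K.1.1 (le_of_lt hx.1),
        le_trans (le_of_lt hx.2) ht₃.2⟩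
      rw [(hE x hxab).deriv]
      exact hD x ⟨lt_of_le_of_lt ht₁K.1.1 hx.1, lt_of_lt_of_le hx.2 ht₃.2⟩
        (le_of_lt (hlt x ⟨hx.1, le_of_lt hx.2⟩))
  have := hmono (Set.left_mem_Icc.2 (le_of_lt ht₁3))
    (Set.right_mem_Icc.2 (le_of_lt ht₁3)) (le_of_lt ht₁3)
  linarith [ht₁K.2]

/-- Lower bound on increments from a lower bound on the derivative. -/
lemma aux_ge_of_deriv_ge {f D : ℝ → ℝ} {a b κ : ℝ} (hab : a ≤ b)
    (hf : ∀ t ∈ Set.Icc a b, HasDerivAt f (D t) t)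
    (hD : ∀ t ∈ Set.Icc a b, κ ≤ D t) : κ * (b - a) ≤ f b - f a := by
  set g : ℝ → ℝ := fun t => f t - κ * t with hg
  have hg' : ∀ t ∈ Set.Icc a b, HasDerivAt g (D t - κ) t := fun t ht =>
    ((hf t ht).sub ((hasDerivAt_id t).const_mul κ)).congr_deriv (by ring)
  have hmono : MonotoneOn g (Set.Icc a b) := by
    apply monotoneOn_of_deriv_nonneg (convex_Icc _ _)
    · exact fun x hx => ((hg' x hx).continuousAt).continuousWithinAt
    · intro x hx
      rw [interior_Icc] at hx
      exact ((hg' x (Set.mem_Icc_of_Ioo hx)).differentiableAt).differentiableWithinAt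
    · intro x hx
      rw [interior_Icc] at hx
      rw [(hg' x (Set.mem_Icc_of_Ioo hx)).deriv]
      linarith [hD x (Set.mem_Icc_of_Ioo hx)]
  have := hmono (Set.left_mem_Icc.2 hab) (Set.right_mem_Icc.2 hab) hab
  simp only [hg] at this
  linarith

lemma aux_cont_f {Q : ℝ → ℝ} {sstar : ℝ}
    (hQc : ∀ σ ∈ Set.Ioo (0:ℝ) sstar, ContinuousAt Q σ)
    (hQpos : ∀ σ ∈ Set.Ioo (0:ℝ) sstar, 0 < Q σ) :
    ∀ x ∈ Set.Ioo (0:ℝ) sstar,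
      ContinuousAt (fun σ => 1 / Real.sqrt (2 * Q σ)) x := by
  intro x hx
  have h1 : ContinuousAt (fun σ => Real.sqrt (2 * Q σ)) x :=
    (Real.continuous_sqrt.continuousAt).comp ((continuousAt_const.mul (hQc x hx)))
  have h2 : Real.sqrt (2 * Q x) ≠ 0 :=
    ne_of_gt (Real.sqrt_pos.2 (by linarith [hQpos x hx]))
  exact continuousAt_const.div h1 h2

lemma aux_intable {Q : ℝ → ℝ} {sstar u v : ℝ}
    (hQint : IntegrableOn (fun σ => 1 / Real.sqrt (2 * Q σ)) (Set.Ioo 0 sstar)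
      (volume : Measure ℝ))
    (hu : u ∈ Set.Ioo (0:ℝ) sstar) (hv : v ∈ Set.Ioo (0:ℝ) sstar) :
    IntervalIntegrable (fun σ => 1 / Real.sqrt (2 * Q σ)) volume u v := by
  rw [intervalIntegrable_iff]
  apply hQint.mono_set
  intro x hx
  rcases hx with ⟨h1, h2⟩
  constructor
  · calc (0:ℝ) < min u v := lt_min hu.1 hv.1
    _ < x := h1
  · calc x ≤ max u v := h2
    _ < sstar := max_lt hu.2 hv.2

lemma aux_ftc_left {Q : ℝ → ℝ} {sstar : ℝ}
    (hQc : ∀ σ ∈ Set.Ioo (0:ℝ) sstar, ContinuousAt Q σ)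
    (hQpos : ∀ σ ∈ Set.Ioo (0:ℝ) sstar, 0 < Q σ)
    (hQint : IntegrableOn (fun σ => 1 / Real.sqrt (2 * Q σ)) (Set.Ioo 0 sstar)
      (volume : Measure ℝ))
    {x b : ℝ} (hx : x ∈ Set.Ioo (0:ℝ) sstar) (hb : b ∈ Set.Ioo (0:ℝ) sstar) :
    HasDerivAt (fun u => ∫ σ in u..b, 1 / Real.sqrt (2 * Q σ))
      (-(1 / Real.sqrt (2 * Q x))) x := by
  apply intervalIntegral.integral_hasDerivAt_left (aux_intable hQint hx hb)
  · exact ContinuousOn.stronglyMeasurableAtFilter isOpen_Ioo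
      (fun y hy => (aux_cont_f hQc hQpos y hy).continuousWithinAt) x hx
  · exact aux_cont_f hQc hQpos x hx

lemma aux_ftc_right {Q : ℝ → ℝ} {sstar : ℝ}
    (hQc : ∀ σ ∈ Set.Ioo (0:ℝ) sstar, ContinuousAt Q σ)
    (hQpos : ∀ σ ∈ Set.Ioo (0:ℝ) sstar, 0 < Q σ)
    (hQint : IntegrableOn (fun σ => 1 / Real.sqrt (2 * Q σ)) (Set.Ioo 0 sstar)
      (volume : Measure ℝ))
    {x a : ℝ} (hx : x ∈ Set.Ioo (0:ℝ) sstar) (ha : a ∈ Set.Ioo (0:ℝ) sstar) :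
    HasDerivAt (fun u => ∫ σ in a..u, 1 / Real.sqrt (2 * Q σ))
      (1 / Real.sqrt (2 * Q x)) x := by
  apply intervalIntegral.integral_hasDerivAt_right (aux_intable hQint ha hx)
  · exact ContinuousOn.stronglyMeasurableAtFilter isOpen_Ioo
      (fun y hy => (aux_cont_f hQc hQpos y hy).continuousWithinAt) x hx
  · exact aux_cont_f hQc hQpos x hx

lemma aux_int_bound {Q : ℝ → ℝ} {sstar u v : ℝ}
    (hQint : IntegrableOn (fun σ => 1 / Real.sqrt (2 * Q σ)) (Set.Ioo 0 sstar)
      (volume : Measure ℝ))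
    (hu : 0 < u) (huv : u ≤ v) (hv : v < sstar) :
    ∫ σ in u..v, 1 / Real.sqrt (2 * Q σ) ≤
      ∫ σ in Set.Ioo 0 sstar, 1 / Real.sqrt (2 * Q σ) := by
  rw [intervalIntegral.integral_of_le huv]
  apply setIntegral_mono_set hQint
  · exact Filter.Eventually.of_forall fun x => by positivity
  · apply HasSubset.Subset.eventuallyLE
    intro x hx
    exact ⟨lt_trans hu hx.1, lt_of_le_of_lt hx.2 hv⟩

lemma aux_cms {ν cm sstar : ℝ} {P : ℝ → ℝ} (hcm : 0 < cm) (hν1 : 0 ≤ ν)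
    (hsstar : 0 < sstar) (hP0 : P 0 = 0) (hPs : P sstar = 0)
    (hPd : ∀ σ ∈ Set.Icc (0 : ℝ) sstar,
      HasDerivAt P (ν * Real.sqrt (2 * P σ) + 1 - cm * σ) σ) :
    1 < cm * sstar := by
  by_contra hle
  push_neg at hle
  have hmono : StrictMonoOn P (Set.Icc 0 sstar) := by
    apply strictMonoOn_of_deriv_pos (convex_Icc _ _)
    · exact fun x hx => ((hPd x hx).continuousAt).continuousWithinAt
    · intro x hx
      rw [interior_Icc] at hx
      rw [(hPd x ⟨le_of_lt hx.1, le_of_lt hx.2⟩).deriv]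
      have h1 : cm * x < cm * sstar := by
        exact mul_lt_mul_of_pos_left hx.2 hcm
      nlinarith [mul_nonneg hν1 (Real.sqrt_nonneg (2 * P x))]
  have := hmono (Set.left_mem_Icc.2 (le_of_lt hsstar))
    (Set.right_mem_Icc.2 (le_of_lt hsstar)) hsstar
  rw [hP0, hPs] at this
  exact lt_irrefl 0 this

lemma aux_cont_ext {g : ℝ → ℝ} {m : ℝ} (hg : ContinuousAt g m) (h : g m < 0) :
    ∀ᶠ τ in nhdsWithin m (Set.Ioi m), g τ ≤ 0 := by
  have hpre : g ⁻¹' (Set.Iio 0) ∈ nhds m := hg (Iio_mem_nhds h)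
  filter_upwards [nhdsWithin_le_nhds hpre] with τ hτ
  exact le_of_lt hτ

lemma aux_last_time {F : ℝ → ℝ} {a b y : ℝ} (hab : a ≤ b)
    (hcont : ∀ t ∈ Set.Icc a b, ContinuousAt F t)
    (ha : y ≤ F a) (hb : F b < y) :
    ∃ t₁ ∈ Set.Ico a b, F t₁ = y ∧ ∀ τ ∈ Set.Ioc t₁ b, F τ < y := by
  set K : Set ℝ := {t ∈ Set.Icc a b | y ≤ F t} with hK
  have hKsub : K ⊆ Set.Icc a b := fun x hx => hx.1
  have hclosed : IsClosed K := by
    rw [← isSeqClosed_iff_isClosed]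
    intro xs x hxs hlim
    have hx1 : x ∈ Set.Icc a b :=
      isClosed_Icc.isSeqClosed (fun n => (hxs n).1) hlim
    refine ⟨hx1, ?_⟩
    exact le_of_tendsto_of_tendsto tendsto_const_nhds
      (((hcont x hx1).tendsto).comp hlim)
      (Filter.Eventually.of_forall fun n => (hxs n).2)
  have hKcpt : IsCompact K := isCompact_Icc.of_isClosed_subset hclosed hKsub
  have hKne : K.Nonempty := ⟨a, ⟨le_refl _, hab⟩, ha⟩
  set t₁ := sSup K with ht₁
  have ht₁K : t₁ ∈ K := hKcpt.sSup_mem hKne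
  have ht₁b : t₁ < b := lt_of_le_of_ne ht₁K.1.2
    (fun h => absurd (h ▸ ht₁K.2) (not_le.2 hb))
  have hlt : ∀ τ ∈ Set.Ioc t₁ b, F τ < y := by
    intro τ hτ
    by_contra h
    push_neg at h
    have : τ ∈ K := ⟨⟨le_trans ht₁K.1.1 (le_of_lt hτ.1), hτ.2⟩, h⟩
    exact absurd (le_csSup hKcpt.bddAbove this) (not_le.2 hτ.1)
  refine ⟨t₁, ⟨ht₁K.1.1, ht₁b⟩, ?_, hlt⟩
  refine le_antisymm ?_ ht₁K.2
  have htd : Filter.Tendsto F (nhdsWithin t₁ (Set.Ioi t₁)) (nhds (F t₁)) :=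
    ((hcont t₁ ⟨ht₁K.1.1, le_of_lt ht₁b⟩).continuousWithinAt).tendsto
  refine le_of_tendsto htd ?_
  filter_upwards [Ioc_mem_nhdsGT_of_mem ⟨le_refl _, ht₁b⟩] with τ hτ
  exact le_of_lt (hlt τ hτ)

lemma aux_deriv_nonpos_of_right {F : ℝ → ℝ} {d t₁ b : ℝ}
    (h : HasDerivAt F d t₁) (ht : t₁ < b)
    (hlt : ∀ τ ∈ Set.Ioc t₁ b, F τ ≤ F t₁) : d ≤ 0 := by
  have hslope := hasDerivAt_iff_tendsto_slope.1 h
  have hsub : nhdsWithin t₁ (Set.Ioi t₁) ≤ nhdsWithin t₁ {t₁}ᶜ := by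
    apply nhdsWithin_mono
    intro x hx
    simpa using (ne_of_gt hx)
  have htd : Filter.Tendsto (slope F t₁) (nhdsWithin t₁ (Set.Ioi t₁)) (nhds d) :=
    hslope.mono_left hsub
  refine le_of_tendsto htd ?_
  filter_upwards [Ioc_mem_nhdsGT_of_mem ⟨le_refl _, ht⟩] with τ hτ
  rw [slope_def_field]
  apply div_nonpos_of_nonpos_of_nonneg
  · linarith [hlt τ hτ]
  · linarith [hτ.1]

set_option maxHeartbeats 2000000 in
/-- Proposition 4.2 (finite-time breakdown in the underdamped regime `0 ≤ ν < 2√c₋`)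
for the repulsive phase-plane system with variable background `0 < c₋ ≤ c(t) ≤ c₊`:
if `s(0) > 0` and the initial point is NOT strictly inside the region
`{s < s*, −√(2P(s)) < w < √(2N(s))}`, then `s` vanishes at some finite positive
time. Here `P` solves `P' = ν√(2P) + 1 − c₋σ` with `P(0) = P(s*) = 0`, `P > 0` on
`(0,s*)`, and `N` solves `N' = −ν√(2N) + 1 − c₊σ` with `N(s*) = 0`, `N > 0` on
`[0,s*)`; both `1/√(2P)` and `1/√(2N)` are integrable on `(0,s*)`. -/
theorem stmt_14 (ν cm cp sstar : ℝ) (hcm : 0 < cm) (hcmp : cm ≤ cp)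
    (hν1 : 0 ≤ ν) (hν2 : ν < 2 * Real.sqrt cm) (hsstar : 0 < sstar)
    (c : ℝ → ℝ) (hc : ∀ t : ℝ, 0 ≤ t → cm ≤ c t ∧ c t ≤ cp)
    (P N : ℝ → ℝ)
    (hP0 : P 0 = 0) (hPs : P sstar = 0)
    (hPpos : ∀ σ ∈ Set.Ioo (0 : ℝ) sstar, 0 < P σ)
    (hPd : ∀ σ ∈ Set.Icc (0 : ℝ) sstar,
      HasDerivAt P (ν * Real.sqrt (2 * P σ) + 1 - cm * σ) σ)
    (hNs : N sstar = 0)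
    (hNpos : ∀ σ ∈ Set.Ico (0 : ℝ) sstar, 0 < N σ)
    (hNd : ∀ σ ∈ Set.Icc (0 : ℝ) sstar,
      HasDerivAt N (-ν * Real.sqrt (2 * N σ) + 1 - cp * σ) σ)
    (hPint : IntegrableOn (fun σ => 1 / Real.sqrt (2 * P σ)) (Set.Ioo 0 sstar)
      (volume : Measure ℝ))
    (hNint : IntegrableOn (fun σ => 1 / Real.sqrt (2 * N σ)) (Set.Ioo 0 sstar)
      (volume : Measure ℝ))
    (w s : ℝ → ℝ)
    (hw : ∀ t : ℝ, 0 ≤ t → HasDerivAt w (-ν * w t + 1 - c t * s t) t)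
    (hs : ∀ t : ℝ, 0 ≤ t → HasDerivAt s (w t) t)
    (hs0 : 0 < s 0)
    (hnot : ¬ (s 0 < sstar ∧ -Real.sqrt (2 * P (s 0)) < w 0 ∧
      w 0 < Real.sqrt (2 * N (s 0)))) :
    ∃ tstar : ℝ, 0 < tstar ∧ s tstar = 0 := by
  by_cases hall : ∀ t : ℝ, 0 < t → 0 < s t
  case neg =>
    -- there is a nonpositive value; use the intermediate value theorem
    push_neg at hall
    obtain ⟨T, hT0, hTle⟩ := hall
    have hcs : ContinuousOn s (Set.Icc 0 T) := fun x hx =>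
      ((hs x hx.1).continuousAt).continuousWithinAt
    have h0mem : (0:ℝ) ∈ Set.Icc (s T) (s 0) := ⟨hTle, le_of_lt hs0⟩
    obtain ⟨t', ht'mem, ht'⟩ := intermediate_value_Icc' (le_of_lt hT0) hcs h0mem
    refine ⟨t', ?_, ht'⟩
    rcases eq_or_lt_of_le ht'mem.1 with h | h
    · exfalso; rw [← h] at ht'; linarith
    · exact h
  case pos =>
    exfalso
    have hpos : ∀ t : ℝ, 0 ≤ t → 0 < s t := by
      intro t ht
      rcases eq_or_lt_of_le ht with h | h
      · rwa [← h]
      · exact hall t h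
    have hδ : 1 < cm * sstar := aux_cms hcm hν1 hsstar hP0 hPs hPd
    have hPnn : ∀ σ ∈ Set.Icc (0:ℝ) sstar, 0 ≤ P σ := by
      intro σ hσ
      rcases eq_or_lt_of_le hσ.1 with h | h
      · rw [← h, hP0]
      · rcases eq_or_lt_of_le hσ.2 with h' | h'
        · rw [h', hPs]
        · exact le_of_lt (hPpos σ ⟨h, h'⟩)
    have hNnn : ∀ σ ∈ Set.Icc (0:ℝ) sstar, 0 ≤ N σ := by
      intro σ hσ
      rcases eq_or_lt_of_le hσ.2 with h' | h'
      · rw [h', hNs]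
      · exact le_of_lt (hNpos σ ⟨hσ.1, h'⟩)
    have hPc : ∀ σ ∈ Set.Ioo (0:ℝ) sstar, ContinuousAt P σ := fun σ hσ =>
      (hPd σ ⟨le_of_lt hσ.1, le_of_lt hσ.2⟩).continuousAt
    have hNc : ∀ σ ∈ Set.Ioo (0:ℝ) sstar, ContinuousAt N σ := fun σ hσ =>
      (hNd σ ⟨le_of_lt hσ.1, le_of_lt hσ.2⟩).continuousAt
    have hNpos' : ∀ σ ∈ Set.Ioo (0:ℝ) sstar, 0 < N σ := fun σ hσ =>
      hNpos σ ⟨le_of_lt hσ.1, hσ.2⟩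
    -- Lemma A : descent to zero is inevitable — contradiction with hpos
    have lemA : ∀ t₀ : ℝ, 0 ≤ t₀ → s t₀ ≤ sstar →
        w t₀ ≤ -Real.sqrt (2 * P (s t₀)) → False := by
      intro t₀ ht₀ hsle hwle
      set E : ℝ → ℝ := fun t => (w t)^2/2 - P (s t) with hEdef
      set DE : ℝ → ℝ := fun t =>
        w t * (-(ν*(w t + Real.sqrt (2 * P (s t)))) + (cm - c t) * s t) with hDEdef
      have hEd : ∀ t : ℝ, 0 ≤ t → s t ∈ Set.Icc (0:ℝ) sstar →
          HasDerivAt E (DE t) t := by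
        intro t ht hst
        have h1 : HasDerivAt (fun u => (w u)^2/2)
            ((2 * w t ^ 1 * (-ν * w t + 1 - c t * s t))/2) t :=
          ((hw t ht).pow 2).div_const 2
        have h2 : HasDerivAt (fun u => P (s u))
            ((ν * Real.sqrt (2 * P (s t)) + 1 - cm * s t) * w t) t :=
          (hPd (s t) hst).comp t (hs t ht)
        have h3 := h1.sub h2
        refine h3.congr_deriv ?_
        simp only [hDEdef, pow_one]
        ring
      have hE0 : 0 ≤ E t₀ := by
        have h2P : 0 ≤ 2 * P (s t₀) := by
          have := hPnn (s t₀) ⟨le_of_lt (hpos t₀ ht₀), hsle⟩; linarith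
        have hsq := Real.sq_sqrt h2P
        have hnn := Real.sqrt_nonneg (2 * P (s t₀))
        simp only [hEdef]
        nlinarith
      have hDEnn : ∀ τ : ℝ, 0 ≤ τ → w τ ≤ 0 → s τ ∈ Set.Icc (0:ℝ) sstar →
          E τ ≤ 0 → 0 ≤ DE τ := by
        intro τ hτ0 hw0 hsτ hEτ
        have h2P : 0 ≤ 2 * P (s τ) := by have := hPnn (s τ) hsτ; linarith
        have hle2 : -(w τ) ≤ Real.sqrt (2 * P (s τ)) := by
          rw [show -(w τ) = Real.sqrt ((w τ)^2) by
            rw [Real.sqrt_sq_eq_abs, abs_of_nonpos hw0]]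
          apply Real.sqrt_le_sqrt
          simp only [hEdef] at hEτ; linarith
        have hbr : (-(ν*(w τ + Real.sqrt (2 * P (s τ)))) + (cm - c τ) * s τ) ≤ 0 := by
          have h1 : 0 ≤ w τ + Real.sqrt (2 * P (s τ)) := by linarith
          have h2 : cm ≤ c τ := (hc τ hτ0).1
          have h3 : 0 ≤ s τ := hsτ.1
          nlinarith [mul_nonneg hν1 h1, mul_nonneg (sub_nonneg.2 h2) h3]
        have h4 := mul_nonneg (neg_nonneg.2 hw0) (neg_nonneg.2 hbr)
        simp only [hDEdef]
        nlinarith [h4]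
      -- invariant : w stays nonpositive
      have hwneg : ∀ t ≥ t₀, w t ≤ 0 := by
        apply aux_inv (fun t ht => (hw t (le_trans ht₀ ht)).continuousAt)
        · have := Real.sqrt_nonneg (2 * P (s t₀)); linarith
        · intro m hm hmle
          have hm0 : (0:ℝ) ≤ m := le_trans ht₀ hm
          have hsm : ∀ τ ∈ Set.Icc t₀ m, s τ ≤ s t₀ := by
            intro τ hτ
            have := aux_ge_of_deriv_ge (κ := 0) (f := fun u => -s u)
              (D := fun u => -w u) hτ.1
              (fun u hu => (hs u (le_trans ht₀ hu.1)).neg)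
              (fun u hu => by
                have := hmle u ⟨hu.1, le_trans hu.2 hτ.2⟩
                show (0:ℝ) ≤ -w u; linarith)
            simp only [zero_mul] at this; linarith
          have hsmem : ∀ τ ∈ Set.Icc t₀ m, s τ ∈ Set.Icc (0:ℝ) sstar := by
            intro τ hτ
            exact ⟨le_of_lt (hpos τ (le_trans ht₀ hτ.1)),
              le_trans (hsm τ hτ) hsle⟩
          have hEnn : ∀ τ ∈ Set.Icc t₀ m, 0 ≤ E τ := by
            apply aux_nonneg_preserve
              (fun τ hτ => hEd τ (le_trans ht₀ hτ.1) (hsmem τ hτ)) hE0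
            intro τ hτ hEτ
            have hτ' : τ ∈ Set.Icc t₀ m := ⟨le_of_lt hτ.1, le_of_lt hτ.2⟩
            exact hDEnn τ (le_trans ht₀ hτ'.1) (hmle τ hτ') (hsmem τ hτ') hEτ
          rcases lt_or_eq_of_le (hmle m ⟨hm, le_refl m⟩) with hwm | hwm
          · exact aux_cont_ext (hw m hm0).continuousAt hwm
          · have hsm' : s m = sstar := by
              by_contra hne
              have hsmlt : s m < sstar :=
                lt_of_le_of_ne (hsmem m ⟨hm, le_refl m⟩).2 hne
              have hPp : 0 < P (s m) := hPpos (s m) ⟨hpos m hm0, hsmlt⟩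
              have hEm := hEnn m ⟨hm, le_refl m⟩
              simp only [hEdef] at hEm
              rw [hwm] at hEm
              norm_num at hEm
              nlinarith
            have hder : (-ν * w m + 1 - c m * s m) < 0 := by
              rw [hwm, hsm']
              have h2 : cm ≤ c m := (hc m hm0).1
              have : cm * sstar ≤ c m * sstar :=
                mul_le_mul_of_nonneg_right h2 (le_of_lt hsstar)
              nlinarith
            have hev := aux_right_lt (hw m hm0) hder
            filter_upwards [hev] with τ hτ
            rw [hwm] at hτ; exact le_of_lt hτ
      -- global consequences
      have hsmono : ∀ t₁ t₂ : ℝ, t₀ ≤ t₁ → t₁ ≤ t₂ → s t₂ ≤ s t₁ := by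
        intro t₁ t₂ h1 h2
        have := aux_ge_of_deriv_ge (κ := 0) (f := fun u => -s u)
          (D := fun u => -w u) h2
          (fun u hu => (hs u (le_trans ht₀ (le_trans h1 hu.1))).neg)
          (fun u hu => by have := hwneg u (le_trans h1 hu.1)
                          show (0:ℝ) ≤ -w u; linarith)
        simp only [zero_mul] at this; linarith
      have hsmem : ∀ t ≥ t₀, s t ∈ Set.Icc (0:ℝ) sstar := fun t ht =>
        ⟨le_of_lt (hpos t (le_trans ht₀ ht)),
          le_trans (hsmono t₀ t (le_refl _) ht) hsle⟩
      have hEnn : ∀ t ≥ t₀, 0 ≤ E t := by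
        intro t ht
        have := aux_nonneg_preserve (a := t₀) (b := t)
          (fun τ hτ => hEd τ (le_trans ht₀ hτ.1) (hsmem τ hτ.1)) hE0
          (fun τ hτ hEτ => hDEnn τ (le_trans ht₀ (le_of_lt hτ.1))
            (hwneg τ (le_of_lt hτ.1)) (hsmem τ (le_of_lt hτ.1)) hEτ)
        exact this t ⟨ht, le_refl t⟩
      have hwle' : ∀ t ≥ t₀, w t ≤ -Real.sqrt (2 * P (s t)) := by
        intro t ht
        have hEt := hEnn t ht
        have hw0 := hwneg t ht
        have h2P : 0 ≤ 2 * P (s t) := by have := hPnn (s t) (hsmem t ht); linarith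
        have : Real.sqrt (2 * P (s t)) ≤ -(w t) := by
          rw [show -(w t) = Real.sqrt ((w t)^2) by
            rw [Real.sqrt_sq_eq_abs, abs_of_nonpos hw0]]
          apply Real.sqrt_le_sqrt
          simp only [hEdef] at hEt; linarith
        linarith
      -- find a time with s strictly below sstar
      obtain ⟨t₁, ht₁, hst₁⟩ : ∃ t₁ ≥ t₀, s t₁ < sstar := by
        rcases lt_or_eq_of_le hsle with h | h
        · exact ⟨t₀, le_refl _, h⟩
        · obtain ⟨τ, hτ0, hwτ⟩ : ∃ τ ≥ t₀, w τ < 0 := by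
            rcases lt_or_eq_of_le (hwneg t₀ (le_refl _)) with h' | h'
            · exact ⟨t₀, le_refl _, h'⟩
            · have hder : (-ν * w t₀ + 1 - c t₀ * s t₀) < 0 := by
                rw [← h', h]
                have h2 : cm ≤ c t₀ := (hc t₀ ht₀).1
                have : cm * sstar ≤ c t₀ * sstar :=
                  mul_le_mul_of_nonneg_right h2 (le_of_lt hsstar)
                nlinarith
              obtain ⟨τ, hτ1, hτ2⟩ :=
                ((aux_right_lt (hw t₀ ht₀) hder).and self_mem_nhdsWithin).exists
              refine ⟨τ, le_of_lt hτ2, ?_⟩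
              rw [h'] at hτ1
              exact hτ1
          obtain ⟨t₁, h1, h2⟩ :=
            ((aux_right_lt (hs τ (le_trans ht₀ hτ0)) hwτ).and self_mem_nhdsWithin).exists
          refine ⟨t₁, le_trans hτ0 (le_of_lt h2), ?_⟩
          calc s t₁ < s τ := h1
          _ ≤ s t₀ := hsmono t₀ τ (le_refl _) hτ0
          _ = sstar := h
      -- final time estimate
      have hC0 : 0 ≤ ∫ σ in Set.Ioo 0 sstar, 1 / Real.sqrt (2 * P σ) :=
        setIntegral_nonneg measurableSet_Ioo (fun x _ => by positivity)
      set C := ∫ σ in Set.Ioo 0 sstar, 1 / Real.sqrt (2 * P σ) with hCdef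
      set T := t₁ + C + 1 with hTdef
      have hT1 : t₁ ≤ T := by simp only [hTdef]; linarith
      have hsmemI : ∀ t, t₁ ≤ t → s t ∈ Set.Ioo (0:ℝ) sstar := fun t ht =>
        ⟨hpos t (le_trans (le_trans ht₀ ht₁) ht),
          lt_of_le_of_lt (hsmono t₁ t ht₁ ht) hst₁⟩
      have hhd : ∀ t ∈ Set.Icc t₁ T,
          HasDerivAt (fun u => ∫ σ in (s u)..(s t₁), 1 / Real.sqrt (2 * P σ))
          (-(1 / Real.sqrt (2 * P (s t))) * w t) t := by
        intro t ht
        have h1 := aux_ftc_left hPc hPpos hPint (hsmemI t ht.1)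
          (hsmemI t₁ (le_refl _))
        have h2 := h1.comp t (hs t (le_trans (le_trans ht₀ ht₁) ht.1))
        simpa [Function.comp_def] using h2
      have hge1 : ∀ t ∈ Set.Icc t₁ T,
          (1:ℝ) ≤ -(1 / Real.sqrt (2 * P (s t))) * w t := by
        intro t ht
        have hmem := hsmemI t ht.1
        have hsq : 0 < Real.sqrt (2 * P (s t)) :=
          Real.sqrt_pos.2 (by linarith [hPpos (s t) hmem])
        have hwt := hwle' t (le_trans ht₁ ht.1)
        have heq : -(1 / Real.sqrt (2 * P (s t))) * w t
            = (-(w t)) / Real.sqrt (2 * P (s t)) := by ring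
        rw [heq, le_div_iff₀ hsq]
        linarith
      have hkey := aux_ge_of_deriv_ge hT1 hhd hge1
      rw [intervalIntegral.integral_same] at hkey
      have hbd : (∫ σ in (s T)..(s t₁), 1 / Real.sqrt (2 * P σ)) ≤ C :=
        aux_int_bound hPint (hpos T (le_trans (le_trans ht₀ ht₁) hT1))
          (hsmono t₁ T ht₁ hT1) hst₁
      simp only [hTdef] at hkey
      linarith
    -- Lemma C : from the region s ≥ sstar the trajectory crosses s = sstar downward
    have lemC : ∀ t₀ : ℝ, 0 ≤ t₀ → sstar ≤ s t₀ → False := by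
      intro t₀ ht₀ hss
      -- Step 1: the trajectory must come strictly below sstar
      have hcross : ∃ t₂, t₀ ≤ t₂ ∧ s t₂ < sstar := by
        by_contra hge
        push_neg at hge
        -- u = w·exp(νt) decreases at a definite rate
        set u : ℝ → ℝ := fun t => w t * Real.exp (ν * t) with hudef
        have hud : ∀ t, 0 ≤ t →
            HasDerivAt u ((1 - c t * s t) * Real.exp (ν * t)) t := by
          intro t ht
          have h1 : HasDerivAt (fun x : ℝ => Real.exp (ν * x))
              (Real.exp (ν * t) * ν) t :=
            (Real.hasDerivAt_exp (ν * t)).comp t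
              (by simpa using (hasDerivAt_id t).const_mul ν)
          have h2 := (hw t ht).mul h1
          refine h2.congr_deriv ?_
          ring
        have hκ : ∀ t, t₀ ≤ t → (1 - c t * s t) * Real.exp (ν * t) ≤
            -((cm * sstar - 1) * Real.exp (ν * t₀)) := by
          intro t ht
          have h0t : (0:ℝ) ≤ t := le_trans ht₀ ht
          have h1 : cm * sstar ≤ c t * s t :=
            mul_le_mul (hc t h0t).1 (hge t ht) (le_of_lt hsstar)
              (le_trans (le_of_lt hcm) (hc t h0t).1)
          have h2 : Real.exp (ν * t₀) ≤ Real.exp (ν * t) :=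
            Real.exp_le_exp.2 (mul_le_mul_of_nonneg_left ht hν1)
          have h3 : 1 - c t * s t ≤ 1 - cm * sstar := by linarith
          have he1 : (0:ℝ) < Real.exp (ν * t) := Real.exp_pos _
          nlinarith
        set κ := (cm * sstar - 1) * Real.exp (ν * t₀) with hκdef
        have hκpos : 0 < κ := mul_pos (by linarith) (Real.exp_pos _)
        obtain ⟨T₃, hT₃0, hwT₃⟩ : ∃ T₃, t₀ ≤ T₃ ∧ w T₃ < 0 := by
          set T₃ := t₀ + (|u t₀| + 1) / κ with hT3def
          have hle : t₀ ≤ T₃ := by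
            have : (0:ℝ) ≤ (|u t₀| + 1) / κ :=
              div_nonneg (by positivity) (le_of_lt hκpos)
            simp only [hT3def]; linarith
          have hkey := aux_ge_of_deriv_ge (κ := κ) (f := fun t => -u t)
            (D := fun t => -((1 - c t * s t) * Real.exp (ν * t))) hle
            (fun τ hτ => (hud τ (le_trans ht₀ hτ.1)).neg)
            (fun τ hτ => by
              have := hκ τ hτ.1
              show κ ≤ -((1 - c τ * s τ) * Real.exp (ν * τ)); linarith)
          have hval : κ * (T₃ - t₀) = |u t₀| + 1 := by
            simp only [hT3def]
            field_simp
            ring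
          have hu3 : u T₃ < 0 := by
            have ha1 := le_abs_self (u t₀)
            have ha2 := abs_nonneg (u t₀)
            have hkey' : κ * (T₃ - t₀) ≤ -u T₃ - -u t₀ := hkey
            linarith [hkey', hval]
          refine ⟨T₃, hle, ?_⟩
          by_contra hwn
          push_neg at hwn
          have : 0 ≤ u T₃ := mul_nonneg hwn (le_of_lt (Real.exp_pos _))
          linarith
        -- w stays below -β afterwards
        set β := min ((cm * sstar - 1) / (ν + 1)) (-w T₃) with hβdef
        have hβpos : 0 < β := lt_min (div_pos (by linarith) (by linarith))
          (by linarith)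
        have hwβ : ∀ t ≥ T₃, w t + β ≤ 0 := by
          apply aux_inv (g := fun t => w t + β)
          · exact fun t ht =>
              ((hw t (le_trans (le_trans ht₀ hT₃0) ht)).continuousAt).add
                continuousAt_const
          · have : β ≤ -w T₃ := min_le_right _ _
            show w T₃ + β ≤ 0; linarith
          · intro m hm hmle
            have hm0 : (0:ℝ) ≤ m := le_trans (le_trans ht₀ hT₃0) hm
            have hwm := hmle m ⟨hm, le_refl m⟩
            rcases lt_or_eq_of_le hwm with hwm' | hwm'
            · exact aux_cont_ext (((hw m hm0).continuousAt).add
                continuousAt_const) hwm'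
            · have hwmeq : w m = -β := by linarith [hwm']
              have hder : (-ν * w m + 1 - c m * s m) < 0 := by
                rw [hwmeq]
                have h1 : cm * sstar ≤ c m * s m :=
                  mul_le_mul (hc m hm0).1 (hge m (le_trans hT₃0 hm))
                    (le_of_lt hsstar)
                    (le_trans (le_of_lt hcm) (hc m hm0).1)
                have h2 : β ≤ (cm * sstar - 1) / (ν + 1) := min_le_left _ _
                have h3 : ν * β ≤ ν * ((cm * sstar - 1) / (ν + 1)) :=
                  mul_le_mul_of_nonneg_left h2 hν1
                have h4 : ν * ((cm * sstar - 1) / (ν + 1)) < cm * sstar - 1 := by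
                  rw [mul_div_assoc']
                  rw [div_lt_iff₀ (by linarith : (0:ℝ) < ν + 1)]
                  nlinarith
                linarith
              have hev := aux_right_lt (hw m hm0) hder
              filter_upwards [hev] with τ hτ
              rw [hwmeq] at hτ
              show w τ + β ≤ 0; linarith
        -- s decreases linearly : contradiction with s ≥ sstar
        set T := T₃ + (s T₃ - sstar + 1) / β with hTdef
        have hTle : T₃ ≤ T := by
          have h1 : (0:ℝ) ≤ s T₃ - sstar + 1 := by
            have := hge T₃ hT₃0; linarith
          have := div_nonneg h1 (le_of_lt hβpos)
          simp only [hTdef]; linarith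
        have hkey := aux_ge_of_deriv_ge (κ := β) (f := fun t => -s t)
          (D := fun t => -w t) hTle
          (fun τ hτ => (hs τ (le_trans (le_trans ht₀ hT₃0) hτ.1)).neg)
          (fun τ hτ => by
            have := hwβ τ hτ.1
            show β ≤ -w τ; linarith)
        have hval : β * (T - T₃) = s T₃ - sstar + 1 := by
          simp only [hTdef]
          field_simp
          ring
        have hgeT := hge T (le_trans hT₃0 hTle)
        have hkey' : β * (T - T₃) ≤ -s T - -s T₃ := hkey
        linarith [hkey', hval]
      -- Step 2: the first crossing of sstar
      obtain ⟨t₂, ht₂0, hst₂⟩ := hcross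
      have hcont : ∀ t ∈ Set.Icc t₀ t₂, ContinuousAt s t := fun t ht =>
        (hs t (le_trans ht₀ ht.1)).continuousAt
      have ht₀2 : t₀ ≤ t₂ := ht₂0
      obtain ⟨t₁, ht₁mem, ht₁eq, ht₁lt⟩ :=
        aux_last_time ht₀2 hcont hss hst₂
      have ht₁0 : (0:ℝ) ≤ t₁ := le_trans ht₀ ht₁mem.1
      have hw₁ : w t₁ ≤ 0 := by
        apply aux_deriv_nonpos_of_right (hs t₁ ht₁0) ht₁mem.2
        intro τ hτ
        rw [ht₁eq]
        exact le_of_lt (ht₁lt τ hτ)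
      exact lemA t₁ ht₁0 (le_of_eq ht₁eq) (by
        rw [ht₁eq, hPs]
        simpa using hw₁)
    -- Lemma B : from w ≥ √(2N(s)), s < sstar, the trajectory reaches s = sstar
    have lemB : s 0 < sstar → Real.sqrt (2 * N (s 0)) ≤ w 0 → False := by
      intro hs0lt hwge
      by_cases hreach : ∃ t, 0 ≤ t ∧ sstar ≤ s t
      · obtain ⟨t, ht, hst⟩ := hreach
        exact lemC t ht hst
      push_neg at hreach
      set F : ℝ → ℝ := fun t => (w t)^2/2 - N (s t) with hFdef
      set DF : ℝ → ℝ := fun t =>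
        w t * (-(ν*(w t - Real.sqrt (2 * N (s t)))) + (cp - c t) * s t) with hDFdef
      have hFd : ∀ t : ℝ, 0 ≤ t → s t ∈ Set.Icc (0:ℝ) sstar →
          HasDerivAt F (DF t) t := by
        intro t ht hst
        have h1 : HasDerivAt (fun u => (w u)^2/2)
            ((2 * w t ^ 1 * (-ν * w t + 1 - c t * s t))/2) t :=
          ((hw t ht).pow 2).div_const 2
        have h2 : HasDerivAt (fun u => N (s u))
            ((-ν * Real.sqrt (2 * N (s t)) + 1 - cp * s t) * w t) t :=
          (hNd (s t) hst).comp t (hs t ht)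
        have h3 := h1.sub h2
        refine h3.congr_deriv ?_
        simp only [hDFdef, pow_one]
        ring
      have hF0 : 0 ≤ F 0 := by
        have h2N : 0 ≤ 2 * N (s 0) := by
          have := hNnn (s 0) ⟨le_of_lt hs0, le_of_lt hs0lt⟩; linarith
        have hsq := Real.sq_sqrt h2N
        have hnn := Real.sqrt_nonneg (2 * N (s 0))
        simp only [hFdef]
        nlinarith
      have hDFnn : ∀ τ : ℝ, 0 ≤ τ → 0 ≤ w τ → s τ ∈ Set.Icc (0:ℝ) sstar →
          F τ ≤ 0 → 0 ≤ DF τ := by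
        intro τ hτ0 hw0 hsτ hFτ
        have h2N : 0 ≤ 2 * N (s τ) := by have := hNnn (s τ) hsτ; linarith
        have hle2 : w τ ≤ Real.sqrt (2 * N (s τ)) := by
          rw [show w τ = Real.sqrt ((w τ)^2) by
            rw [Real.sqrt_sq_eq_abs, abs_of_nonneg hw0]]
          apply Real.sqrt_le_sqrt
          simp only [hFdef] at hFτ; linarith
        have hbr : 0 ≤ (-(ν*(w τ - Real.sqrt (2 * N (s τ)))) + (cp - c τ) * s τ) := by
          have h1 : w τ - Real.sqrt (2 * N (s τ)) ≤ 0 := by linarith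
          have h2 : c τ ≤ cp := (hc τ hτ0).2
          have h3 : 0 ≤ s τ := hsτ.1
          nlinarith [mul_nonneg hν1 (neg_nonneg.2 h1),
            mul_nonneg (sub_nonneg.2 h2) h3]
        simp only [hDFdef]
        exact mul_nonneg hw0 hbr
      -- invariant : w stays nonnegative
      have hwpos : ∀ t ≥ (0:ℝ), -(w t) ≤ 0 := by
        apply aux_inv (g := fun t => -(w t))
        · exact fun t ht => ((hw t ht).continuousAt).neg
        · have := Real.sqrt_nonneg (2 * N (s 0))
          show -(w 0) ≤ 0; linarith
        · intro m hm hmle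
          have hwge0 : ∀ τ ∈ Set.Icc (0:ℝ) m, 0 ≤ w τ := by
            intro τ hτ
            have := hmle τ hτ
            linarith
          have hsup : ∀ τ ∈ Set.Icc (0:ℝ) m, s 0 ≤ s τ := by
            intro τ hτ
            have := aux_ge_of_deriv_ge (κ := 0) (f := s) (D := w) hτ.1
              (fun x hx => hs x hx.1)
              (fun x hx => hwge0 x ⟨hx.1, le_trans hx.2 hτ.2⟩)
            linarith
          have hsmem : ∀ τ ∈ Set.Icc (0:ℝ) m, s τ ∈ Set.Icc (0:ℝ) sstar :=
            fun τ hτ => ⟨le_of_lt (hpos τ hτ.1), le_of_lt (hreach τ hτ.1)⟩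
          have hFnn : ∀ τ ∈ Set.Icc (0:ℝ) m, 0 ≤ F τ := by
            apply aux_nonneg_preserve
              (fun τ hτ => hFd τ hτ.1 (hsmem τ hτ)) hF0
            intro τ hτ hFτ
            have hτ' : τ ∈ Set.Icc (0:ℝ) m := ⟨le_of_lt hτ.1, le_of_lt hτ.2⟩
            exact hDFnn τ hτ'.1 (hwge0 τ hτ') (hsmem τ hτ') hFτ
          have hNm : 0 < N (s m) := hNpos (s m)
            ⟨le_of_lt (hpos m hm), hreach m hm⟩
          have hwm : Real.sqrt (2 * N (s m)) ≤ w m := by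
            have hFm := hFnn m ⟨hm, le_refl m⟩
            have hw0 := hwge0 m ⟨hm, le_refl m⟩
            rw [show w m = Real.sqrt ((w m)^2) by
              rw [Real.sqrt_sq_eq_abs, abs_of_nonneg hw0]]
            apply Real.sqrt_le_sqrt
            simp only [hFdef] at hFm; linarith
          have hwmpos : 0 < w m :=
            lt_of_lt_of_le (Real.sqrt_pos.2 (by linarith)) hwm
          exact aux_cont_ext (((hw m hm).continuousAt).neg) (by
            show -(w m) < 0; linarith)
      have hwnn : ∀ t ≥ (0:ℝ), 0 ≤ w t := by
        intro t ht; have := hwpos t ht; linarith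
      have hsup : ∀ t₁ t₂ : ℝ, 0 ≤ t₁ → t₁ ≤ t₂ → s t₁ ≤ s t₂ := by
        intro t₁ t₂ h1 h2
        have := aux_ge_of_deriv_ge (κ := 0) (f := s) (D := w) h2
          (fun x hx => hs x (le_trans h1 hx.1))
          (fun x hx => hwnn x (le_trans h1 hx.1))
        linarith
      have hsmem : ∀ t ≥ (0:ℝ), s t ∈ Set.Icc (0:ℝ) sstar := fun t ht =>
        ⟨le_of_lt (hpos t ht), le_of_lt (hreach t ht)⟩
      have hFnn : ∀ t ≥ (0:ℝ), 0 ≤ F t := by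
        intro t ht
        have := aux_nonneg_preserve (a := 0) (b := t)
          (fun τ hτ => hFd τ hτ.1 (hsmem τ hτ.1)) hF0
          (fun τ hτ hFτ => hDFnn τ (le_of_lt hτ.1) (hwnn τ (le_of_lt hτ.1))
            (hsmem τ (le_of_lt hτ.1)) hFτ)
        exact this t ⟨ht, le_refl t⟩
      have hwge' : ∀ t ≥ (0:ℝ), Real.sqrt (2 * N (s t)) ≤ w t := by
        intro t ht
        have hFt := hFnn t ht
        have hw0 := hwnn t ht
        rw [show w t = Real.sqrt ((w t)^2) by
          rw [Real.sqrt_sq_eq_abs, abs_of_nonneg hw0]]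
        apply Real.sqrt_le_sqrt
        simp only [hFdef] at hFt; linarith
      -- time estimate
      have hC0 : 0 ≤ ∫ σ in Set.Ioo 0 sstar, 1 / Real.sqrt (2 * N σ) :=
        setIntegral_nonneg measurableSet_Ioo (fun x _ => by positivity)
      set C := ∫ σ in Set.Ioo 0 sstar, 1 / Real.sqrt (2 * N σ) with hCdef
      set T := C + 1 with hTdef
      have hT1 : (0:ℝ) ≤ T := by simp only [hTdef]; linarith
      have hsmemI : ∀ t, (0:ℝ) ≤ t → s t ∈ Set.Ioo (0:ℝ) sstar := fun t ht =>
        ⟨hpos t ht, hreach t ht⟩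
      have hhd : ∀ t ∈ Set.Icc (0:ℝ) T,
          HasDerivAt (fun u => ∫ σ in (s 0)..(s u), 1 / Real.sqrt (2 * N σ))
          ((1 / Real.sqrt (2 * N (s t))) * w t) t := by
        intro t ht
        have h1 := aux_ftc_right hNc hNpos' hNint (hsmemI t ht.1)
          (hsmemI 0 (le_refl _))
        have h2 := h1.comp t (hs t ht.1)
        simpa [Function.comp_def] using h2
      have hge1 : ∀ t ∈ Set.Icc (0:ℝ) T,
          (1:ℝ) ≤ (1 / Real.sqrt (2 * N (s t))) * w t := by
        intro t ht
        have hmem := hsmemI t ht.1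
        have hsq : 0 < Real.sqrt (2 * N (s t)) :=
          Real.sqrt_pos.2 (by linarith [hNpos' (s t) hmem])
        have hwt := hwge' t ht.1
        have heq : (1 / Real.sqrt (2 * N (s t))) * w t
            = w t / Real.sqrt (2 * N (s t)) := by ring
        rw [heq, le_div_iff₀ hsq]
        linarith
      have hkey := aux_ge_of_deriv_ge hT1 hhd hge1
      rw [intervalIntegral.integral_same] at hkey
      have hbd : (∫ σ in (s 0)..(s T), 1 / Real.sqrt (2 * N σ)) ≤ C :=
        aux_int_bound hNint hs0 (hsup 0 T (le_refl _) hT1) (hreach T hT1)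
      simp only [hTdef] at hkey
      linarith
    -- main case analysis
    by_cases h1 : s 0 < sstar
    · rcases le_or_gt (w 0) (-Real.sqrt (2 * P (s 0))) with h2 | h2
      · exact lemA 0 (le_refl _) (le_of_lt h1) h2
      · rcases le_or_gt (Real.sqrt (2 * N (s 0))) (w 0) with h3 | h3
        · exact lemB h1 h3
        · exact hnot ⟨h1, h2, h3⟩
    · exact lemC 0 (le_refl _) (not_lt.1 h1)
end

section
/- Let ν ≥ 0 and c₋ > 0, let c : [0,∞) → ℝ satisfy c(τ) ≥ c₋ for all τ, and let w, s : [0,∞) → ℝ be differentiable with w'(τ) = −ν·w(τ) + 1 − c(τ)·s(τ) and s'(τ) = w(τ) for all τ ≥ 0. If at a time t ≥ 0 one has s(t) ≥ 1/c₋ and w(t) > 0, then the function θ(τ) := arctan(√c₋·(s(τ) − 1/c₋)/w(τ)) is differentiable at t with θ'(t) ≥ √c₋. -/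
open Real

/-- Angular Lyapunov function estimate used in the proof of Proposition 4.2: along
the repulsive phase-plane system with background `c(τ) ≥ c₋ > 0`, if at time `t`
one has `s(t) ≥ 1/c₋` and `w(t) > 0`, then
`θ(τ) = arctan(√c₋·(s(τ) − 1/c₋)/w(τ))` is differentiable at `t` with
`θ'(t) ≥ √c₋`. -/
theorem stmt_15 (ν cm : ℝ) (hν : 0 ≤ ν) (hcm : 0 < cm)
    (c : ℝ → ℝ) (hc : ∀ τ : ℝ, 0 ≤ τ → cm ≤ c τ)
    (w s : ℝ → ℝ)
    (hw : ∀ τ : ℝ, 0 ≤ τ → HasDerivAt w (-ν * w τ + 1 - c τ * s τ) τ)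
    (hs : ∀ τ : ℝ, 0 ≤ τ → HasDerivAt s (w τ) τ)
    (t : ℝ) (ht : 0 ≤ t) (hst : 1 / cm ≤ s t) (hwt : 0 < w t) :
    ∃ θ' : ℝ, Real.sqrt cm ≤ θ' ∧
      HasDerivAt (fun τ => Real.arctan (Real.sqrt cm * (s τ - 1 / cm) / w τ)) θ' t := by
  set a := Real.sqrt cm with ha_def
  have ha : 0 < a := Real.sqrt_pos.mpr hcm
  have ha2 : a ^ 2 = cm := Real.sq_sqrt hcm.le
  have hw' := hw t ht
  have hs' := hs t ht
  have h1 : HasDerivAt (fun τ => a * (s τ - 1 / cm)) (a * w t) t :=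
    ((hs'.sub_const _).const_mul a)
  have h2 := (h1.div hw' (ne_of_gt hwt)).arctan
  refine ⟨_, ?_, h2⟩
  set u := s t - 1 / cm with hu_def
  have hu : 0 ≤ u := sub_nonneg.mpr hst
  set W := w t with hW_def
  set W' := -ν * w t + 1 - c t * s t with hW'_def
  have hct := hc t ht
  have hs0 : 0 < s t := lt_of_lt_of_le (by positivity) hst
  have hW' : W' ≤ -cm * u := by
    have h3 : cm * s t ≤ c t * s t := mul_le_mul_of_nonneg_right hct hs0.le
    have h4 : cm * s t = cm * u + 1 := by
      rw [hu_def, mul_sub, mul_one_div_cancel hcm.ne']; ring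
    nlinarith [mul_nonneg hν hwt.le]
  have hD : 0 < W ^ 2 + cm * u ^ 2 := by positivity
  have key : 1 / (1 + (a * u / W) ^ 2) * ((a * W * W - a * u * W') / W ^ 2)
      = a * (W * W - u * W') / (W ^ 2 + cm * u ^ 2) := by
    rw [div_pow, ← ha2]
    field_simp
  rw [show ((fun τ => a * (s τ - 1 / cm)) / w) t = a * u / W from rfl, key]
  rw [le_div_iff₀ hD]
  have hineq : cm * u ^ 2 ≤ -(u * W') := by nlinarith
  nlinarith [ha.le, mul_le_mul_of_nonneg_left hineq ha.le]
end

section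
/- Let 0 < c₋ ≤ c₊ and ν ≥ 2√c₊, and let c : [0,∞) → ℝ satisfy c₋ ≤ c(t) ≤ c₊ for all t ≥ 0. Let P : [0,∞) → ℝ be continuously differentiable with P(0) = 0, P(σ) > 0 for all σ > 0, and P'(σ) = ν·√(2P(σ)) + 1 − c₊·σ for all σ ≥ 0. Let w, s : [0,∞) → ℝ be differentiable with w'(t) = −ν·w(t) + 1 − c(t)·s(t) and s'(t) = w(t) for all t ≥ 0. If s(0) > 0 and w(0) > −√(2P(s(0))), then for all t ≥ 0 one has s(t) > 0 and w(t) > −√(2P(s(t))). -/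
open Real Set Filter Topology

/-- Proposition 4.3 (invariance of the sub-critical region in the overdamped regime
`ν ≥ 2√c₊`) for the repulsive phase-plane system with variable background
`0 < c₋ ≤ c(t) ≤ c₊`: if `s(0) > 0` and `w(0) > −√(2P(s(0)))`, where `P` solves
`P' = ν√(2P) + 1 − c₊σ`, `P(0) = 0`, `P > 0` on `(0,∞)`, then `s(t) > 0` and
`w(t) > −√(2P(s(t)))` for all `t ≥ 0`. -/
theorem stmt_16 (ν cm cp : ℝ) (hcm : 0 < cm) (hcmp : cm ≤ cp)
    (hν : 2 * Real.sqrt cp ≤ ν)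
    (c : ℝ → ℝ) (hc : ∀ t : ℝ, 0 ≤ t → cm ≤ c t ∧ c t ≤ cp)
    (P : ℝ → ℝ) (hP0 : P 0 = 0) (hPpos : ∀ σ : ℝ, 0 < σ → 0 < P σ)
    (hPd : ∀ σ : ℝ, 0 ≤ σ →
      HasDerivAt P (ν * Real.sqrt (2 * P σ) + 1 - cp * σ) σ)
    (w s : ℝ → ℝ)
    (hw : ∀ t : ℝ, 0 ≤ t → HasDerivAt w (-ν * w t + 1 - c t * s t) t)
    (hs : ∀ t : ℝ, 0 ≤ t → HasDerivAt s (w t) t)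
    (hs0 : 0 < s 0) (hw0 : -Real.sqrt (2 * P (s 0)) < w 0) :
    ∀ t : ℝ, 0 ≤ t → 0 < s t ∧ -Real.sqrt (2 * P (s t)) < w t := by
  have hcp : 0 < cp := lt_of_lt_of_le hcm hcmp
  set B : ℝ → ℝ := fun t => w t + Real.sqrt (2 * P (s t)) with hBdef
  have hBt : ∀ t, B t = w t + Real.sqrt (2 * P (s t)) := fun _ => rfl
  have hB0 : 0 < B 0 := by rw [hBt]; linarith
  have hscont : ∀ t : ℝ, 0 ≤ t → ContinuousAt s t := fun t ht => (hs t ht).continuousAt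
  have hwcont : ∀ t : ℝ, 0 ≤ t → ContinuousAt w t := fun t ht => (hw t ht).continuousAt
  have hBcont : ∀ t : ℝ, 0 ≤ t → 0 ≤ s t → ContinuousAt B t := by
    intro t ht hst
    have h1 : ContinuousAt (fun u => 2 * P (s u)) t :=
      (continuousAt_const.mul (((hPd (s t) hst).continuousAt).comp (hscont t ht)))
    exact (hwcont t ht).add (Real.continuous_sqrt.continuousAt.comp h1)
  have goodiff : ∀ t : ℝ, (0 < B t ↔ -Real.sqrt (2 * P (s t)) < w t) := by
    intro t; rw [hBt]; constructor <;> intro <;> linarith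
  intro t0 ht0
  by_contra hbad
  set A : Set ℝ := {t | t ∈ Set.Icc 0 t0 ∧ ¬ (0 < s t ∧ 0 < B t)} with hAdef
  have ht0A : t0 ∈ A := by
    refine ⟨⟨ht0, le_refl _⟩, ?_⟩
    rintro ⟨h1, h2⟩
    exact hbad ⟨h1, (goodiff t0).1 h2⟩
  have hAne : A.Nonempty := ⟨t0, ht0A⟩
  have hAbdd : BddBelow A := ⟨0, fun a ha => ha.1.1⟩
  set T : ℝ := sInf A with hTdef
  have hT0 : 0 ≤ T := le_csInf hAne (fun a ha => ha.1.1)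
  have hTt0 : T ≤ t0 := csInf_le hAbdd ht0A
  -- good on [0, T)
  have hgood : ∀ t : ℝ, 0 ≤ t → t < T → 0 < s t ∧ 0 < B t := by
    intro t ht htT
    by_contra h
    have : t ∈ A := ⟨⟨ht, le_trans htT.le hTt0⟩, h⟩
    have := csInf_le hAbdd this
    linarith
  -- not good at T
  have hnotgoodT : ¬ (0 < s T ∧ 0 < B T) := by
    rintro ⟨h1, h2⟩
    have hbc : ContinuousAt B T := hBcont T hT0 h1.le
    have hev : ∀ᶠ t in 𝓝 T, 0 < s t ∧ 0 < B t :=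
      ((hscont T hT0).tendsto.eventually (eventually_gt_nhds h1)).and
        (hbc.tendsto.eventually (eventually_gt_nhds h2))
    rcases Metric.eventually_nhds_iff.1 hev with ⟨ε, hε, hball⟩
    obtain ⟨a, haA, haε⟩ := exists_lt_of_csInf_lt hAne (by linarith : sInf A < T + ε)
    have haT : T ≤ a := csInf_le hAbdd haA
    have : 0 < s a ∧ 0 < B a := hball (by rw [Real.dist_eq, abs_lt]; constructor <;> linarith)
    exact haA.2 this
  have hTpos : 0 < T := by
    rcases hT0.lt_or_eq with h | h
    · exact h
    · exact absurd ⟨by rw [← h]; exact hs0, by rw [← h]; exact hB0⟩ hnotgoodT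
  -- s T ≥ 0
  have hIoo : Ioo 0 T ∈ 𝓝[<] T := Ioo_mem_nhdsLT_of_mem ⟨hTpos, le_refl T⟩
  have hsT : 0 ≤ s T := by
    have h1 : Tendsto s (𝓝[<] T) (𝓝 (s T)) :=
      ((hscont T hT0).continuousWithinAt).tendsto
    refine ge_of_tendsto h1 ?_
    filter_upwards [hIoo] with t ht
    exact (hgood t ht.1.le ht.2).1.le
  have hBTnn : 0 ≤ B T := by
    have h1 : Tendsto B (𝓝[<] T) (𝓝 (B T)) :=
      ((hBcont T hT0 hsT).continuousWithinAt).tendsto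
    refine ge_of_tendsto h1 ?_
    filter_upwards [hIoo] with t ht
    exact (hgood t ht.1.le ht.2).2.le
  -- B T = 0
  have hBTz : B T = 0 := by
    rcases (not_and_or.1 hnotgoodT) with h | h
    · -- s T = 0
      have hsTz : s T = 0 := le_antisymm (not_lt.1 h) hsT
      -- slope argument : w T ≤ 0
      have hwT : w T ≤ 0 := by
        have hd : HasDerivWithinAt s (w T) (Iio T) T := (hs T hT0).hasDerivWithinAt
        have hsl := hasDerivWithinAt_iff_tendsto_slope.1 hd
        rw [show Iio T \ {T} = Iio T from Set.diff_singleton_eq_self (by simp)] at hsl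
        refine le_of_tendsto hsl ?_
        filter_upwards [hIoo] with t ht
        have hst : 0 < s t := (hgood t ht.1.le ht.2).1
        have : slope s T t = s t / (t - T) := by
          rw [slope_def_field, hsTz]; ring
        rw [this]
        apply div_nonpos_of_nonneg_of_nonpos hst.le
        linarith [ht.2]
      have hbw : B T = w T := by rw [hBt, hsTz, hP0]; simp
      rw [hbw]; linarith
    · exact le_antisymm (not_lt.1 h) hBTnn
  -- max of s on [0,T]
  obtain ⟨tM, htM, hmax⟩ := isCompact_Icc.exists_isMaxOn (nonempty_Icc.2 hT0)
    (fun t ht => (hscont t ht.1).continuousWithinAt)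
  set M : ℝ := s tM with hMdef
  have hMs : ∀ t ∈ Icc (0:ℝ) T, s t ≤ M := fun t ht => hmax ht
  set M' : ℝ := max M (1 / cp) with hM'def
  have ha : (0:ℝ) < 1 / (2 * cp) := by positivity
  have haM' : 1 / (2 * cp) ≤ M' := by
    have : 1 / (2 * cp) ≤ 1 / cp := by
      apply one_div_le_one_div_of_le hcp; linarith
    exact this.trans (le_max_right _ _)
  -- min of sqrt(2 P) on [1/(2cp), M']
  obtain ⟨σ0, hσ0, hmin⟩ := isCompact_Icc.exists_isMinOn (nonempty_Icc.2 haM')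
    (f := fun σ => Real.sqrt (2 * P σ))
    (fun σ hσ => (Real.continuous_sqrt.continuousAt.comp
      (continuousAt_const.mul ((hPd σ (ha.trans_le hσ.1).le).continuousAt))).continuousWithinAt)
  set m : ℝ := Real.sqrt (2 * P σ0) with hmdef
  have hm : 0 < m := Real.sqrt_pos.2 (by have := hPpos σ0 (ha.trans_le hσ0.1); linarith)
  set K : ℝ := cp * M' / m with hKdef
  have hK : 0 < K := by
    apply div_pos (mul_pos hcp (lt_of_lt_of_le (by positivity) haM')) hm
  -- derivative of B on [0,T) and differential inequality
  have hkey : ∀ t : ℝ, 0 ≤ t → t < T →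
      ∃ D : ℝ, HasDerivAt B D t ∧ 0 ≤ D + K * B t := by
    intro t ht htT
    obtain ⟨hst, hBtp⟩ := hgood t ht htT
    have hPst : 0 < P (s t) := hPpos _ hst
    set q : ℝ := Real.sqrt (2 * P (s t)) with hqdef
    have hq : 0 < q := Real.sqrt_pos.2 (by linarith)
    have hPs : HasDerivAt (fun u => P (s u))
        ((ν * Real.sqrt (2 * P (s t)) + 1 - cp * s t) * w t) t :=
      (hPd (s t) hst.le).comp t (hs t ht)
    have h2Ps : HasDerivAt (fun u => 2 * P (s u))
        (2 * ((ν * Real.sqrt (2 * P (s t)) + 1 - cp * s t) * w t)) t := hPs.const_mul 2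
    have hne : 2 * P (s t) ≠ 0 := by positivity
    have hsq : HasDerivAt (fun u => Real.sqrt (2 * P (s u)))
        (2 * ((ν * Real.sqrt (2 * P (s t)) + 1 - cp * s t) * w t) / (2 * q)) t :=
      h2Ps.sqrt hne
    have hBd : HasDerivAt B ((-ν * w t + 1 - c t * s t) +
        2 * ((ν * q + 1 - cp * s t) * w t) / (2 * q)) t := (hw t ht).add hsq
    refine ⟨_, hBd, ?_⟩
    have hwq : w t = B t - q := by rw [hBt]; ring
    have hDval : (-ν * w t + 1 - c t * s t) + 2 * ((ν * q + 1 - cp * s t) * w t) / (2 * q)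
        = (cp - c t) * s t + B t * (1 - cp * s t) / q := by
      rw [hwq]; field_simp; ring
    rw [hDval]
    have hct := (hc t ht).2
    have hterm1 : 0 ≤ (cp - c t) * s t := mul_nonneg (by linarith) hst.le
    rcases le_or_gt 0 (1 - cp * s t) with hcase | hcase
    · have h2 : 0 ≤ B t * (1 - cp * s t) / q :=
        div_nonneg (mul_nonneg hBtp.le hcase) hq.le
      have h3 : 0 ≤ K * B t := mul_nonneg hK.le hBtp.le
      exact add_nonneg (add_nonneg hterm1 h2) h3
    · -- s t > 1/cp, so s t ∈ [1/(2cp), M']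
      have hst1 : 1 / cp < s t := by
        rw [div_lt_iff₀ hcp]; linarith [mul_comm cp (s t)]
      have hstM' : s t ≤ M' := le_trans (hMs t ⟨ht, htT.le⟩) (le_max_left _ _)
      have hsta : 1 / (2 * cp) ≤ s t := by
        have : 1 / (2 * cp) ≤ 1 / cp := by
          apply one_div_le_one_div_of_le hcp; linarith
        linarith
      have hqm : m ≤ q := hmin ⟨hsta, hstM'⟩
      have hfrac : (cp * s t - 1) / q ≤ K := by
        rw [hKdef]
        have hnum : cp * s t - 1 ≤ cp * M' := by
          have := mul_le_mul_of_nonneg_left hstM' hcp.le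
          linarith
        exact div_le_div₀ (by positivity) hnum hm hqm
      have h1 : B t * ((cp * s t - 1) / q) ≤ B t * K :=
        mul_le_mul_of_nonneg_left hfrac hBtp.le
      have h2 : B t * (1 - cp * s t) / q = -(B t * ((cp * s t - 1) / q)) := by
        field_simp; ring
      rw [h2]
      have h3 : 0 ≤ B t * K - B t * ((cp * s t - 1) / q) := by linarith
      have h4 : K * B t = B t * K := mul_comm _ _
      rw [h4]
      linarith
  -- Gronwall
  set g : ℝ → ℝ := fun t => B t * Real.exp (K * t) with hgdef
  have hgd : ∀ t : ℝ, 0 ≤ t → t < T → ∃ D : ℝ, HasDerivAt g ((D + K * B t) * Real.exp (K * t)) t ∧ 0 ≤ D + K * B t := by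
    intro t ht htT
    obtain ⟨D, hBd, hDpos⟩ := hkey t ht htT
    have he : HasDerivAt (fun u => Real.exp (K * u)) (Real.exp (K * t) * K) t := by
      have : HasDerivAt (fun u : ℝ => K * u) K t := by
        simpa using (hasDerivAt_id t).const_mul K
      exact this.exp
    have := hBd.mul he
    refine ⟨D, ?_, hDpos⟩
    refine this.congr_deriv ?_
    ring
  have hgmono : MonotoneOn g (Icc 0 T) := by
    apply monotoneOn_of_deriv_nonneg (convex_Icc 0 T)
    · intro t htI
      have hst : 0 ≤ s t := by
        rcases lt_or_eq_of_le htI.2 with h | h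
        · exact (hgood t htI.1 h).1.le
        · rw [h]; exact hsT
      exact ((hBcont t htI.1 hst).mul
        (Real.continuous_exp.continuousAt.comp (continuousAt_const.mul continuousAt_id))).continuousWithinAt
    · rw [interior_Icc]
      intro t htI
      obtain ⟨D, hgd', _⟩ := hgd t htI.1.le htI.2
      exact hgd'.differentiableAt.differentiableWithinAt
    · rw [interior_Icc]
      intro t htI
      obtain ⟨D, hgd', hDpos⟩ := hgd t htI.1.le htI.2
      rw [hgd'.deriv]
      positivity
  have h01 : g 0 ≤ g T := hgmono ⟨le_refl 0, hT0⟩ ⟨hT0, le_refl T⟩ hT0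
  have hg0 : g 0 = B 0 := by rw [hgdef]; simp
  have hgT : g T = 0 := by rw [hgdef]; simp [hBTz]
  rw [hg0, hgT] at h01
  linarith
end

section
/- Let 0 < c₋ ≤ c₊ and 0 < ν < 2√c₊, and let c : [0,∞) → ℝ satisfy c₋ ≤ c(t) ≤ c₊ for all t ≥ 0. Let s* > 0 and let P, N : [0,s*] → ℝ be continuously differentiable with: P(0) = 0, P(s*) = 0, P(σ) > 0 for σ ∈ (0,s*), and P'(σ) = ν·√(2P(σ)) + 1 − c₊·σ on [0,s*]; N(s*) = 0, N(σ) > 0 for σ ∈ [0,s*), and N'(σ) = −ν·√(2N(σ)) + 1 − c₋·σ on [0,s*]. Let w, s : [0,∞) → ℝ be differentiable with w'(t) = −ν·w(t) + 1 − c(t)·s(t) and s'(t) = w(t) for all t ≥ 0. If 0 ≤ s(0) < s* and −√(2P(s(0))) < w(0) < √(2N(s(0))), then for all t ≥ 0 one has 0 ≤ s(t) < s* and −√(2P(s(t))) < w(t) < √(2N(s(t))). -/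
open Real Set Filter Topology

lemma expMul_le {f f' : ℝ → ℝ} {a b k : ℝ} (hab : a ≤ b)
    (hf : ContinuousOn f (Set.Icc a b))
    (hd : ∀ t ∈ Set.Ioo a b, HasDerivAt f (f' t) t)
    (hk : ∀ t ∈ Set.Ioo a b, f' t + k * f t ≤ 0) :
    f b * Real.exp (k * b) ≤ f a * Real.exp (k * a) := by
  have hgd : ∀ t ∈ Set.Ioo a b,
      HasDerivAt (fun t => f t * Real.exp (k * t)) ((f' t + k * f t) * Real.exp (k * t)) t := by
    intro t ht
    have he : HasDerivAt (fun t : ℝ => Real.exp (k * t)) (Real.exp (k * t) * (k * 1)) t :=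
      (Real.hasDerivAt_exp (k * t)).comp t ((hasDerivAt_id t).const_mul k)
    have := (hd t ht).mul he
    exact this.congr_deriv (by ring)
  have hcont : ContinuousOn (fun t => f t * Real.exp (k * t)) (Set.Icc a b) :=
    hf.mul ((Real.continuous_exp.comp (continuous_const.mul continuous_id)).continuousOn)
  have hanti : AntitoneOn (fun t => f t * Real.exp (k * t)) (Set.Icc a b) := by
    apply antitoneOn_of_deriv_nonpos (convex_Icc a b) hcont
    · intro x hx
      rw [interior_Icc] at hx
      exact (hgd x hx).differentiableAt.differentiableWithinAt
    · intro x hx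
      rw [interior_Icc] at hx
      rw [(hgd x hx).deriv]
      exact mul_nonpos_of_nonpos_of_nonneg (hk x hx) (Real.exp_nonneg _)
  exact hanti (left_mem_Icc.2 hab) (right_mem_Icc.2 hab) hab

lemma left_sign_of_deriv {w : ℝ → ℝ} {t₁ a : ℝ} (hd : HasDerivAt w a t₁)
    (h0 : w t₁ = 0) :
    (a < 0 → ∀ᶠ t in 𝓝[<] t₁, 0 < w t) ∧ (0 < a → ∀ᶠ t in 𝓝[<] t₁, w t < 0) := by
  have hsl : Tendsto (slope w t₁) (𝓝[≠] t₁) (𝓝 a) := hasDerivAt_iff_tendsto_slope.1 hd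
  have h3 : ∀ᶠ t in 𝓝[<] t₁, t < t₁ := eventually_mem_nhdsWithin
  constructor
  · intro ha
    have h2 : ∀ᶠ t in 𝓝[<] t₁, slope w t₁ t < 0 :=
      (hsl.eventually_lt_const ha).filter_mono (nhdsWithin_mono t₁ (fun x hx => ne_of_lt hx))
    filter_upwards [h2, h3] with t hlt htl
    rw [slope_def_field, h0, sub_zero] at hlt
    rcases div_neg_iff.mp hlt with ⟨h, h'⟩ | ⟨h, h'⟩ <;> linarith
  · intro ha
    have h2 : ∀ᶠ t in 𝓝[<] t₁, 0 < slope w t₁ t :=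
      (hsl.eventually_const_lt ha).filter_mono (nhdsWithin_mono t₁ (fun x hx => ne_of_lt hx))
    filter_upwards [h2, h3] with t hlt htl
    rw [slope_def_field, h0, sub_zero] at hlt
    rcases div_pos_iff.mp hlt with ⟨h, h'⟩ | ⟨h, h'⟩ <;> linarith

lemma sqrtN_bound {ν cm sstar : ℝ} {N : ℝ → ℝ} (hcm : 0 ≤ cm)
    (hcs : cm * sstar ≤ 1) (hNs : N sstar = 0)
    (hNpos : ∀ σ ∈ Set.Ico (0:ℝ) sstar, 0 < N σ)
    (hNd : ∀ σ ∈ Set.Icc (0:ℝ) sstar,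
      HasDerivAt N (-ν * Real.sqrt (2 * N σ) + 1 - cm * σ) σ) :
    ∀ σ ∈ Set.Icc (0:ℝ) sstar, Real.sqrt (2 * N σ) ≤ ν * (sstar - σ) := by
  intro σ hσ
  rcases eq_or_lt_of_le hσ.2 with h | hlt
  · rw [h, hNs] at *
    simp [Real.sqrt_eq_zero']
  have hNc : ContinuousOn N (Set.Icc 0 sstar) :=
    fun τ hτ => (hNd τ hτ).continuousAt.continuousWithinAt
  have hφc : ContinuousOn (fun τ => Real.sqrt (2 * N τ) + ν * τ) (Set.Icc 0 sstar) :=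
    (Real.continuous_sqrt.comp_continuousOn (continuousOn_const.mul hNc)).add
      (continuous_const.mul continuous_id).continuousOn
  have hφd : ∀ τ ∈ Set.Ioo (0:ℝ) sstar,
      HasDerivAt (fun τ => Real.sqrt (2 * N τ) + ν * τ)
        ((2 * (-ν * Real.sqrt (2 * N τ) + 1 - cm * τ)) / (2 * Real.sqrt (2 * N τ)) + ν * 1) τ := by
    intro τ hτ
    have hNτ : 0 < N τ := hNpos τ ⟨hτ.1.le, hτ.2⟩
    have h2N : (2 : ℝ) * N τ ≠ 0 := by positivity
    exact (((hNd τ ⟨hτ.1.le, hτ.2.le⟩).const_mul 2).sqrt h2N).add ((hasDerivAt_id τ).const_mul ν)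
  have hmono : MonotoneOn (fun τ => Real.sqrt (2 * N τ) + ν * τ) (Set.Icc 0 sstar) := by
    apply monotoneOn_of_deriv_nonneg (convex_Icc 0 sstar) hφc
    · intro x hx
      rw [interior_Icc] at hx
      exact (hφd x hx).differentiableAt.differentiableWithinAt
    · intro x hx
      rw [interior_Icc] at hx
      rw [(hφd x hx).deriv]
      have hq : 0 < Real.sqrt (2 * N x) := by
        apply Real.sqrt_pos.2
        have := hNpos x ⟨hx.1.le, hx.2⟩
        linarith
      set q := Real.sqrt (2 * N x) with hqdef
      have hkey : (2 * (-ν * q + 1 - cm * x)) / (2 * q) + ν * 1 = (1 - cm * x) / q := by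
        field_simp
        ring
      rw [hkey]
      apply div_nonneg _ hq.le
      have : cm * x ≤ cm * sstar := mul_le_mul_of_nonneg_left hx.2.le hcm
      linarith
  have := hmono hσ (Set.right_mem_Icc.2 (hσ.1.trans hσ.2)) hσ.2
  simp only [hNs, mul_zero, Real.sqrt_zero, zero_add] at this
  linarith

lemma gron_upper {ν cm sstar : ℝ} {c N w s : ℝ → ℝ} (hν : 0 < ν)
    (hN0 : ∀ σ ∈ Set.Icc (0:ℝ) sstar, 0 ≤ N σ)
    (hNd : ∀ σ ∈ Set.Icc (0:ℝ) sstar,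
      HasDerivAt N (-ν * Real.sqrt (2 * N σ) + 1 - cm * σ) σ)
    (hclo : ∀ t : ℝ, 0 ≤ t → cm ≤ c t)
    (hw : ∀ t : ℝ, 0 ≤ t → HasDerivAt w (-ν * w t + 1 - c t * s t) t)
    (hs : ∀ t : ℝ, 0 ≤ t → HasDerivAt s (w t) t)
    {t₂ t₁ : ℝ} (h21 : t₂ < t₁) (ht₂ : 0 ≤ t₂)
    (hreg : ∀ t, t₂ ≤ t → t < t₁ →
      0 ≤ w t ∧ 0 ≤ s t ∧ s t ≤ sstar ∧ w t ≤ Real.sqrt (2 * N (s t)))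
    (hs1 : s t₁ ∈ Set.Icc (0:ℝ) sstar)
    (hE2 : (w t₂)^2 < 2 * N (s t₂))
    (hE1 : 2 * N (s t₁) ≤ (w t₁)^2) : False := by
  have hsmem : ∀ t ∈ Set.Icc t₂ t₁, s t ∈ Set.Icc (0:ℝ) sstar := by
    intro t ht
    rcases eq_or_lt_of_le ht.2 with h | h
    · rw [h]; exact hs1
    · exact ⟨(hreg t ht.1 h).2.1, (hreg t ht.1 h).2.2.1⟩
  have ht0 : ∀ t ∈ Set.Icc t₂ t₁, (0:ℝ) ≤ t := fun t ht => ht₂.trans ht.1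
  have hcont : ContinuousOn (fun t => (w t)^2 - 2 * N (s t)) (Set.Icc t₂ t₁) := by
    intro t ht
    have hwc := (hw t (ht0 t ht)).continuousAt
    have hsc := (hs t (ht0 t ht)).continuousAt
    have hNc := (hNd (s t) (hsmem t ht)).continuousAt
    exact (((hwc.pow 2).sub ((continuousAt_const.mul (hNc.comp hsc)) :
      ContinuousAt (fun t => 2 * N (s t)) t))).continuousWithinAt
  have hd : ∀ t ∈ Set.Ioo t₂ t₁,
      HasDerivAt (fun t => (w t)^2 - 2 * N (s t))
        ((2:ℕ) * (w t)^1 * (-ν * w t + 1 - c t * s t)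
          - 2 * ((-ν * Real.sqrt (2 * N (s t)) + 1 - cm * s t) * w t)) t := by
    intro t ht
    have h0 : (0:ℝ) ≤ t := ht₂.trans ht.1.le
    have hNds := (hNd (s t) (hsmem t ⟨ht.1.le, ht.2.le⟩)).comp t (hs t h0)
    exact ((hw t h0).pow 2).sub (hNds.const_mul 2)
  have hkey : ∀ t ∈ Set.Ioo t₂ t₁,
      ((2:ℕ) * (w t)^1 * (-ν * w t + 1 - c t * s t)
          - 2 * ((-ν * Real.sqrt (2 * N (s t)) + 1 - cm * s t) * w t))
        + (2*ν) * ((w t)^2 - 2 * N (s t)) ≤ 0 := by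
    intro t ht
    have h0 : (0:ℝ) ≤ t := ht₂.trans ht.1.le
    obtain ⟨hw0, hs0, hss, hwN⟩ := hreg t ht.1.le ht.2
    set q := Real.sqrt (2 * N (s t)) with hq
    have hqnn : 0 ≤ q := Real.sqrt_nonneg _
    have h2N : 2 * N (s t) = q^2 :=
      (Real.sq_sqrt (by linarith [hN0 (s t) ⟨hs0, hss⟩])).symm
    have hid : ((2:ℕ) * (w t)^1 * (-ν * w t + 1 - c t * s t)
          - 2 * ((-ν * q + 1 - cm * s t) * w t)) + (2*ν) * ((w t)^2 - 2 * N (s t))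
        = 2 * (w t * ((cm - c t) * s t)) + 2 * ν * (q * (w t - q)) := by
      rw [h2N]; push_cast; ring
    rw [hid]
    have hc1 : (cm - c t) * s t ≤ 0 :=
      mul_nonpos_of_nonpos_of_nonneg (by linarith [hclo t h0]) hs0
    have ht1 : w t * ((cm - c t) * s t) ≤ 0 := mul_nonpos_of_nonneg_of_nonpos hw0 hc1
    have ht2 : q * (w t - q) ≤ 0 := mul_nonpos_of_nonneg_of_nonpos hqnn (by linarith)
    nlinarith
  have := expMul_le h21.le hcont hd hkey
  have he1 := Real.exp_pos (2*ν*t₁)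
  have he2 := Real.exp_pos (2*ν*t₂)
  nlinarith [this, mul_pos (by nlinarith : (0:ℝ) < 2*N (s t₂) - (w t₂)^2) he2,
    mul_nonneg (by nlinarith : (0:ℝ) ≤ (w t₁)^2 - 2*N (s t₁)) he1.le]

lemma gron_lower {ν cp sstar : ℝ} {c P w s : ℝ → ℝ} (hν : 0 < ν)
    (hP0 : ∀ σ ∈ Set.Icc (0:ℝ) sstar, 0 ≤ P σ)
    (hPd : ∀ σ ∈ Set.Icc (0:ℝ) sstar,
      HasDerivAt P (ν * Real.sqrt (2 * P σ) + 1 - cp * σ) σ)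
    (hchi : ∀ t : ℝ, 0 ≤ t → c t ≤ cp)
    (hw : ∀ t : ℝ, 0 ≤ t → HasDerivAt w (-ν * w t + 1 - c t * s t) t)
    (hs : ∀ t : ℝ, 0 ≤ t → HasDerivAt s (w t) t)
    {t₂ t₁ : ℝ} (h21 : t₂ < t₁) (ht₂ : 0 ≤ t₂)
    (hreg : ∀ t, t₂ ≤ t → t < t₁ →
      w t ≤ 0 ∧ 0 ≤ s t ∧ s t ≤ sstar ∧ -Real.sqrt (2 * P (s t)) ≤ w t)
    (hs1 : s t₁ ∈ Set.Icc (0:ℝ) sstar)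
    (hF2 : (w t₂)^2 < 2 * P (s t₂))
    (hF1 : 2 * P (s t₁) ≤ (w t₁)^2) : False := by
  have hsmem : ∀ t ∈ Set.Icc t₂ t₁, s t ∈ Set.Icc (0:ℝ) sstar := by
    intro t ht
    rcases eq_or_lt_of_le ht.2 with h | h
    · rw [h]; exact hs1
    · exact ⟨(hreg t ht.1 h).2.1, (hreg t ht.1 h).2.2.1⟩
  have ht0 : ∀ t ∈ Set.Icc t₂ t₁, (0:ℝ) ≤ t := fun t ht => ht₂.trans ht.1
  have hcont : ContinuousOn (fun t => (w t)^2 - 2 * P (s t)) (Set.Icc t₂ t₁) := by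
    intro t ht
    have hwc := (hw t (ht0 t ht)).continuousAt
    have hsc := (hs t (ht0 t ht)).continuousAt
    have hPc := (hPd (s t) (hsmem t ht)).continuousAt
    exact (((hwc.pow 2).sub ((continuousAt_const.mul (hPc.comp hsc)) :
      ContinuousAt (fun t => 2 * P (s t)) t))).continuousWithinAt
  have hd : ∀ t ∈ Set.Ioo t₂ t₁,
      HasDerivAt (fun t => (w t)^2 - 2 * P (s t))
        ((2:ℕ) * (w t)^1 * (-ν * w t + 1 - c t * s t)
          - 2 * ((ν * Real.sqrt (2 * P (s t)) + 1 - cp * s t) * w t)) t := by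
    intro t ht
    have h0 : (0:ℝ) ≤ t := ht₂.trans ht.1.le
    have hPds := (hPd (s t) (hsmem t ⟨ht.1.le, ht.2.le⟩)).comp t (hs t h0)
    exact ((hw t h0).pow 2).sub (hPds.const_mul 2)
  have hkey : ∀ t ∈ Set.Ioo t₂ t₁,
      ((2:ℕ) * (w t)^1 * (-ν * w t + 1 - c t * s t)
          - 2 * ((ν * Real.sqrt (2 * P (s t)) + 1 - cp * s t) * w t))
        + (2*ν) * ((w t)^2 - 2 * P (s t)) ≤ 0 := by
    intro t ht
    have h0 : (0:ℝ) ≤ t := ht₂.trans ht.1.le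
    obtain ⟨hw0, hs0, hss, hwP⟩ := hreg t ht.1.le ht.2
    set q := Real.sqrt (2 * P (s t)) with hq
    have hqnn : 0 ≤ q := Real.sqrt_nonneg _
    have h2P : 2 * P (s t) = q^2 :=
      (Real.sq_sqrt (by linarith [hP0 (s t) ⟨hs0, hss⟩])).symm
    have hid : ((2:ℕ) * (w t)^1 * (-ν * w t + 1 - c t * s t)
          - 2 * ((ν * q + 1 - cp * s t) * w t)) + (2*ν) * ((w t)^2 - 2 * P (s t))
        = 2 * (w t * ((cp - c t) * s t)) - 2 * ν * (q * (w t + q)) := by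
      rw [h2P]; push_cast; ring
    rw [hid]
    have hc1 : 0 ≤ (cp - c t) * s t :=
      mul_nonneg (by linarith [hchi t h0]) hs0
    have ht1 : w t * ((cp - c t) * s t) ≤ 0 := mul_nonpos_of_nonpos_of_nonneg hw0 hc1
    have ht2 : 0 ≤ q * (w t + q) := mul_nonneg hqnn (by linarith)
    nlinarith
  have := expMul_le h21.le hcont hd hkey
  have he1 := Real.exp_pos (2*ν*t₁)
  have he2 := Real.exp_pos (2*ν*t₂)
  nlinarith [this, mul_pos (by nlinarith : (0:ℝ) < 2*P (s t₂) - (w t₂)^2) he2,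
    mul_nonneg (by nlinarith : (0:ℝ) ≤ (w t₁)^2 - 2*P (s t₁)) he1.le]

/-- The sub-critical region as a predicate in time. -/
def goodRegion (P N w s : ℝ → ℝ) (sstar : ℝ) (t : ℝ) : Prop :=
  (0 ≤ s t ∧ s t < sstar) ∧
    -Real.sqrt (2 * P (s t)) < w t ∧ w t < Real.sqrt (2 * N (s t))

/-- Proposition 4.4 (invariance of the sub-critical region in the underdamped regime
`0 < ν < 2√c₊`) for the repulsive phase-plane system with variable background
`0 < c₋ ≤ c(t) ≤ c₊`: the region `{0 ≤ s < s*, −√(2P(s)) < w < √(2N(s))}` is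
invariant, where `P` solves `P' = ν√(2P) + 1 − c₊σ` with `P(0) = P(s*) = 0`,
`P > 0` on `(0,s*)`, and `N` solves `N' = −ν√(2N) + 1 − c₋σ` with `N(s*) = 0`,
`N > 0` on `[0,s*)` (the closing condition). -/
theorem stmt_17 (ν cm cp sstar : ℝ) (hcm : 0 < cm) (hcmp : cm ≤ cp)
    (hν1 : 0 < ν) (hν2 : ν < 2 * Real.sqrt cp) (hsstar : 0 < sstar)
    (c : ℝ → ℝ) (hc : ∀ t : ℝ, 0 ≤ t → cm ≤ c t ∧ c t ≤ cp)
    (P N : ℝ → ℝ)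
    (hP0 : P 0 = 0) (hPs : P sstar = 0)
    (hPpos : ∀ σ ∈ Set.Ioo (0 : ℝ) sstar, 0 < P σ)
    (hPd : ∀ σ ∈ Set.Icc (0 : ℝ) sstar,
      HasDerivAt P (ν * Real.sqrt (2 * P σ) + 1 - cp * σ) σ)
    (hNs : N sstar = 0)
    (hNpos : ∀ σ ∈ Set.Ico (0 : ℝ) sstar, 0 < N σ)
    (hNd : ∀ σ ∈ Set.Icc (0 : ℝ) sstar,
      HasDerivAt N (-ν * Real.sqrt (2 * N σ) + 1 - cm * σ) σ)
    (w s : ℝ → ℝ)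
    (hw : ∀ t : ℝ, 0 ≤ t → HasDerivAt w (-ν * w t + 1 - c t * s t) t)
    (hs : ∀ t : ℝ, 0 ≤ t → HasDerivAt s (w t) t)
    (hs00 : 0 ≤ s 0) (hs0s : s 0 < sstar)
    (hw0l : -Real.sqrt (2 * P (s 0)) < w 0)
    (hw0r : w 0 < Real.sqrt (2 * N (s 0))) :
    ∀ t : ℝ, 0 ≤ t → (0 ≤ s t ∧ s t < sstar) ∧
      -Real.sqrt (2 * P (s t)) < w t ∧ w t < Real.sqrt (2 * N (s t)) := by
  classical
  have hcl : ∀ t : ℝ, 0 ≤ t → cm ≤ c t := fun t ht => (hc t ht).1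
  have hch : ∀ t : ℝ, 0 ≤ t → c t ≤ cp := fun t ht => (hc t ht).2
  have hN0 : ∀ σ ∈ Set.Icc (0:ℝ) sstar, 0 ≤ N σ := by
    intro σ hσ
    rcases eq_or_lt_of_le hσ.2 with h | h
    · rw [h, hNs]
    · exact (hNpos σ ⟨hσ.1, h⟩).le
  have hP0' : ∀ σ ∈ Set.Icc (0:ℝ) sstar, 0 ≤ P σ := by
    intro σ hσ
    rcases eq_or_lt_of_le hσ.1 with h | h
    · rw [← h, hP0]
    rcases eq_or_lt_of_le hσ.2 with h' | h'
    · rw [h', hPs]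
    · exact (hPpos σ ⟨h, h'⟩).le
  -- persistence of the region forward in time
  have persist : ∀ t₀ : ℝ, 0 ≤ t₀ → goodRegion P N w s sstar t₀ →
      ∃ δ > 0, ∀ t, t₀ ≤ t → t < t₀ + δ → goodRegion P N w s sstar t := by
    intro t₀ ht₀ hC0
    obtain ⟨⟨hs0, hss⟩, hwl, hwr⟩ := hC0
    have hsc : ContinuousAt s t₀ := (hs t₀ ht₀).continuousAt
    have hwc : ContinuousAt w t₀ := (hw t₀ ht₀).continuousAt
    have hsmem : s t₀ ∈ Set.Icc (0:ℝ) sstar := ⟨hs0, hss.le⟩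
    have hNcs : ContinuousAt (fun σ => Real.sqrt (2 * N σ)) (s t₀) :=
      Real.continuous_sqrt.continuousAt.comp
        (continuousAt_const.mul (hNd (s t₀) hsmem).continuousAt)
    have hPcs : ContinuousAt (fun σ => Real.sqrt (2 * P σ)) (s t₀) :=
      Real.continuous_sqrt.continuousAt.comp
        (continuousAt_const.mul (hPd (s t₀) hsmem).continuousAt)
    have hNc : ContinuousAt (fun t => Real.sqrt (2 * N (s t))) t₀ := hNcs.comp hsc
    have hPc : ContinuousAt (fun t => Real.sqrt (2 * P (s t))) t₀ := hPcs.comp hsc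
    have h1 : ∀ᶠ t in 𝓝 t₀, s t < sstar := hsc.tendsto.eventually_lt_const hss
    have h2 : ∀ᶠ t in 𝓝 t₀, -Real.sqrt (2 * P (s t)) < w t := by
      have hlim : ContinuousAt (fun t => w t + Real.sqrt (2 * P (s t))) t₀ := hwc.add hPc
      have := hlim.tendsto.eventually_const_lt
        (show (0:ℝ) < w t₀ + Real.sqrt (2 * P (s t₀)) by linarith)
      filter_upwards [this] with t ht
      linarith
    have h3 : ∀ᶠ t in 𝓝 t₀, w t < Real.sqrt (2 * N (s t)) := by
      have := (hNc.sub hwc).tendsto.eventually_const_lt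
        (show (0:ℝ) < Real.sqrt (2 * N (s t₀)) - w t₀ by linarith)
      filter_upwards [this] with t ht
      exact sub_pos.1 ht
    rcases eq_or_lt_of_le hs0 with h0 | hpos
    · -- s t₀ = 0, hence w t₀ > 0
      have hw0 : 0 < w t₀ := by
        have : Real.sqrt (2 * P (s t₀)) = 0 := by
          rw [← h0, hP0]; simp
        rw [this] at hwl; simpa using hwl
      have h4 : ∀ᶠ t in 𝓝 t₀, 0 < w t := hwc.tendsto.eventually_const_lt hw0
      obtain ⟨ε, hε, hball⟩ := Metric.eventually_nhds_iff.1 (((h1.and h2).and h3).and h4)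
      refine ⟨ε, hε, ?_⟩
      intro t htl htr
      have hdist : ∀ x, t₀ ≤ x → x ≤ t → dist x t₀ < ε := by
        intro x hx1 hx2
        rw [Real.dist_eq, abs_of_nonneg (by linarith)]
        linarith
      obtain ⟨⟨⟨hb1, hb2⟩, hb3⟩, hb4⟩ := hball (hdist t htl le_rfl)
      refine ⟨⟨?_, hb1⟩, hb2, hb3⟩
      rcases eq_or_lt_of_le htl with heq | hlt
      · rw [← heq, ← h0]
      have hmono : StrictMonoOn s (Set.Icc t₀ t) := by
        apply strictMonoOn_of_deriv_pos (convex_Icc t₀ t)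
        · exact fun x hx => (hs x (ht₀.trans hx.1)).continuousAt.continuousWithinAt
        · intro x hx
          rw [interior_Icc] at hx
          rw [(hs x (ht₀.trans hx.1.le)).deriv]
          exact (hball (hdist x hx.1.le hx.2.le)).2
      have hlt2 := hmono (Set.left_mem_Icc.2 htl) (Set.right_mem_Icc.2 htl) hlt
      rw [← h0] at hlt2
      linarith
    · -- s t₀ > 0
      have h4 : ∀ᶠ t in 𝓝 t₀, 0 < s t := hsc.tendsto.eventually_const_lt hpos
      obtain ⟨ε, hε, hball⟩ := Metric.eventually_nhds_iff.1 (((h1.and h2).and h3).and h4)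
      refine ⟨ε, hε, ?_⟩
      intro t htl htr
      have hdist : dist t t₀ < ε := by
        rw [Real.dist_eq, abs_of_nonneg (by linarith)]
        linarith
      obtain ⟨⟨⟨hb1, hb2⟩, hb3⟩, hb4⟩ := hball hdist
      exact ⟨⟨hb4.le, hb1⟩, hb2, hb3⟩
  -- main argument
  suffices hmain : ∀ t : ℝ, 0 ≤ t → goodRegion P N w s sstar t by
    exact fun t ht => hmain t ht
  by_contra hcon
  push_neg at hcon
  obtain ⟨t₀, ht₀, hbad⟩ := hcon
  have hTne : {t : ℝ | 0 ≤ t ∧ ¬ goodRegion P N w s sstar t}.Nonempty := ⟨t₀, ht₀, hbad⟩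
  have hTbd : BddBelow {t : ℝ | 0 ≤ t ∧ ¬ goodRegion P N w s sstar t} :=
    ⟨0, fun t ht => ht.1⟩
  set t₁ := sInf {t : ℝ | 0 ≤ t ∧ ¬ goodRegion P N w s sstar t} with ht₁def
  have ht₁0 : 0 ≤ t₁ := le_csInf hTne (fun t ht => ht.1)
  have hgood : ∀ t, 0 ≤ t → t < t₁ → goodRegion P N w s sstar t := by
    intro t ht htl
    by_contra hb
    exact absurd (csInf_le hTbd ⟨ht, hb⟩) (not_le.2 htl)
  have hgood0 : goodRegion P N w s sstar 0 := ⟨⟨hs00, hs0s⟩, hw0l, hw0r⟩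
  have hC1 : goodRegion P N w s sstar t₁ := by
    rcases eq_or_lt_of_le ht₁0 with h0 | hpos
    · rw [← h0]; exact hgood0
    -- t₁ > 0 : weak bounds at t₁ by taking limits from the left
    have hwc1 : ContinuousAt w t₁ := (hw t₁ ht₁0).continuousAt
    have hsc1 : ContinuousAt s t₁ := (hs t₁ ht₁0).continuousAt
    have hIoo : Set.Ioo 0 t₁ ∈ 𝓝[<] t₁ := Ioo_mem_nhdsLT_of_mem ⟨hpos, le_refl t₁⟩
    have hCev : ∀ᶠ t in 𝓝[<] t₁, goodRegion P N w s sstar t ∧ 0 < t := by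
      filter_upwards [hIoo] with t ht
      exact ⟨hgood t ht.1.le ht.2, ht.1⟩
    have hsle : s t₁ ≤ sstar :=
      le_of_tendsto (hsc1.tendsto.mono_left nhdsWithin_le_nhds)
        (hCev.mono fun t ht => ht.1.1.2.le)
    have hsge : (0:ℝ) ≤ s t₁ :=
      ge_of_tendsto (hsc1.tendsto.mono_left nhdsWithin_le_nhds)
        (hCev.mono fun t ht => ht.1.1.1)
    have hsmem1 : s t₁ ∈ Set.Icc (0:ℝ) sstar := ⟨hsge, hsle⟩
    have hNc1 : ContinuousAt (fun t => Real.sqrt (2 * N (s t))) t₁ :=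
      (Real.continuous_sqrt.continuousAt.comp
        (continuousAt_const.mul (hNd (s t₁) hsmem1).continuousAt)).comp hsc1
    have hPc1 : ContinuousAt (fun t => Real.sqrt (2 * P (s t))) t₁ :=
      (Real.continuous_sqrt.continuousAt.comp
        (continuousAt_const.mul (hPd (s t₁) hsmem1).continuousAt)).comp hsc1
    have hwleN : w t₁ ≤ Real.sqrt (2 * N (s t₁)) := by
      have h := le_of_tendsto (((hwc1.sub hNc1).tendsto).mono_left nhdsWithin_le_nhds)
        (hCev.mono fun t ht => (show w t - Real.sqrt (2 * N (s t)) ≤ 0 by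
          linarith [ht.1.2.2]))
      linarith [show w t₁ - Real.sqrt (2 * N (s t₁)) ≤ 0 from h]
    have hwgeP : -Real.sqrt (2 * P (s t₁)) ≤ w t₁ := by
      have h := le_of_tendsto (((hPc1.neg.sub hwc1).tendsto).mono_left nhdsWithin_le_nhds)
        (hCev.mono fun t ht => (show -Real.sqrt (2 * P (s t)) - w t ≤ 0 by
          linarith [ht.1.2.1]))
      linarith [show -Real.sqrt (2 * P (s t₁)) - w t₁ ≤ 0 from h]
    -- extraction of a left interval with a property
    have extract : ∀ {Q : ℝ → Prop}, (∀ᶠ t in 𝓝[<] t₁, Q t) →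
        ∃ t₂, 0 ≤ t₂ ∧ t₂ < t₁ ∧ ∀ t, t₂ ≤ t → t < t₁ →
          Q t ∧ goodRegion P N w s sstar t ∧ 0 < t := by
      intro Q hev
      have hall : ∀ᶠ t in 𝓝[<] t₁, Q t ∧ goodRegion P N w s sstar t ∧ 0 < t := by
        filter_upwards [hev, hCev] with t h1 h2
        exact ⟨h1, h2.1, h2.2⟩
      obtain ⟨l, hl, hsub⟩ := mem_nhdsLT_iff_exists_Ioo_subset.1 hall
      have hm : max l 0 < t₁ := max_lt hl hpos
      refine ⟨(max l 0 + t₁)/2, by positivity, by linarith, ?_⟩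
      intro t htl htr
      apply hsub
      constructor
      · have : l ≤ max l 0 := le_max_left l 0
        linarith
      · exact htr
    -- Step 1 : s t₁ < sstar
    have hslt : s t₁ < sstar := by
      by_contra hns
      have hseq : s t₁ = sstar := le_antisymm hsle (not_lt.1 hns)
      by_cases hcms : cm * sstar ≤ 1
      · -- closing via √(2N) ≤ ν (s* - σ)
        have hbound := sqrtN_bound hcm.le hcms hNs hNpos hNd
        have hreg2 : ∀ t, t₁/2 ≤ t → t < t₁ →
            (True) ∧ goodRegion P N w s sstar t ∧ 0 < t := by
          intro t h1 h2
          have h0t : 0 < t := lt_of_lt_of_le (by linarith) h1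
          exact ⟨trivial, hgood t h0t.le h2, h0t⟩
        have hcont2 : ContinuousOn (fun t => s t - sstar) (Set.Icc (t₁/2) t₁) := by
          intro t ht
          have h0t : (0:ℝ) ≤ t := le_trans (by linarith) ht.1
          exact ((hs t h0t).continuousAt.sub continuousAt_const).continuousWithinAt
        have hd2 : ∀ t ∈ Set.Ioo (t₁/2) t₁, HasDerivAt (fun t => s t - sstar) (w t) t := by
          intro t ht
          have h0t : (0:ℝ) ≤ t := le_trans (by linarith) ht.1.le
          exact (hs t h0t).sub_const sstar
        have hk2 : ∀ t ∈ Set.Ioo (t₁/2) t₁, w t + ν * (s t - sstar) ≤ 0 := by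
          intro t ht
          obtain ⟨-, hgt, h0t⟩ := hreg2 t ht.1.le ht.2
          have hb := hbound (s t) ⟨hgt.1.1, hgt.1.2.le⟩
          have := hgt.2.2
          linarith
        have hle := expMul_le (by linarith : t₁/2 ≤ t₁) hcont2 hd2 hk2
        have hg2 := hgood (t₁/2) (by linarith) (by linarith)
        have hneg : s (t₁/2) - sstar < 0 := by linarith [hg2.1.2]
        have he1 := Real.exp_pos (ν * t₁)
        have he2 := Real.exp_pos (ν * (t₁/2))
        rw [hseq] at hle
        simp only [sub_self, zero_mul] at hle
        nlinarith [mul_neg_of_neg_of_pos hneg he2]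
      · -- corner : w t₁ = 0 and w' (t₁) < 0
        push_neg at hcms
        have hw1 : w t₁ = 0 := by
          rw [hseq] at hwleN hwgeP
          rw [hNs] at hwleN
          rw [hPs] at hwgeP
          simp at hwleN hwgeP
          linarith
        have ha : -ν * w t₁ + 1 - c t₁ * s t₁ < 0 := by
          rw [hw1, hseq]
          have h1 := hcl t₁ ht₁0
          nlinarith
        have hev := (left_sign_of_deriv (hw t₁ ht₁0) hw1).1 ha
        obtain ⟨t₂, ht₂0, ht₂1, hQ⟩ := extract hev
        refine gron_upper hν1 hN0 hNd hcl hw hs ht₂1 ht₂0 ?_ hsmem1 ?_ ?_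
        · intro t h1 h2
          obtain ⟨hwpos, hgt, h0t⟩ := hQ t h1 h2
          exact ⟨hwpos.le, hgt.1.1, hgt.1.2.le, hgt.2.2.le⟩
        · obtain ⟨hwpos, hgt, h0t⟩ := hQ t₂ le_rfl ht₂1
          exact (Real.lt_sqrt hwpos.le).1 hgt.2.2
        · rw [hseq, hNs]
          nlinarith [sq_nonneg (w t₁)]
    -- Step 2 : w t₁ < √(2 N (s t₁))
    have hwlt : w t₁ < Real.sqrt (2 * N (s t₁)) := by
      rcases lt_or_eq_of_le hwleN with h | heq
      · exact h
      exfalso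
      have hNp1 : 0 < N (s t₁) := hNpos (s t₁) ⟨hsge, hslt⟩
      have hw1pos : 0 < w t₁ := by
        rw [heq]
        apply Real.sqrt_pos.2
        linarith
      have hev : ∀ᶠ t in 𝓝[<] t₁, 0 < w t :=
        (hwc1.tendsto.eventually_const_lt hw1pos).filter_mono nhdsWithin_le_nhds
      obtain ⟨t₂, ht₂0, ht₂1, hQ⟩ := extract hev
      refine gron_upper hν1 hN0 hNd hcl hw hs ht₂1 ht₂0 ?_ hsmem1 ?_ ?_
      · intro t h1 h2
        obtain ⟨hwpos, hgt, h0t⟩ := hQ t h1 h2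
        exact ⟨hwpos.le, hgt.1.1, hgt.1.2.le, hgt.2.2.le⟩
      · obtain ⟨hwpos, hgt, h0t⟩ := hQ t₂ le_rfl ht₂1
        exact (Real.lt_sqrt hwpos.le).1 hgt.2.2
      · rw [heq]
        rw [Real.sq_sqrt (by linarith : (0:ℝ) ≤ 2 * N (s t₁))]
    -- Step 3 : -√(2 P (s t₁)) < w t₁
    have hwgt : -Real.sqrt (2 * P (s t₁)) < w t₁ := by
      rcases lt_or_eq_of_le hwgeP with h | heq
      · exact h
      exfalso
      have hFdone : ∀ t₂, 0 ≤ t₂ → t₂ < t₁ →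
          (∀ t, t₂ ≤ t → t < t₁ → (w t < 0) ∧ goodRegion P N w s sstar t ∧ 0 < t) → False := by
        intro t₂ ht₂0 ht₂1 hQ
        refine gron_lower hν1 hP0' hPd hch hw hs ht₂1 ht₂0 ?_ hsmem1 ?_ ?_
        · intro t h1 h2
          obtain ⟨hwneg, hgt, h0t⟩ := hQ t h1 h2
          exact ⟨hwneg.le, hgt.1.1, hgt.1.2.le, hgt.2.1.le⟩
        · obtain ⟨hwneg, hgt, h0t⟩ := hQ t₂ le_rfl ht₂1
          have h1 : -w t₂ < Real.sqrt (2 * P (s t₂)) := by linarith [hgt.2.1]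
          have h2 := (Real.lt_sqrt (by linarith : (0:ℝ) ≤ -w t₂)).1 h1
          nlinarith
        · rw [← heq, neg_sq, Real.sq_sqrt
            (show (0:ℝ) ≤ 2 * P (s t₁) by linarith [hP0' (s t₁) hsmem1])]
      rcases eq_or_lt_of_le hsge with h0 | hspos
      · -- s t₁ = 0 : w t₁ = 0 and w' (t₁) = 1 > 0
        have hw1 : w t₁ = 0 := by
          rw [← heq, ← h0, hP0]
          simp
        have ha : 0 < -ν * w t₁ + 1 - c t₁ * s t₁ := by
          rw [hw1, ← h0]
          simp
        have hev := (left_sign_of_deriv (hw t₁ ht₁0) hw1).2 ha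
        obtain ⟨t₂, ht₂0, ht₂1, hQ⟩ := extract hev
        exact hFdone t₂ ht₂0 ht₂1 hQ
      · -- s t₁ > 0 : w t₁ < 0
        have hPp1 : 0 < P (s t₁) := hPpos (s t₁) ⟨hspos, hslt⟩
        have hw1neg : w t₁ < 0 := by
          rw [← heq]
          simp only [neg_neg, Left.neg_neg_iff]
          apply Real.sqrt_pos.2
          linarith
        have hev : ∀ᶠ t in 𝓝[<] t₁, w t < 0 :=
          (hwc1.tendsto.eventually_lt_const hw1neg).filter_mono nhdsWithin_le_nhds
        obtain ⟨t₂, ht₂0, ht₂1, hQ⟩ := extract hev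
        exact hFdone t₂ ht₂0 ht₂1 hQ
    exact ⟨⟨hsge, hslt⟩, hwgt, hwlt⟩
  obtain ⟨δ, hδ, hpers⟩ := persist t₁ ht₁0 hC1
  have hge : t₁ + δ ≤ t₁ := by
    rw [ht₁def]
    apply le_csInf hTne
    intro t ht
    by_contra hlt
    push_neg at hlt
    rcases lt_or_ge t t₁ with h | h
    · exact ht.2 (hgood t ht.1 h)
    · exact ht.2 (hpers t h hlt)
  linarith
end

section
/- Let 0 < c₋ ≤ c₊ and 0 < ν < 2√c₋. Define γ₊ := πν/√(4c₊ − ν²), γ₋ := πν/√(4c₋ − ν²), s₊ := (1 + e^{γ₊})/c₊, and s** := 1/c₋ − (s₊ − 1/c₋)·e^{γ₋}. Then: (i) s** ≤ 0 if and only if e^{γ₋}·(s₊·c₋ − 1) ≥ 1; and (ii) if γ₊ ≥ 2·(c₊/c₋ − 1), then s** ≤ 0. -/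
open Real

/-- Closing-condition computation used in the proof of Theorem 1.9: with
`γ± = πν/√(4c± − ν²)`, `s₊ = (1 + e^{γ₊})/c₊` and
`s** = 1/c₋ − (s₊ − 1/c₋)e^{γ₋}`, one has (i) `s** ≤ 0 ↔ e^{γ₋}(s₊c₋ − 1) ≥ 1`,
and (ii) `γ₊ ≥ 2(c₊/c₋ − 1) → s** ≤ 0`. -/
theorem stmt_18 (cm cp ν : ℝ) (hcm : 0 < cm) (hcmp : cm ≤ cp)
    (hν1 : 0 < ν) (hν2 : ν < 2 * Real.sqrt cm) :
    let γp : ℝ := Real.pi * ν / Real.sqrt (4 * cp - ν ^ 2)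
    let γm : ℝ := Real.pi * ν / Real.sqrt (4 * cm - ν ^ 2)
    let sp : ℝ := (1 + Real.exp γp) / cp
    let sss : ℝ := 1 / cm - (sp - 1 / cm) * Real.exp γm
    (sss ≤ 0 ↔ 1 ≤ Real.exp γm * (sp * cm - 1)) ∧
    (2 * (cp / cm - 1) ≤ γp → sss ≤ 0) := by
  intro γp γm sp sss
  have hcp : (0:ℝ) < cp := lt_of_lt_of_le hcm hcmp
  have hiff : sss ≤ 0 ↔ 1 ≤ Real.exp γm * (sp * cm - 1) := by
    rw [show sss = 1 / cm - (sp - 1 / cm) * Real.exp γm from rfl]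
    rw [sub_nonpos]
    constructor
    · intro h
      have := mul_le_mul_of_nonneg_right h hcm.le
      have h1 : 1 / cm * cm = 1 := by field_simp
      calc 1 = 1 / cm * cm := h1.symm
        _ ≤ (sp - 1 / cm) * Real.exp γm * cm := this
        _ = Real.exp γm * (sp * cm - 1) := by field_simp
    · intro h
      have := mul_le_mul_of_nonneg_right h (le_of_lt (one_div_pos.mpr hcm))
      calc 1 / cm = 1 * (1/cm) := (one_mul _).symm
        _ ≤ Real.exp γm * (sp * cm - 1) * (1/cm) := this
        _ = (sp - 1 / cm) * Real.exp γm := by field_simp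
  refine ⟨hiff, fun hγ => hiff.mpr ?_⟩
  -- γm ≥ 0
  have hγm : 0 ≤ γm := by
    apply div_nonneg (mul_nonneg Real.pi_pos.le hν1.le) (Real.sqrt_nonneg _)
  have hem : 1 ≤ Real.exp γm := Real.one_le_exp hγm
  -- e^{γp} ≥ 1 + γp ≥ 2cp/cm - 1
  have h1 : 1 + γp ≤ Real.exp γp := by linarith [Real.add_one_le_exp γp]
  have h2 : 2 * cp / cm - 1 ≤ Real.exp γp := by
    have : 2 * cp / cm - 1 ≤ 1 + γp := by
      have : 2 * (cp / cm - 1) ≤ γp := hγ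
      have h3 : 2 * cp / cm - 1 = 1 + 2 * (cp / cm - 1) := by field_simp; ring
      linarith
    linarith [Real.add_one_le_exp γp]
  have hsp : 2 ≤ sp * cm := by
    rw [show sp = (1 + Real.exp γp) / cp from rfl]
    rw [div_mul_eq_mul_div, le_div_iff₀ hcp]
    have : 2 * cp ≤ (2 * cp / cm) * cm := by
      rw [div_mul_cancel₀]; exact hcm.ne'
    nlinarith
  nlinarith
end
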